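/- arXiv:1903.03393 — 10 statements merged into one kernel-verified Lean document; each statement's English description precedes it below -/
import Mathlib

section
/- Let H be a real Hilbert space, let A be a maximally monotone set-valued operator on H with resolvent J_A (so that for every w ∈ H, w − J_A(w) ∈ A(J_A(w))), let (y_k)_{k ≥ −1} be an arbitrary sequence in H, let x_0 ∈ H, and define (x_k) by x_{k+1} = J_A(x_k − y_k) − (y_k − y_{k−1}) for all k ≥ 0. Then for every x ∈ H and every y with −y ∈ A(x), and every k ≥ 0: ‖(x_{k+1} + y_k) − (x + y)‖² ≤ ‖(x_k + y_{k−1}) − (x + y)‖² − 2⟪y_k − y, x_k − x⟫ + 4⟪y_k − y_{k−1}, x_k − x_{k+1}⟫ − ‖x_{k+1} − x_k‖² − 3‖y_k − y_{k−1}‖². -/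
open scoped RealInnerProductSpace
open Filter

/-- A set-valued operator `A ⊆ H × H` is monotone if
`⟪u − v, x − y⟫ ≥ 0` for all `(x,u), (y,v) ∈ A`. -/
def IsMonotoneOp {H : Type*} [NormedAddCommGroup H] [InnerProductSpace ℝ H]
    (A : Set (H × H)) : Prop :=
  ∀ p ∈ A, ∀ q ∈ A, (0 : ℝ) ≤ ⟪p.2 - q.2, p.1 - q.1⟫

/-- A set-valued operator is maximally monotone if it is monotone and every
monotonically related pair belongs to it. -/
def IsMaximalMonotoneOp {H : Type*} [NormedAddCommGroup H] [InnerProductSpace ℝ H]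
    (A : Set (H × H)) : Prop :=
  IsMonotoneOp A ∧
    ∀ p : H × H, (∀ q ∈ A, (0 : ℝ) ≤ ⟪p.2 - q.2, p.1 - q.1⟫) → p ∈ A

/- With `z = J_A(x_k − y_k) = x_{k+1} + (y_k − y_{k−1})`, the estimate is an exact identity up to
twice the monotonicity term `⟪(x_k − y_k − z) + y, z − x⟫ ≥ 0` between `(z, x_k − y_k − z)` and
`(x, −y)`. -/

theorem norm_sub_sq_add_two_mul_inner_eq {H : Type*} [NormedAddCommGroup H]
    [InnerProductSpace ℝ H] (a b u v p q : H) :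
    ‖(b + u) - (p + q)‖ ^ 2 + 2 * ⟪(a - u) - (b + (u - v)) - -q, (b + (u - v)) - p⟫ =
      ‖(a + v) - (p + q)‖ ^ 2 - 2 * ⟪u - q, a - p⟫ + 4 * ⟪u - v, a - b⟫
        - ‖b - a‖ ^ 2 - 3 * ‖u - v‖ ^ 2 := by
  simp only [norm_sub_sq_real, norm_add_sq_real, inner_sub_left, inner_sub_right,
    inner_add_left, inner_add_right, inner_neg_left, real_inner_self_eq_norm_sq]
  linarith [real_inner_comm a b, real_inner_comm a u, real_inner_comm a v,
    real_inner_comm a p, real_inner_comm a q, real_inner_comm b u, real_inner_comm b v,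
    real_inner_comm b p, real_inner_comm b q, real_inner_comm u v, real_inner_comm u p,
    real_inner_comm u q, real_inner_comm v p, real_inner_comm v q, real_inner_comm p q]

theorem statement0_general
    {H : Type*} [NormedAddCommGroup H] [InnerProductSpace ℝ H]
    (A : Set (H × H)) (hA : IsMaximalMonotoneOp A)
    (JA : H → H) (hJ : ∀ w : H, (JA w, w - JA w) ∈ A)
    (x y : ℤ → H)
    (hrec : ∀ k : ℤ, 0 ≤ k → x (k + 1) = JA (x k - y k) - (y k - y (k - 1)))
    (p q : H) (hpq : (p, -q) ∈ A)
    (k : ℤ) (hk : 0 ≤ k) :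
    ‖(x (k + 1) + y k) - (p + q)‖ ^ 2 ≤
      ‖(x k + y (k - 1)) - (p + q)‖ ^ 2
        - 2 * ⟪y k - q, x k - p⟫
        + 4 * ⟪y k - y (k - 1), x k - x (k + 1)⟫
        - ‖x (k + 1) - x k‖ ^ 2
        - 3 * ‖y k - y (k - 1)‖ ^ 2 := by
  have hJx : JA (x k - y k) = x (k + 1) + (y k - y (k - 1)) := by
    rw [hrec k hk]; abel
  have hmono := hA.1 _ (hJ (x k - y k)) _ hpq
  simp only [hJx] at hmono
  linarith [norm_sub_sq_add_two_mul_inner_eq (x k) (x (k + 1)) (y k) (y (k - 1)) p q]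

/-- Lemma 3.1 (Lemma `lemma:abs`) of the paper: the abstract one-step estimate for
the recursion `x_{k+1} = J_A(x_k − y_k) − (y_k − y_{k−1})`. -/
theorem statement0
    {H : Type*} [NormedAddCommGroup H] [InnerProductSpace ℝ H] [CompleteSpace H]
    (A : Set (H × H)) (hA : IsMaximalMonotoneOp A)
    (JA : H → H) (hJ : ∀ w : H, (JA w, w - JA w) ∈ A)
    (x y : ℤ → H)
    (hrec : ∀ k : ℤ, 0 ≤ k → x (k + 1) = JA (x k - y k) - (y k - y (k - 1)))
    (p q : H) (hpq : (p, -q) ∈ A)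
    (k : ℤ) (hk : 0 ≤ k) :
    ‖(x (k + 1) + y k) - (p + q)‖ ^ 2 ≤
      ‖(x k + y (k - 1)) - (p + q)‖ ^ 2
        - 2 * ⟪y k - q, x k - p⟫
        + 4 * ⟪y k - y (k - 1), x k - x (k + 1)⟫
        - ‖x (k + 1) - x k‖ ^ 2
        - 3 * ‖y k - y (k - 1)‖ ^ 2 :=
  statement0_general A hA JA hJ x y hrec p q hpq k hk
end

section
/- Let H be a real Hilbert space, let A be a maximally monotone set-valued operator on H, and let B : H → H be a monotone and L-Lipschitz continuous (single-valued) map with L > 0, such that there exists a zero of A + B, i.e. some x* with −B(x*) ∈ A(x*). Let ε > 0, let λ ∈ [ε, (1 − 3ε)/(3L)], let J denote the resolvent of λA (so w − J(w) ∈ λA(J(w)) for all w), let x_0, x_{−1} ∈ H, and define the shadow Douglas–Rachford iteration x_{k+1} = J(x_k − λB(x_k)) − λ(B(x_k) − B(x_{k−1})) for k ≥ 0. Then there exists x̄ ∈ H with −B(x̄) ∈ A(x̄) such that (x_k) converges weakly to x̄ and (B(x_k)) converges weakly to B(x̄). -/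
open scoped RealInnerProductSpace
open Filter

set_option maxHeartbeats 1000000

/-- The scaled operator `cA = {(x, c•u) : (x,u) ∈ A}`. -/
def smulOp {H : Type*} [NormedAddCommGroup H] [InnerProductSpace ℝ H]
    (c : ℝ) (A : Set (H × H)) : Set (H × H) :=
  (fun p : H × H => (p.1, c • p.2)) '' A


section Aux2
variable {H : Type*} [NormedAddCommGroup H] [InnerProductSpace ℝ H]

lemma aux_toNat_tendsto : Tendsto Int.toNat atTop atTop :=
  tendsto_atTop_atTop.2 fun b => ⟨(b : ℤ), fun k hk => by omega⟩

lemma aux_int_of_nat {α : Type*} {f : ℤ → α} {l : Filter α}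
    (h : Tendsto (fun n : ℕ => f (n : ℤ)) atTop l) : Tendsto f atTop l := by
  have h2 := h.comp aux_toNat_tendsto
  refine h2.congr' ?_
  filter_upwards [eventually_ge_atTop (0 : ℤ)] with k hk
  simp [Function.comp, Int.toNat_of_nonneg hk]

lemma aux_ulim {U : Ultrafilter ℤ} (hU : (U : Filter ℤ) ≤ atTop) {f : ℤ → ℝ} {C : ℝ}
    (h : ∀ᶠ k in (atTop : Filter ℤ), |f k| ≤ C) :
    ∃ c, |c| ≤ C ∧ Tendsto f (U : Filter ℤ) (nhds c) := by
  have hmem : (Ultrafilter.map f U : Filter ℝ) ≤ 𝓟 (Set.Icc (-C) C) := by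
    rw [Ultrafilter.coe_map, Filter.le_principal_iff]
    exact (hU (h.mono fun k hk => abs_le.mp hk))
  obtain ⟨c, hc, hle⟩ := (isCompact_Icc (a := -C) (b := C)).ultrafilter_le_nhds
    (Ultrafilter.map f U) hmem
  exact ⟨c, abs_le.2 ⟨hc.1, hc.2⟩, hle⟩

lemma key_identity (P Q R Ew : H) (l : ℝ) :
    ‖P + l • Q‖ ^ 2 - ‖P + R + l • Q + l • Ew‖ ^ 2 - ‖R‖ ^ 2 - 4 * l * ⟪Ew, R⟫
      - 3 * l ^ 2 * ‖Ew‖ ^ 2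
    = 2 * ⟪-R - l • Q - (2 * l) • Ew, P + R + l • Ew⟫ + 2 * l * ⟪Q + Ew, P⟫ := by
  simp only [← real_inner_self_eq_norm_sq, inner_add_left, inner_add_right,
    inner_sub_left, inner_sub_right, inner_neg_left, inner_neg_right,
    real_inner_smul_left, real_inner_smul_right,
    real_inner_comm Q P, real_inner_comm R P, real_inner_comm Ew P,
    real_inner_comm R Q, real_inner_comm Ew Q, real_inner_comm Ew R]
  ring

lemma lya_step {A : Set (H × H)} (hA1 : IsMonotoneOp A)
    {B : H → H} (hBmono : ∀ u v : H, (0 : ℝ) ≤ ⟪B u - B v, u - v⟫)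
    {lam : ℝ} (hlam : 0 < lam)
    {J : H → H} (hJA : ∀ w : H, (J w, lam⁻¹ • (w - J w)) ∈ A)
    {xs : H} (hxs : (xs, -B xs) ∈ A)
    (xkm xk xk1 : H) (hrec : xk1 = J (xk - lam • B xk) - lam • (B xk - B xkm)) :
    ‖xk1 - xs + lam • (B xk - B xs)‖ ^ 2 ≤ ‖xk - xs + lam • (B xkm - B xs)‖ ^ 2
      - ‖xk1 - xk‖ ^ 2 - 4 * lam * ⟪B xk - B xkm, xk1 - xk⟫
      - 3 * lam ^ 2 * ‖B xk - B xkm‖ ^ 2 := by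
  set w := xk - lam • B xk with hw
  have hu1 : J w = xk1 + lam • (B xk - B xkm) := by rw [hrec]; abel
  have hpair := hA1 _ (hJA w) _ hxs
  simp only at hpair
  have hrw : lam⁻¹ • (w - J w) - (-B xs) = lam⁻¹ • (w - J w + lam • B xs) := by
    rw [smul_add, smul_smul, inv_mul_cancel₀ hlam.ne', one_smul, sub_neg_eq_add]
  rw [hrw, real_inner_smul_left] at hpair
  have hpair2 : (0:ℝ) ≤ ⟪w - J w + lam • B xs, J w - xs⟫ :=
    (mul_nonneg_iff_of_pos_left (inv_pos.2 hlam)).mp hpair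
  have I1 : (0:ℝ) ≤ ⟪-(xk1 - xk) - lam • (B xkm - B xs) - (2 * lam) • (B xk - B xkm),
      (xk - xs) + (xk1 - xk) + lam • (B xk - B xkm)⟫ := by
    convert hpair2 using 2
    · rw [hu1, hw]; module
    · rw [hu1]; module
  have I2 : (0:ℝ) ≤ ⟪(B xkm - B xs) + (B xk - B xkm), xk - xs⟫ := by
    convert hBmono xk xs using 2
    module
  have key := key_identity (xk - xs) (B xkm - B xs) (xk1 - xk) (B xk - B xkm) lam
  have hz : xk1 - xs + lam • (B xk - B xs)
      = xk - xs + (xk1 - xk) + lam • (B xkm - B xs) + lam • (B xk - B xkm) := by module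
  rw [hz]
  linarith [key, I1, mul_nonneg hlam.le I2]

end Aux2

/-- Theorem 3.2 (main convergence theorem for the shadow Douglas–Rachford method):
the iterates `x_{k+1} = J_{λA}(x_k − λB(x_k)) − λ(B(x_k) − B(x_{k−1}))` converge weakly
to a zero `xbar` of `A + B`, and `B(x_k)` converges weakly to `B(xbar)`. -/
theorem statement1
    {H : Type*} [NormedAddCommGroup H] [InnerProductSpace ℝ H] [CompleteSpace H]
    (A : Set (H × H)) (hA : IsMaximalMonotoneOp A)
    (B : H → H) (hBmono : ∀ u v : H, (0 : ℝ) ≤ ⟪B u - B v, u - v⟫)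
    (L : ℝ) (hL : 0 < L) (hBlip : ∀ u v : H, ‖B u - B v‖ ≤ L * ‖u - v‖)
    (hzer : ∃ xs : H, (xs, -B xs) ∈ A)
    (ε lam : ℝ) (hε : 0 < ε) (hlam1 : ε ≤ lam) (hlam2 : lam ≤ (1 - 3 * ε) / (3 * L))
    (J : H → H) (hJ : ∀ w : H, (J w, w - J w) ∈ smulOp lam A)
    (x : ℤ → H)
    (hrec : ∀ k : ℤ, 0 ≤ k →
      x (k + 1) = J (x k - lam • B (x k)) - lam • (B (x k) - B (x (k - 1)))) :
    ∃ xbar : H, (xbar, -B xbar) ∈ A ∧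
      (∀ w : H, Tendsto (fun k : ℤ => ⟪x k, w⟫) atTop (nhds ⟪xbar, w⟫)) ∧
      (∀ w : H, Tendsto (fun k : ℤ => ⟪B (x k), w⟫) atTop (nhds ⟪B xbar, w⟫)) := by
  have hA1 : IsMonotoneOp A := hA.1
  have hlam0 : 0 < lam := lt_of_lt_of_le hε hlam1
  have hJA : ∀ w : H, (J w, lam⁻¹ • (w - J w)) ∈ A := by
    intro w
    obtain ⟨p, hpA, hpe⟩ := hJ w
    obtain ⟨h1, h2⟩ := Prod.mk.injEq _ _ _ _ ▸ hpe
    have hp2 : p.2 = lam⁻¹ • (w - J w) := by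
      rw [← h2, smul_smul, inv_mul_cancel₀ (lt_of_lt_of_le hε hlam1).ne', one_smul]
    have hpe2 : p = (J w, lam⁻¹ • (w - J w)) := Prod.ext h1 hp2
    rwa [← hpe2]
  have hLlam : lam * (3 * L) ≤ 1 - 3 * ε := (le_div_iff₀ (by positivity)).mp hlam2
  have h3e : 0 < 1 - 3 * ε := lt_of_lt_of_le (by positivity) hLlam
  have hrho3 : lam * L ≤ 1 / 3 - ε := by nlinarith
  have hrho0 : 0 < lam * L := mul_pos hlam0 hL
  have hL1 : lam * L < 1 := by linarith
  have hdelta : ε ≤ 1 / 3 - 3 * (lam * L) ^ 2 := by nlinarith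
  obtain ⟨xs, hxs⟩ := hzer
  -- one-step Lyapunov descent, for an arbitrary solution p
  have hGstep : ∀ p : H, (p, -B p) ∈ A → ∀ k : ℤ, 0 ≤ k →
      ‖x (k+1) - p + lam • (B (x k) - B p)‖ ^ 2 + 3 * (lam*L)^2 * ‖x (k+1) - x k‖ ^ 2
        ≤ (‖x k - p + lam • (B (x (k-1)) - B p)‖ ^ 2 + 3 * (lam*L)^2 * ‖x k - x (k-1)‖ ^ 2)
          - ε * ‖x (k+1) - x k‖ ^ 2 := by
    intro p hp k hk
    have h1 := lya_step hA1 hBmono hlam0 hJA hp (x (k-1)) (x k) (x (k+1)) (hrec k hk)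
    have habs : -⟪B (x k) - B (x (k-1)), x (k+1) - x k⟫
        ≤ ‖B (x k) - B (x (k-1))‖ * ‖x (k+1) - x k‖ :=
      neg_le.mp ((abs_le.mp (abs_real_inner_le_norm _ _)).1)
    have hEb : lam * ‖B (x k) - B (x (k-1))‖ ≤ lam * L * ‖x k - x (k-1)‖ := by
      rw [mul_assoc]; exact mul_le_mul_of_nonneg_left (hBlip _ _) hlam0.le
    have hE2 : (lam * ‖B (x k) - B (x (k-1))‖)^2 ≤ (lam * L)^2 * ‖x k - x (k-1)‖^2 := by
      nlinarith [mul_nonneg hlam0.le (norm_nonneg (B (x k) - B (x (k-1))))]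
    have h4 : 4 * (lam * ‖B (x k) - B (x (k-1))‖) * ‖x (k+1) - x k‖
        ≤ 6 * (lam * ‖B (x k) - B (x (k-1))‖)^2 + (2/3) * ‖x (k+1) - x k‖^2 := by
      nlinarith [sq_nonneg (3 * (lam * ‖B (x k) - B (x (k-1))‖) - ‖x (k+1) - x k‖)]
    have h5 : -(4 * lam * ⟪B (x k) - B (x (k-1)), x (k+1) - x k⟫)
        ≤ 4 * (lam * ‖B (x k) - B (x (k-1))‖) * ‖x (k+1) - x k‖ := by
      have := mul_le_mul_of_nonneg_left habs (by positivity : (0:ℝ) ≤ 4 * lam)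
      nlinarith [this]
    have h6 : ε * ‖x (k+1) - x k‖^2 + 3*(lam*L)^2 * ‖x (k+1) - x k‖^2
        ≤ (1/3) * ‖x (k+1) - x k‖^2 := by
      nlinarith [hdelta, sq_nonneg ‖x (k+1) - x k‖]
    linarith [h1, h4, h5, h6, hE2]
  -- Fejér analysis for the fixed solution xs
  set g : ℕ → ℝ := fun n => ‖x (n:ℤ) - xs + lam • (B (x ((n:ℤ)-1)) - B xs)‖^2
    + 3*(lam*L)^2*‖x (n:ℤ) - x ((n:ℤ)-1)‖^2 with hg
  have hgstep : ∀ n : ℕ, g (n+1) ≤ g n - ε * ‖x ((n:ℤ)+1) - x (n:ℤ)‖^2 := by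
    intro n
    have h := hGstep xs hxs (n:ℤ) (Int.natCast_nonneg n)
    have e1 : ((n+1:ℕ):ℤ) = (n:ℤ)+1 := by push_cast; ring
    simp only [hg, e1, add_sub_cancel_right]
    linarith [h]
  have hg0 : ∀ n, 0 ≤ g n := fun n => by simp only [hg]; positivity
  have hganti : Antitone g := antitone_nat_of_succ_le fun n => by
    have := hgstep n
    nlinarith [mul_nonneg hε.le (sq_nonneg ‖x ((n:ℤ)+1) - x (n:ℤ)‖)]
  obtain ⟨gl, hgl⟩ : ∃ c, Tendsto g atTop (nhds c) :=
    ⟨_, tendsto_atTop_ciInf hganti ⟨0, by rintro y ⟨n, rfl⟩; exact hg0 n⟩⟩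
  have hgdiff : Tendsto (fun n => g n - g (n+1)) atTop (nhds 0) := by
    have := hgl.sub (hgl.comp (tendsto_add_atTop_nat 1))
    simpa using this
  have hRsq : Tendsto (fun n : ℕ => ‖x ((n:ℤ)+1) - x (n:ℤ)‖^2) atTop (nhds 0) := by
    refine squeeze_zero (fun n => sq_nonneg _) (fun n => ?_)
      (by simpa using hgdiff.const_mul ε⁻¹)
    rw [le_inv_mul_iff₀ hε]
    linarith [hgstep n]
  have hRn : Tendsto (fun n : ℕ => ‖x ((n:ℤ)+1) - x (n:ℤ)‖) atTop (nhds 0) := by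
    have hcont := (Real.continuous_sqrt.tendsto' 0 0 Real.sqrt_zero).comp hRsq
    exact hcont.congr fun n => Real.sqrt_sq (norm_nonneg _)
  have hRZ : Tendsto (fun k : ℤ => ‖x (k+1) - x k‖) atTop (nhds 0) := aux_int_of_nat hRn
  have hshift : Tendsto (fun k : ℤ => k - 1) atTop atTop :=
    tendsto_atTop_atTop.2 fun b => ⟨b+1, fun a ha => by omega⟩
  have hRZm : Tendsto (fun k : ℤ => ‖x k - x (k-1)‖) atTop (nhds 0) := by
    have := hRZ.comp hshift
    refine this.congr fun k => ?_
    simp [Function.comp]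
  have hEZ : Tendsto (fun k : ℤ => ‖B (x k) - B (x (k-1))‖) atTop (nhds 0) :=
    squeeze_zero (fun k => norm_nonneg _) (fun k => hBlip _ _)
      (by simpa using hRZm.const_mul L)
  -- boundedness
  have hzbd : ∀ n : ℕ, ‖x (n:ℤ) - xs + lam • (B (x ((n:ℤ)-1)) - B xs)‖ ≤ Real.sqrt (g 0) := by
    intro n
    have h2 := hganti (Nat.zero_le n)
    have h1 : ‖x (n:ℤ) - xs + lam • (B (x ((n:ℤ)-1)) - B xs)‖^2 ≤ g 0 := by
      have h3 : (0:ℝ) ≤ 3*(lam*L)^2*‖x (n:ℤ) - x ((n:ℤ)-1)‖^2 := by positivity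
      simp only [hg] at h2 ⊢
      linarith
    have := Real.sqrt_le_sqrt h1
    rwa [Real.sqrt_sq (norm_nonneg _)] at this
  set M : ℝ := max ‖x (-1) - xs‖ ((3/2) * Real.sqrt (g 0)) with hM
  have hM0 : 0 ≤ M := le_trans (norm_nonneg _) (le_max_left _ _)
  have hrho13 : lam * L ≤ 1/3 := by linarith
  have hxbN : ∀ n : ℕ, ‖x ((n:ℤ)-1) - xs‖ ≤ M := by
    intro n
    induction n with
    | zero =>
      have hb := le_max_left ‖x (-1) - xs‖ ((3/2) * Real.sqrt (g 0))
      rw [← hM] at hb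
      simpa using hb
    | succ m ih =>
      have e1 : ((m+1:ℕ):ℤ) - 1 = (m:ℤ) := by push_cast; ring
      rw [e1]
      have hs : ‖x (m:ℤ) - xs‖
          ≤ ‖x (m:ℤ) - xs + lam • (B (x ((m:ℤ)-1)) - B xs)‖
            + lam * ‖B (x ((m:ℤ)-1)) - B xs‖ := by
        calc ‖x (m:ℤ) - xs‖
            = ‖(x (m:ℤ) - xs + lam • (B (x ((m:ℤ)-1)) - B xs))
              - lam • (B (x ((m:ℤ)-1)) - B xs)‖ := by congr 1; abel
          _ ≤ ‖x (m:ℤ) - xs + lam • (B (x ((m:ℤ)-1)) - B xs)‖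
              + ‖lam • (B (x ((m:ℤ)-1)) - B xs)‖ := norm_sub_le _ _
          _ = ‖x (m:ℤ) - xs + lam • (B (x ((m:ℤ)-1)) - B xs)‖
              + lam * ‖B (x ((m:ℤ)-1)) - B xs‖ := by
                rw [norm_smul, Real.norm_eq_abs, abs_of_pos hlam0]
      have h2 : ‖B (x ((m:ℤ)-1)) - B xs‖ ≤ L * M :=
        le_trans (hBlip _ _) (mul_le_mul_of_nonneg_left ih hL.le)
      have h3 : Real.sqrt (g 0) ≤ (2/3) * M := by
        have := le_max_right ‖x (-1) - xs‖ ((3/2) * Real.sqrt (g 0))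
        rw [← hM] at this
        linarith
      have h4 : lam * ‖B (x ((m:ℤ)-1)) - B xs‖ ≤ (1/3) * M := by
        have := mul_le_mul_of_nonneg_left h2 hlam0.le
        have h5 : lam * (L * M) ≤ (1/3) * M := by nlinarith
        linarith
      linarith [hzbd m, hs]
  have hxbd : ∀ k : ℤ, -1 ≤ k → ‖x k - xs‖ ≤ M := by
    intro k hk
    have h := hxbN (k+1).toNat
    rwa [show ((((k+1).toNat):ℤ) - 1) = k by omega] at h
  have hxnorm : ∀ k : ℤ, -1 ≤ k → ‖x k‖ ≤ M + ‖xs‖ := by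
    intro k hk
    calc ‖x k‖ = ‖(x k - xs) + xs‖ := by congr 1; abel
      _ ≤ ‖x k - xs‖ + ‖xs‖ := norm_add_le _ _
      _ ≤ M + ‖xs‖ := by linarith [hxbd k hk]
  have hBnorm : ∀ k : ℤ, -1 ≤ k → ‖B (x k)‖ ≤ L * M + ‖B xs‖ := by
    intro k hk
    calc ‖B (x k)‖ = ‖(B (x k) - B xs) + B xs‖ := by congr 1; abel
      _ ≤ ‖B (x k) - B xs‖ + ‖B xs‖ := norm_add_le _ _
      _ ≤ L * M + ‖B xs‖ := by
          have := le_trans (hBlip (x k) xs) (mul_le_mul_of_nonneg_left (hxbd k hk) hL.le)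
          linarith
  have hXU : Tendsto (fun k : ℤ => ‖x k - J (x k - lam • B (x k))‖) atTop (nhds 0) := by
    refine squeeze_zero' (g := fun k => ‖x (k+1) - x k‖ + lam * ‖B (x k) - B (x (k-1))‖)
      (Eventually.of_forall fun k => norm_nonneg _) ?_ ?_
    · filter_upwards [eventually_ge_atTop (0:ℤ)] with k hk
      have h := hrec k hk
      have hv : x k - J (x k - lam • B (x k))
          = (x k - x (k+1)) - lam • (B (x k) - B (x (k-1))) := by rw [h]; abel
      calc ‖x k - J (x k - lam • B (x k))‖
          = ‖(x k - x (k+1)) - lam • (B (x k) - B (x (k-1)))‖ := by rw [hv]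
        _ ≤ ‖x k - x (k+1)‖ + ‖lam • (B (x k) - B (x (k-1)))‖ := norm_sub_le _ _
        _ = ‖x (k+1) - x k‖ + lam * ‖B (x k) - B (x (k-1))‖ := by
            rw [norm_sub_rev, norm_smul, Real.norm_eq_abs, abs_of_pos hlam0]
    · simpa using hRZ.add (hEZ.const_mul lam)
  -- z-norm limits for arbitrary solutions
  have hlimz : ∀ p : H, (p, -B p) ∈ A →
      ∃ c : ℝ, Tendsto (fun k : ℤ => ‖x k - p + lam • (B (x (k-1)) - B p)‖^2) atTop (nhds c) := by
    intro p hp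
    set gp : ℕ → ℝ := fun n => ‖x (n:ℤ) - p + lam • (B (x ((n:ℤ)-1)) - B p)‖^2
      + 3*(lam*L)^2*‖x (n:ℤ) - x ((n:ℤ)-1)‖^2 with hgp
    have hstep : ∀ n : ℕ, gp (n+1) ≤ gp n := by
      intro n
      have h := hGstep p hp (n:ℤ) (Int.natCast_nonneg n)
      have e1 : ((n+1:ℕ):ℤ) = (n:ℤ)+1 := by push_cast; ring
      simp only [hgp, e1, add_sub_cancel_right]
      nlinarith [mul_nonneg hε.le (sq_nonneg ‖x ((n:ℤ)+1) - x (n:ℤ)‖)]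
    have hgp0 : ∀ n, 0 ≤ gp n := fun n => by simp only [hgp]; positivity
    obtain ⟨c, hc⟩ : ∃ c, Tendsto gp atTop (nhds c) :=
      ⟨_, tendsto_atTop_ciInf (antitone_nat_of_succ_le hstep)
        ⟨0, by rintro y ⟨n, rfl⟩; exact hgp0 n⟩⟩
    refine ⟨c, aux_int_of_nat ?_⟩
    have h1 : Tendsto (fun n : ℕ => ‖x (n:ℤ) - x ((n:ℤ)-1)‖) atTop (nhds 0) := by
      have := hRZm.comp (tendsto_natCast_atTop_atTop (R := ℤ))
      exact this
    have hterm : Tendsto (fun n : ℕ => 3*(lam*L)^2*‖x (n:ℤ) - x ((n:ℤ)-1)‖^2) atTop (nhds 0) := by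
      have h2 : Tendsto (fun n : ℕ => ‖x (n:ℤ) - x ((n:ℤ)-1)‖^2) atTop (nhds 0) := by
        simpa using h1.pow 2
      simpa using h2.const_mul (3*(lam*L)^2)
    have h3 := hc.sub hterm
    rw [sub_zero] at h3
    refine h3.congr fun n => ?_
    simp only [hgp]; ring
  -- generic: inner product of a vanishing and a bounded sequence tends to zero
  have hsmall : ∀ (C : ℝ) (f h : ℤ → H), (∀ᶠ k in (atTop : Filter ℤ), ‖f k‖ ≤ C) →
      Tendsto (fun k => ‖h k‖) atTop (nhds 0) →
      Tendsto (fun k : ℤ => ⟪h k, f k⟫) atTop (nhds 0) := by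
    intro C f h hf hh
    refine squeeze_zero_norm' ?_ (by simpa using hh.mul_const C)
    filter_upwards [hf] with k hk
    calc ‖⟪h k, f k⟫‖ ≤ ‖h k‖ * ‖f k‖ := by
          rw [Real.norm_eq_abs]; exact abs_real_inner_le_norm _ _
      _ ≤ ‖h k‖ * C := mul_le_mul_of_nonneg_left hk (norm_nonneg _)
  have hJbd : ∀ᶠ k in (atTop : Filter ℤ), ‖J (x k - lam • B (x k))‖ ≤ M + ‖xs‖ + 1 := by
    filter_upwards [hXU.eventually_lt_const (by norm_num : (0:ℝ) < 1),
      eventually_ge_atTop (-1:ℤ)] with k h1 h2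
    calc ‖J (x k - lam • B (x k))‖ = ‖x k - (x k - J (x k - lam • B (x k)))‖ := by congr 1; abel
      _ ≤ ‖x k‖ + ‖x k - J (x k - lam • B (x k))‖ := norm_sub_le _ _
      _ ≤ M + ‖xs‖ + 1 := by
          have := hxnorm k h2
          linarith
  -- main ultrafilter construction
  have main : ∀ U : Ultrafilter ℤ, (U : Filter ℤ) ≤ atTop →
      ∃ xb : H, (xb, -B xb) ∈ A ∧
        (∀ w : H, Tendsto (fun k : ℤ => ⟪x k, w⟫) (U : Filter ℤ) (nhds ⟪xb, w⟫)) ∧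
        (∀ w : H, Tendsto (fun k : ℤ => ⟪B (x k), w⟫) (U : Filter ℤ) (nhds ⟪B xb, w⟫)) := by
    intro U hU
    have hxev : ∀ w : H, ∀ᶠ k in (atTop : Filter ℤ), |⟪x k, w⟫| ≤ (M + ‖xs‖) * ‖w‖ := by
      intro w
      filter_upwards [eventually_ge_atTop (-1:ℤ)] with k hk
      exact le_trans (abs_real_inner_le_norm _ _)
        (mul_le_mul_of_nonneg_right (hxnorm k hk) (norm_nonneg w))
    choose φ hφb hφt using fun w => aux_ulim hU (hxev w)
    have hadd : ∀ w w' : H, φ (w + w') = φ w + φ w' := fun w w' =>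
      tendsto_nhds_unique (hφt (w + w'))
        (by simpa [inner_add_right] using (hφt w).add (hφt w'))
    have hsmulφ : ∀ (c : ℝ) (w : H), φ (c • w) = c * φ w := fun c w =>
      tendsto_nhds_unique (hφt (c • w))
        (by simpa [inner_smul_right] using (hφt w).const_mul c)
    let ℓ : H →L[ℝ] ℝ := LinearMap.mkContinuous
      { toFun := φ, map_add' := hadd, map_smul' := hsmulφ } (M + ‖xs‖)
      (fun w => by simpa [Real.norm_eq_abs] using hφb w)
    set xb := (InnerProductSpace.toDual ℝ H).symm ℓ with hxbdef
    have hxb : ∀ w : H, ⟪xb, w⟫ = φ w := fun w => by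
      rw [hxbdef]; exact InnerProductSpace.toDual_symm_apply
    have hUx : ∀ w : H, Tendsto (fun k : ℤ => ⟪x k, w⟫) (U : Filter ℤ) (nhds ⟪xb, w⟫) :=
      fun w => (hxb w) ▸ hφt w
    have hbev : ∀ w : H, ∀ᶠ k in (atTop : Filter ℤ), |⟪B (x k), w⟫| ≤ (L*M + ‖B xs‖) * ‖w‖ := by
      intro w
      filter_upwards [eventually_ge_atTop (-1:ℤ)] with k hk
      exact le_trans (abs_real_inner_le_norm _ _)
        (mul_le_mul_of_nonneg_right (hBnorm k hk) (norm_nonneg w))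
    choose ψ hψb hψt using fun w => aux_ulim hU (hbev w)
    have haddψ : ∀ w w' : H, ψ (w + w') = ψ w + ψ w' := fun w w' =>
      tendsto_nhds_unique (hψt (w + w'))
        (by simpa [inner_add_right] using (hψt w).add (hψt w'))
    have hsmulψ : ∀ (c : ℝ) (w : H), ψ (c • w) = c * ψ w := fun c w =>
      tendsto_nhds_unique (hψt (c • w))
        (by simpa [inner_smul_right] using (hψt w).const_mul c)
    let ℓb : H →L[ℝ] ℝ := LinearMap.mkContinuous
      { toFun := ψ, map_add' := haddψ, map_smul' := hsmulψ } (L*M + ‖B xs‖)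
      (fun w => by simpa [Real.norm_eq_abs] using hψb w)
    set vb := (InnerProductSpace.toDual ℝ H).symm ℓb with hvbdef
    have hvb : ∀ w : H, ⟪vb, w⟫ = ψ w := fun w => by
      rw [hvbdef]; exact InnerProductSpace.toDual_symm_apply
    have hUb : ∀ w : H, Tendsto (fun k : ℤ => ⟪B (x k), w⟫) (U : Filter ℤ) (nhds ⟪vb, w⟫) :=
      fun w => (hvb w) ▸ hψt w
    have hUx' : ∀ w : H, Tendsto (fun k : ℤ => ⟪w, x k⟫) (U : Filter ℤ) (nhds ⟪w, xb⟫) := by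
      intro w
      have h := hUx w
      rw [real_inner_comm w xb] at h
      exact h.congr fun k => real_inner_comm w (x k)
    have hUb' : ∀ w : H, Tendsto (fun k : ℤ => ⟪w, B (x k)⟫) (U : Filter ℤ) (nhds ⟪w, vb⟫) := by
      intro w
      have h := hUb w
      rw [real_inner_comm w vb] at h
      exact h.congr fun k => real_inner_comm w (B (x k))
    -- weak limit of the resolvent points along U
    have hUJ : ∀ w : H, Tendsto (fun k : ℤ => ⟪w, J (x k - lam • B (x k))⟫)
        (U : Filter ℤ) (nhds ⟪w, xb⟫) := by
      intro w
      have h0 : Tendsto (fun k : ℤ => ⟪w, x k - J (x k - lam • B (x k))⟫) atTop (nhds 0) := by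
        have := hsmall ‖w‖ (fun _ => w) (fun k => x k - J (x k - lam • B (x k)))
          (Eventually.of_forall fun k => le_refl _) hXU
        refine this.congr fun k => real_inner_comm _ _
      have h2 := (hUx' w).sub (h0.mono_left hU)
      rw [sub_zero] at h2
      refine h2.congr fun k => ?_
      rw [← inner_sub_right]
      congr 1
      abel
    -- every weak cluster point is "pseudo-solution" against every element of A
    have hF1 : ∀ y q : H, (y, q) ∈ A → (0:ℝ) ≤ ⟪-B y - q, xb - y⟫ := by
      intro y q hyq
      have hpos : ∀ k : ℤ, (0:ℝ) ≤
          lam⁻¹ * ⟪x k - J (x k - lam • B (x k)), J (x k - lam • B (x k)) - y⟫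
          + ⟪B (x k), x k - J (x k - lam • B (x k))⟫
          - ⟪q, J (x k - lam • B (x k)) - y⟫
          - ⟪B y, x k - y⟫ := by
        intro k
        have h1 := hA1 _ (hJA (x k - lam • B (x k))) _ hyq
        have h2 := hBmono (x k) y
        simp only at h1
        rw [inner_sub_left, real_inner_smul_left] at h1
        have e1 : ⟪(x k - lam • B (x k)) - J (x k - lam • B (x k)),
            J (x k - lam • B (x k)) - y⟫
            = ⟪x k - J (x k - lam • B (x k)), J (x k - lam • B (x k)) - y⟫
              - lam * ⟪B (x k), J (x k - lam • B (x k)) - y⟫ := by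
          rw [show (x k - lam • B (x k)) - J (x k - lam • B (x k))
              = (x k - J (x k - lam • B (x k))) - lam • B (x k) by abel,
            inner_sub_left, real_inner_smul_left]
        rw [e1, mul_sub] at h1
        have e2 : lam⁻¹ * (lam * ⟪B (x k), J (x k - lam • B (x k)) - y⟫)
            = ⟪B (x k), J (x k - lam • B (x k)) - y⟫ := by
          rw [← mul_assoc, inv_mul_cancel₀ hlam0.ne', one_mul]
        rw [e2] at h1
        rw [inner_sub_left] at h2
        have e3 : ⟪B (x k), x k - J (x k - lam • B (x k))⟫
            = ⟪B (x k), x k - y⟫ - ⟪B (x k), J (x k - lam • B (x k)) - y⟫ := by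
          rw [← inner_sub_right]; congr 1; abel
        rw [e3]
        linarith
      have hT1 : Tendsto (fun k : ℤ => lam⁻¹ *
          ⟪x k - J (x k - lam • B (x k)), J (x k - lam • B (x k)) - y⟫) atTop (nhds 0) := by
        have hb : ∀ᶠ k in (atTop : Filter ℤ), ‖J (x k - lam • B (x k)) - y‖
            ≤ M + ‖xs‖ + 1 + ‖y‖ := by
          filter_upwards [hJbd] with k hk
          calc ‖J (x k - lam • B (x k)) - y‖ ≤ ‖J (x k - lam • B (x k))‖ + ‖y‖ :=
                norm_sub_le _ _
            _ ≤ M + ‖xs‖ + 1 + ‖y‖ := by linarith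
        have := hsmall (M + ‖xs‖ + 1 + ‖y‖) _ _ hb hXU
        simpa using this.const_mul lam⁻¹
      have hT2 : Tendsto (fun k : ℤ => ⟪B (x k), x k - J (x k - lam • B (x k))⟫)
          atTop (nhds 0) := by
        have hb : ∀ᶠ k in (atTop : Filter ℤ), ‖B (x k)‖ ≤ L*M + ‖B xs‖ := by
          filter_upwards [eventually_ge_atTop (-1:ℤ)] with k hk
          exact hBnorm k hk
        have := hsmall (L*M + ‖B xs‖) (fun k => B (x k))
          (fun k => x k - J (x k - lam • B (x k))) hb hXU
        refine this.congr fun k => real_inner_comm _ _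
      have hT3 : Tendsto (fun k : ℤ => ⟪q, J (x k - lam • B (x k)) - y⟫)
          (U : Filter ℤ) (nhds ⟪q, xb - y⟫) := by
        have := (hUJ q).sub (tendsto_const_nhds (x := ⟪q, y⟫))
        rw [show (⟪q, xb⟫ - ⟪q, y⟫ : ℝ) = ⟪q, xb - y⟫ by rw [inner_sub_right]] at this
        refine this.congr fun k => (inner_sub_right _ _ _).symm
      have hT4 : Tendsto (fun k : ℤ => ⟪B y, x k - y⟫)
          (U : Filter ℤ) (nhds ⟪B y, xb - y⟫) := by
        have := (hUx' (B y)).sub (tendsto_const_nhds (x := ⟪B y, y⟫))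
        rw [show (⟪B y, xb⟫ - ⟪B y, y⟫ : ℝ) = ⟪B y, xb - y⟫ by rw [inner_sub_right]] at this
        refine this.congr fun k => (inner_sub_right _ _ _).symm
      have hlim := ((((hT1.mono_left hU).add (hT2.mono_left hU)).sub hT3).sub hT4)
      rw [show ((0:ℝ) + 0 - ⟪q, xb - y⟫ - ⟪B y, xb - y⟫)
          = -⟪q, xb - y⟫ - ⟪B y, xb - y⟫ by ring] at hlim
      have hge := ge_of_tendsto' hlim hpos
      have : ⟪-B y - q, xb - y⟫ = -⟪q, xb - y⟫ - ⟪B y, xb - y⟫ := by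
        rw [inner_sub_left, inner_neg_left]; ring
      linarith
    -- xb is a solution (resolvent argument)
    have hxbsol : (xb, -B xb) ∈ A := by
      have hy0 := hJA (xb - lam • B xb)
      have h := hF1 _ _ hy0
      set y0 := J (xb - lam • B xb) with hy0def
      have hcs : ⟪B xb - B y0, xb - y0⟫ ≤ L * ‖xb - y0‖^2 := by
        have h1 := real_inner_le_norm (B xb - B y0) (xb - y0)
        have h2 := hBlip xb y0
        nlinarith [norm_nonneg (xb - y0), norm_nonneg (B xb - B y0)]
      have hexp : ⟪-B y0 - lam⁻¹ • ((xb - lam • B xb) - y0), xb - y0⟫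
          = ⟪B xb - B y0, xb - y0⟫ - lam⁻¹ * ⟪xb - y0, xb - y0⟫ := by
        rw [show -B y0 - lam⁻¹ • ((xb - lam • B xb) - y0)
            = (B xb - B y0) - lam⁻¹ • (xb - y0) by
          rw [smul_sub, smul_sub, smul_smul, inv_mul_cancel₀ hlam0.ne', one_smul]; module,
          inner_sub_left, real_inner_smul_left]
      rw [hexp, real_inner_self_eq_norm_sq] at h
      have hs0 : ‖xb - y0‖^2 ≤ 0 := by
        have h6 : lam * (lam⁻¹ * ‖xb - y0‖^2) = ‖xb - y0‖^2 := by
          rw [← mul_assoc, mul_inv_cancel₀ hlam0.ne', one_mul]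
        nlinarith [mul_le_mul_of_nonneg_left (show lam⁻¹ * ‖xb - y0‖^2 ≤ L * ‖xb - y0‖^2
          by linarith) hlam0.le, sq_nonneg ‖xb - y0‖]
      have hxy : xb = y0 := by
        have : ‖xb - y0‖ = 0 := by nlinarith [norm_nonneg (xb - y0)]
        exact sub_eq_zero.mp (norm_eq_zero.mp this)
      have hfin := hJA (xb - lam • B xb)
      rw [← hy0def, ← hxy] at hfin
      have e : lam⁻¹ • ((xb - lam • B xb) - xb) = -B xb := by
        rw [show (xb - lam • B xb) - xb = -(lam • B xb) by abel, smul_neg, smul_smul,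
          inv_mul_cancel₀ hlam0.ne', one_smul]
      rwa [e] at hfin
    -- inner products ⟪B x_k - B xb, x_k - xb⟫ tend to zero along atTop
    have hg0lim : Tendsto (fun k : ℤ => ⟪B (x k) - B xb, x k - xb⟫) atTop (nhds 0) := by
      have hub : ∀ k : ℤ, ⟪B (x k) - B xb, x k - xb⟫
          ≤ lam⁻¹ * ⟪x k - J (x k - lam • B (x k)), J (x k - lam • B (x k)) - xb⟫
            + ⟪B (x k) - B xb, x k - J (x k - lam • B (x k))⟫ := by
        intro k
        have h1 := hA1 _ (hJA (x k - lam • B (x k))) _ hxbsol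
        simp only at h1
        rw [inner_sub_left, real_inner_smul_left] at h1
        have e1 : ⟪(x k - lam • B (x k)) - J (x k - lam • B (x k)),
            J (x k - lam • B (x k)) - xb⟫
            = ⟪x k - J (x k - lam • B (x k)), J (x k - lam • B (x k)) - xb⟫
              - lam * ⟪B (x k), J (x k - lam • B (x k)) - xb⟫ := by
          rw [show (x k - lam • B (x k)) - J (x k - lam • B (x k))
              = (x k - J (x k - lam • B (x k))) - lam • B (x k) by abel,
            inner_sub_left, real_inner_smul_left]
        rw [e1, mul_sub] at h1
        have e2 : lam⁻¹ * (lam * ⟪B (x k), J (x k - lam • B (x k)) - xb⟫)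
            = ⟪B (x k), J (x k - lam • B (x k)) - xb⟫ := by
          rw [← mul_assoc, inv_mul_cancel₀ hlam0.ne', one_mul]
        rw [e2] at h1
        -- h1 : 0 ≤ lam⁻¹ * ⟪x k - J wk, J wk - xb⟫ - ⟪B x k, J wk - xb⟫ - ⟪-B xb, J wk - xb⟫
        have e4 : ⟪B (x k) - B xb, x k - xb⟫
            = ⟪B (x k) - B xb, J (x k - lam • B (x k)) - xb⟫
              + ⟪B (x k) - B xb, x k - J (x k - lam • B (x k))⟫ := by
          rw [← inner_add_right]; congr 1; abel
        have e5 : ⟪B (x k) - B xb, J (x k - lam • B (x k)) - xb⟫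
            = ⟪B (x k), J (x k - lam • B (x k)) - xb⟫
              - ⟪B xb, J (x k - lam • B (x k)) - xb⟫ := inner_sub_left _ _ _
        have e6 : ⟪-B xb, J (x k - lam • B (x k)) - xb⟫
            = -⟪B xb, J (x k - lam • B (x k)) - xb⟫ := inner_neg_left _ _
        rw [e6] at h1
        rw [e4, e5]
        linarith
      have hlb : ∀ k : ℤ, (0:ℝ) ≤ ⟪B (x k) - B xb, x k - xb⟫ := fun k => hBmono (x k) xb
      have hub0 : Tendsto (fun k : ℤ =>
          lam⁻¹ * ⟪x k - J (x k - lam • B (x k)), J (x k - lam • B (x k)) - xb⟫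
            + ⟪B (x k) - B xb, x k - J (x k - lam • B (x k))⟫) atTop (nhds 0) := by
        have hb1 : ∀ᶠ k in (atTop : Filter ℤ), ‖J (x k - lam • B (x k)) - xb‖
            ≤ M + ‖xs‖ + 1 + ‖xb‖ := by
          filter_upwards [hJbd] with k hk
          calc ‖J (x k - lam • B (x k)) - xb‖ ≤ ‖J (x k - lam • B (x k))‖ + ‖xb‖ :=
                norm_sub_le _ _
            _ ≤ M + ‖xs‖ + 1 + ‖xb‖ := by linarith
        have h1 := hsmall (M + ‖xs‖ + 1 + ‖xb‖) _ _ hb1 hXU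
        have hb2 : ∀ᶠ k in (atTop : Filter ℤ), ‖B (x k) - B xb‖
            ≤ L*M + ‖B xs‖ + ‖B xb‖ := by
          filter_upwards [eventually_ge_atTop (-1:ℤ)] with k hk
          calc ‖B (x k) - B xb‖ ≤ ‖B (x k)‖ + ‖B xb‖ := norm_sub_le _ _
            _ ≤ L*M + ‖B xs‖ + ‖B xb‖ := by linarith [hBnorm k hk]
        have h2 := hsmall (L*M + ‖B xs‖ + ‖B xb‖) (fun k => B (x k) - B xb)
          (fun k => x k - J (x k - lam • B (x k))) hb2 hXU
        have h2' := h2.congr fun k => real_inner_comm _ _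
        simpa using (h1.const_mul lam⁻¹).add h2'
      exact tendsto_of_tendsto_of_tendsto_of_le_of_le tendsto_const_nhds hub0 hlb hub
    -- ⟪B x_k, x_k⟫ converges to ⟪vb, xb⟫ along U
    have hbx : Tendsto (fun k : ℤ => ⟪B (x k), x k⟫) (U : Filter ℤ) (nhds ⟪vb, xb⟫) := by
      have hid : ∀ k : ℤ, ⟪B (x k), x k⟫ = ⟪B (x k) - B xb, x k - xb⟫
          + ⟪B (x k), xb⟫ + ⟪B xb, x k⟫ - ⟪B xb, xb⟫ := by
        intro k
        simp only [inner_sub_left, inner_sub_right]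
        ring
      have hl := (((hg0lim.mono_left hU).add (hUb xb)).add (hUx' (B xb))).sub
        (tendsto_const_nhds (x := ⟪B xb, xb⟫))
      rw [show ((0:ℝ) + ⟪vb, xb⟫ + ⟪B xb, xb⟫ - ⟪B xb, xb⟫) = ⟪vb, xb⟫ by ring] at hl
      exact hl.congr fun k => (hid k).symm
    -- vb = B xb
    have hveq : vb = B xb := by
      have hz : ∀ z : H, (0:ℝ) ≤ ⟪vb - B z, xb - z⟫ := by
        intro z
        have hpos : ∀ k : ℤ, (0:ℝ) ≤ ⟪B (x k), x k⟫ - ⟪B (x k), z⟫ - ⟪B z, x k⟫ + ⟪B z, z⟫ := by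
          intro k
          have := hBmono (x k) z
          rw [inner_sub_left, inner_sub_right, inner_sub_right] at this
          linarith
        have hl := ((hbx.sub (hUb z)).sub (hUx' (B z))).add
          (tendsto_const_nhds (x := ⟪B z, z⟫))
        have hge := ge_of_tendsto' hl hpos
        have : ⟪vb - B z, xb - z⟫ = ⟪vb, xb⟫ - ⟪vb, z⟫ - ⟪B z, xb⟫ + ⟪B z, z⟫ := by
          rw [inner_sub_left, inner_sub_right, inner_sub_right]; ring
        linarith
      have hkey : ∀ t : ℝ, 0 < t → ‖vb - B xb‖^2 ≤ t * (L * ‖vb - B xb‖^2) := by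
        intro t ht
        have h1 := hz (xb + t • (vb - B xb))
        have e1 : xb - (xb + t • (vb - B xb)) = -(t • (vb - B xb)) := by abel
        rw [e1, inner_neg_right, real_inner_smul_right] at h1
        -- h1 : 0 ≤ -(t * ⟪vb - B (xb + t•(vb - B xb)), vb - B xb⟫)
        have h2 : ⟪vb - B (xb + t • (vb - B xb)), vb - B xb⟫ ≤ 0 := by nlinarith
        have e3 : ⟪vb - B xb, vb - B xb⟫
            = ⟪vb - B (xb + t • (vb - B xb)), vb - B xb⟫
              + ⟪B (xb + t • (vb - B xb)) - B xb, vb - B xb⟫ := by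
          rw [← inner_add_left]; congr 1; abel
        have h4 : ⟪B (xb + t • (vb - B xb)) - B xb, vb - B xb⟫
            ≤ (L * (t * ‖vb - B xb‖)) * ‖vb - B xb‖ := by
          have hcs := real_inner_le_norm (B (xb + t • (vb - B xb)) - B xb) (vb - B xb)
          have hlip := hBlip (xb + t • (vb - B xb)) xb
          have e5 : xb + t • (vb - B xb) - xb = t • (vb - B xb) := by abel
          rw [e5, norm_smul, Real.norm_eq_abs, abs_of_pos ht] at hlip
          nlinarith [norm_nonneg (vb - B xb)]
        have e6 := real_inner_self_eq_norm_sq (vb - B xb)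
        nlinarith [h2]
      by_contra hne
      have hpos2 : 0 < ‖vb - B xb‖^2 := by
        have h8 : 0 < ‖vb - B xb‖ := norm_pos_iff.mpr (sub_ne_zero.mpr hne)
        exact pow_pos h8 2
      have := hkey (1/(2*L)) (by positivity)
      have e7 : (1/(2*L)) * (L * ‖vb - B xb‖^2) = ‖vb - B xb‖^2 / 2 := by
        field_simp
      rw [e7] at this
      linarith
    exact ⟨xb, hxbsol, hUx, fun w => by rw [← hveq]; exact hUb w⟩
  -- uniqueness of the ultrafilter weak limits (Opial-type argument)
  have huniq : ∀ (U V : Ultrafilter ℤ), (U : Filter ℤ) ≤ atTop → (V : Filter ℤ) ≤ atTop →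
      ∀ xb xb' : H, (xb, -B xb) ∈ A → (xb', -B xb') ∈ A →
      (∀ w : H, Tendsto (fun k : ℤ => ⟪x k, w⟫) (U : Filter ℤ) (nhds ⟪xb, w⟫)) →
      (∀ w : H, Tendsto (fun k : ℤ => ⟪B (x k), w⟫) (U : Filter ℤ) (nhds ⟪B xb, w⟫)) →
      (∀ w : H, Tendsto (fun k : ℤ => ⟪x k, w⟫) (V : Filter ℤ) (nhds ⟪xb', w⟫)) →
      (∀ w : H, Tendsto (fun k : ℤ => ⟪B (x k), w⟫) (V : Filter ℤ) (nhds ⟪B xb', w⟫)) →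
      xb = xb' := by
    intro U V hU hV xb xb' hsolb hsolb' hUx hUb hVx hVb
    obtain ⟨c, hc⟩ := hlimz xb hsolb
    obtain ⟨c', hc'⟩ := hlimz xb' hsolb'
    -- pointwise identity
    have hyz : ∀ k : ℤ, ⟪x k + lam • B (x (k-1)), (xb + lam • B xb) - (xb' + lam • B xb')⟫
        = ((‖x k - xb' + lam • (B (x (k-1)) - B xb')‖^2
            - ‖x k - xb + lam • (B (x (k-1)) - B xb)‖^2
            + (‖xb + lam • B xb‖^2 - ‖xb' + lam • B xb'‖^2))/2) := by
      intro k
      rw [show x k - xb' + lam • (B (x (k-1)) - B xb')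
          = (x k + lam • B (x (k-1))) - (xb' + lam • B xb') by module,
        show x k - xb + lam • (B (x (k-1)) - B xb)
          = (x k + lam • B (x (k-1))) - (xb + lam • B xb) by module]
      rw [@norm_sub_sq_real, @norm_sub_sq_real, inner_sub_right]
      ring
    -- atTop limit of the scalar sequence
    have hslim : Tendsto (fun k : ℤ => ⟪x k + lam • B (x (k-1)),
        (xb + lam • B xb) - (xb' + lam • B xb')⟫) atTop
        (nhds ((c' - c + (‖xb + lam • B xb‖^2 - ‖xb' + lam • B xb'‖^2))/2)) := by
      have h1 := ((hc'.sub hc).add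
        (tendsto_const_nhds (x := ‖xb + lam • B xb‖^2 - ‖xb' + lam • B xb'‖^2))).div_const 2
      exact h1.congr fun k => (hyz k).symm
    -- limits along U and V
    have hUy : ∀ (W : Ultrafilter ℤ), (W : Filter ℤ) ≤ atTop → ∀ p : H,
        (∀ w : H, Tendsto (fun k : ℤ => ⟪x k, w⟫) (W : Filter ℤ) (nhds ⟪p, w⟫)) →
        (∀ w : H, Tendsto (fun k : ℤ => ⟪B (x k), w⟫) (W : Filter ℤ) (nhds ⟪B p, w⟫)) →
        ∀ w : H, Tendsto (fun k : ℤ => ⟪x k + lam • B (x (k-1)), w⟫) (W : Filter ℤ)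
          (nhds ⟪p + lam • B p, w⟫) := by
      intro W hW p hWx hWb w
      have hdiff : Tendsto (fun k : ℤ => ⟪B (x k) - B (x (k-1)), w⟫) atTop (nhds 0) :=
        hsmall ‖w‖ (fun _ => w) (fun k => B (x k) - B (x (k-1)))
          (Eventually.of_forall fun k => le_refl _) hEZ
      have hBprev : Tendsto (fun k : ℤ => ⟪B (x (k-1)), w⟫) (W : Filter ℤ)
          (nhds ⟪B p, w⟫) := by
        have h2 := (hWb w).sub (hdiff.mono_left hW)
        rw [sub_zero] at h2
        refine h2.congr fun k => ?_
        rw [← inner_sub_left]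
        congr 1
        abel
      have h3 := (hWx w).add (hBprev.const_mul lam)
      rw [show (⟪p, w⟫ + lam * ⟪B p, w⟫ : ℝ) = ⟪p + lam • B p, w⟫ by
        rw [inner_add_left, real_inner_smul_left]] at h3
      refine h3.congr fun k => ?_
      rw [inner_add_left, real_inner_smul_left]
    have he1 := tendsto_nhds_unique (hslim.mono_left hU)
      (hUy U hU xb hUx hUb ((xb + lam • B xb) - (xb' + lam • B xb')))
    have he2 := tendsto_nhds_unique (hslim.mono_left hV)
      (hUy V hV xb' hVx hVb ((xb + lam • B xb) - (xb' + lam • B xb')))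
    have hww : xb + lam • B xb = xb' + lam • B xb' := by
      have h4 : ⟪(xb + lam • B xb) - (xb' + lam • B xb'),
          (xb + lam • B xb) - (xb' + lam • B xb')⟫ = (0:ℝ) := by
        rw [inner_sub_left]
        linarith [he1.symm.trans he2]
      exact sub_eq_zero.mp (inner_self_eq_zero.mp h4)
    have h0 : xb - xb' = lam • (B xb' - B xb) := by
      have h1 : (xb + lam • B xb) - (xb' + lam • B xb') = 0 := by rw [hww, sub_self]
      have h2 : xb - xb' - lam • (B xb' - B xb)
          = (xb + lam • B xb) - (xb' + lam • B xb') := by module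
      rw [h1] at h2
      exact sub_eq_zero.mp h2
    have hn : ‖xb - xb'‖ ≤ lam * L * ‖xb - xb'‖ := by
      calc ‖xb - xb'‖ = lam * ‖B xb' - B xb‖ := by
            rw [h0, norm_smul, Real.norm_eq_abs, abs_of_pos hlam0]
        _ ≤ lam * (L * ‖xb' - xb‖) := mul_le_mul_of_nonneg_left (hBlip _ _) hlam0.le
        _ = lam * L * ‖xb - xb'‖ := by rw [norm_sub_rev]; ring
    have hz : ‖xb - xb'‖ = 0 := by nlinarith [norm_nonneg (xb - xb')]
    exact sub_eq_zero.mp (norm_eq_zero.mp hz)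
  -- final assembly
  obtain ⟨xb, hsol, hUx0, hUb0⟩ := main (Ultrafilter.of atTop) (Ultrafilter.of_le _)
  refine ⟨xb, hsol, fun w => ?_, fun w => ?_⟩
  · refine (tendsto_iff_ultrafilter _ _ _).mpr fun V hV => ?_
    obtain ⟨xb', hsol', hVx, hVb⟩ := main V hV
    have he := huniq V (Ultrafilter.of atTop) hV (Ultrafilter.of_le _) xb' xb hsol' hsol
      hVx hVb hUx0 hUb0
    rw [← he]
    exact hVx w
  · refine (tendsto_iff_ultrafilter _ _ _).mpr fun V hV => ?_
    obtain ⟨xb', hsol', hVx, hVb⟩ := main V hV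
    have he := huniq V (Ultrafilter.of atTop) hV (Ultrafilter.of_le _) xb' xb hsol' hsol
      hVx hVb hUx0 hUb0
    rw [← he]
    exact hVb w
end

section
/- Let H be a real Hilbert space, let A and B be maximally monotone set-valued operators on H such that there exist x*, u* with u* ∈ A(x*) and −u* ∈ B(x*) (i.e. zer(A+B) ≠ ∅), let λ > 0, and let J denote the resolvent of λA. Suppose x, y : [0,∞) → H are differentiable trajectories satisfying, for all t ≥ 0, y(t) ∈ λB(x(t)) (i.e. y(t)/λ ∈ B(x(t))) and the differential equation x'(t) + x(t) = J(x(t) − y(t)) − y'(t). Then (i) x(t) converges weakly as t → ∞ to a point x̄ with 0 ∈ A(x̄) + B(x̄), and (ii) y(t) converges weakly to a point ȳ satisfying ȳ/λ ∈ B(x̄) and −ȳ/λ ∈ A(x̄). -/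
open scoped RealInnerProductSpace
open Filter Set

open Set

section Aux
variable {H : Type*} [NormedAddCommGroup H] [InnerProductSpace ℝ H]

lemma smulOp_maximal {B : Set (H × H)} {c : ℝ} (hc : 0 < c)
    (hB : IsMaximalMonotoneOp B) : IsMaximalMonotoneOp (smulOp c B) := by
  constructor
  · rintro p ⟨p0, hp0, rfl⟩ q ⟨q0, hq0, rfl⟩
    have := hB.1 p0 hp0 q0 hq0
    have h2 : ⟪c • p0.2 - c • q0.2, p0.1 - q0.1⟫ = c * ⟪p0.2 - q0.2, p0.1 - q0.1⟫ := by
      rw [← smul_sub, real_inner_smul_left]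
    simpa [h2] using mul_nonneg hc.le this
  · rintro ⟨a, w⟩ h
    have hmem : (a, c⁻¹ • w) ∈ B := by
      apply hB.2
      rintro ⟨u, v⟩ hq
      have := h (u, c • v) ⟨(u, v), hq, rfl⟩
      have h2 : ⟪c⁻¹ • w - v, a - u⟫ = c⁻¹ * ⟪w - c • v, a - u⟫ := by
        rw [← real_inner_smul_left, smul_sub, smul_smul, inv_mul_cancel₀ hc.ne', one_smul]
      rw [h2]
      exact mul_nonneg (inv_nonneg.2 hc.le) this
    exact ⟨(a, c⁻¹ • w), hmem, by simp [smul_smul, mul_inv_cancel₀ hc.ne']⟩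

lemma exists_nonpos_pair {M : Set (H × H)} (hM : IsMaximalMonotoneOp M) (q : H × H) :
    ∃ m ∈ M, ⟪q.2 - m.2, q.1 - m.1⟫ ≤ (0 : ℝ) := by
  by_cases hq : q ∈ M
  · exact ⟨q, hq, by simp⟩
  · by_contra h
    push_neg at h
    exact hq (hM.2 q fun m hm => (h m hm).le)

lemma pair_mem_of_forall {A B : Set (H × H)} (hA : IsMaximalMonotoneOp A)
    (hB : IsMaximalMonotoneOp B) (a c : H)
    (h : ∀ p ∈ B, ∀ q ∈ A, (0 : ℝ) ≤ ⟪c - p.2, a - p.1⟫ + ⟪-c - q.2, a - q.1⟫) :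
    (a, c) ∈ B ∧ (a, -c) ∈ A := by
  constructor
  · apply hB.2
    rintro p hp
    obtain ⟨m, hm, hm0⟩ := exists_nonpos_pair hA (a, -c)
    have := h p hp m hm
    simp only at *
    linarith
  · apply hA.2
    rintro q hq
    obtain ⟨m, hm, hm0⟩ := exists_nonpos_pair hB (a, c)
    have := h m hm q hq
    simp only at *
    linarith

lemma alg_ineq (a b q : H) (h1 : (0:ℝ) ≤ ⟪b, a⟫) (h2 : (0:ℝ) ≤ ⟪a - b - q, q⟫) :
    ⟪q - a, a + b⟫ ≤ -‖q - a‖ ^ 2 := by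
  have key : ⟪q - a, a + b⟫ + ‖q - a‖ ^ 2 + (⟪b, a⟫ + ⟪a - b - q, q⟫) = 0 := by
    rw [← real_inner_self_eq_norm_sq]
    simp only [inner_sub_left, inner_sub_right, inner_add_right]
    rw [real_inner_comm b a, real_inner_comm q a, real_inner_comm q b]
    ring
  linarith

end Aux

section Aux2
variable {H : Type*} [NormedAddCommGroup H] [InnerProductSpace ℝ H] [CompleteSpace H]

lemma ultra_weak_lim (U : Ultrafilter ℝ) (f : ℝ → H) (M : ℝ)
    (hb : ∀ᶠ t in (U : Filter ℝ), ‖f t‖ ≤ M) :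
    ∃ L : H, ∀ v : H, Tendsto (fun t => ⟪f t, v⟫) (U : Filter ℝ) (nhds ⟪L, v⟫) := by
  have hM0 : 0 ≤ M := by
    obtain ⟨t, ht⟩ := hb.exists
    exact le_trans (norm_nonneg _) ht
  have hlim : ∀ v : H, ∃ a : ℝ, Tendsto (fun t => ⟪f t, v⟫) (U : Filter ℝ) (nhds a) := by
    intro v
    have hmem : Set.Icc (-(M * ‖v‖)) (M * ‖v‖) ∈ U.map (fun t => ⟪f t, v⟫) := by
      refine Filter.mem_map.2 (hb.mono fun t ht => ?_)
      exact Set.mem_Icc.2 (abs_le.1 (le_trans (abs_real_inner_le_norm _ _)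
          (mul_le_mul_of_nonneg_right ht (norm_nonneg v))))
    obtain ⟨a, _, ha⟩ := (isCompact_Icc).ultrafilter_le_nhds' (U.map (fun t => ⟪f t, v⟫)) hmem
    exact ⟨a, ha⟩
  choose φ hφ using hlim
  have hadd : ∀ v w : H, φ (v + w) = φ v + φ w := by
    intro v w
    have h1 : Tendsto (fun t => ⟪f t, v + w⟫) (U : Filter ℝ) (nhds (φ v + φ w)) := by
      have := (hφ v).add (hφ w)
      simpa [inner_add_right] using this
    exact tendsto_nhds_unique (hφ (v + w)) h1
  have hsmul : ∀ (r : ℝ) (v : H), φ (r • v) = r * φ v := by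
    intro r v
    have h1 : Tendsto (fun t => ⟪f t, r • v⟫) (U : Filter ℝ) (nhds (r * φ v)) := by
      have := (hφ v).const_mul r
      simpa [real_inner_smul_right] using this
    exact tendsto_nhds_unique (hφ (r • v)) h1
  have hbound : ∀ v : H, |φ v| ≤ M * ‖v‖ := by
    intro v
    have h1 : Tendsto (fun t => |⟪f t, v⟫|) (U : Filter ℝ) (nhds (|φ v|)) :=
      (hφ v).abs
    refine le_of_tendsto h1 (hb.mono fun t ht => ?_)
    exact le_trans (abs_real_inner_le_norm _ _) (mul_le_mul_of_nonneg_right ht (norm_nonneg v))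
  let lin : H →ₗ[ℝ] ℝ :=
    { toFun := φ
      map_add' := hadd
      map_smul' := hsmul }
  let clm : H →L[ℝ] ℝ := LinearMap.mkContinuous lin M (fun v => by
    simpa [lin, Real.norm_eq_abs] using hbound v)
  refine ⟨(InnerProductSpace.toDual ℝ H).symm clm, fun v => ?_⟩
  have : ⟪(InnerProductSpace.toDual ℝ H).symm clm, v⟫ = clm v :=
    InnerProductSpace.toDual_symm_apply
  rw [this]
  exact hφ v

end Aux2

section Aux3
variable {H : Type*} [NormedAddCommGroup H] [InnerProductSpace ℝ H]

lemma sq_dist_hasDeriv {z z' : ℝ → H} (c : H) {t : ℝ}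
    (h : HasDerivAt z (z' t) t) :
    HasDerivAt (fun t => ‖z t - c‖ ^ 2) (2 * ⟪z' t, z t - c⟫) t := by
  have h1 : HasDerivAt (fun t => z t - c) (z' t) t := h.sub_const c
  have h2 := h1.inner (𝕜 := ℝ) h1
  have h3 : (fun t : ℝ => ‖z t - c‖ ^ 2) = fun t => ⟪z t - c, z t - c⟫ :=
    funext fun s => (real_inner_self_eq_norm_sq _).symm
  rw [h3]
  refine h2.congr_deriv ?_
  rw [real_inner_comm]
  ring

/-- Fejér monotonicity. -/
lemma fejer_antitone {z z' : ℝ → H} (c : H)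
    (hzd : ∀ t, (0:ℝ) ≤ t → HasDerivAt z (z' t) t)
    (hkey : ∀ t, (0:ℝ) ≤ t → ⟪z' t, z t - c⟫ ≤ 0) :
    AntitoneOn (fun t => ‖z t - c‖ ^ 2) (Ici (0:ℝ)) := by
  apply antitoneOn_of_deriv_nonpos (convex_Ici 0)
  · exact fun t ht => (sq_dist_hasDeriv c (hzd t ht)).continuousAt.continuousWithinAt
  · rw [interior_Ici]
    exact fun t ht =>
      (sq_dist_hasDeriv c (hzd t (le_of_lt ht))).differentiableAt.differentiableWithinAt
  · rw [interior_Ici]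
    intro t ht
    rw [(sq_dist_hasDeriv c (hzd t (le_of_lt ht))).deriv]
    have := hkey t (le_of_lt ht)
    linarith

/-- Norm of the derivative is nonincreasing. -/
lemma normderiv_antitone {z z' : ℝ → H}
    (hzd : ∀ t, (0:ℝ) ≤ t → HasDerivAt z (z' t) t)
    (hkey2 : ∀ t s, (0:ℝ) ≤ t → (0:ℝ) ≤ s → ⟪z' t - z' s, z t - z s⟫ ≤ 0) :
    ∀ s t, (0:ℝ) ≤ s → s ≤ t → ‖z' t‖ ≤ ‖z' s‖ := by
  intro s t hs hst
  have hD : ∀ h : ℝ, 0 < h → ‖z (t + h) - z t‖ ≤ ‖z (s + h) - z s‖ := by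
    intro h hh
    have hshift : ∀ τ : ℝ, (0:ℝ) ≤ τ → HasDerivAt (fun τ => z (τ + h)) (z' (τ + h)) τ := by
      intro τ hτ
      have h1 := hzd (τ + h) (add_nonneg hτ hh.le)
      have h2 : HasDerivAt (fun τ : ℝ => τ + h) 1 τ := (hasDerivAt_id τ).add_const h
      simpa [Function.comp_def] using HasDerivAt.scomp τ h1 h2
    have hzd2 : ∀ τ : ℝ, (0:ℝ) ≤ τ →
        HasDerivAt (fun τ => z (τ + h) - z τ) (z' (τ + h) - z' τ) τ :=
      fun τ hτ => (hshift τ hτ).sub (hzd τ hτ)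
    have hanti : AntitoneOn (fun τ => ‖z (τ + h) - z τ - 0‖ ^ 2) (Ici (0:ℝ)) := by
      apply fejer_antitone (z := fun τ => z (τ + h) - z τ) (z' := fun τ => z' (τ + h) - z' τ)
        0 hzd2
      intro τ hτ
      have := hkey2 (τ + h) τ (add_nonneg hτ hh.le) hτ
      simpa using this
    have h2 := hanti (mem_Ici.2 hs) (mem_Ici.2 (hs.trans hst)) hst
    simp only [sub_zero] at h2
    have := Real.sqrt_le_sqrt h2
    rwa [Real.sqrt_sq (norm_nonneg _), Real.sqrt_sq (norm_nonneg _)] at this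
  have hslope : ∀ τ : ℝ, 0 ≤ τ →
      Tendsto (fun h : ℝ => ‖z (τ + h) - z τ‖ / h) (nhdsWithin 0 (Ioi 0)) (nhds ‖z' τ‖) := by
    intro τ hτ
    have h2 := hasDerivAt_iff_tendsto_slope.1 (hzd τ hτ)
    have h3 : Tendsto (fun h : ℝ => τ + h) (nhdsWithin 0 (Ioi 0)) (nhdsWithin τ {τ}ᶜ) := by
      apply tendsto_nhdsWithin_of_tendsto_nhds_of_eventually_within
      · have : Tendsto (fun h : ℝ => τ + h) (nhds 0) (nhds τ) := by
          exact (continuous_const.add continuous_id).tendsto' (0:ℝ) τ (by simp)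
        exact this.mono_left nhdsWithin_le_nhds
      · filter_upwards [self_mem_nhdsWithin] with h hh
        simp only [Set.mem_compl_iff, Set.mem_singleton_iff]
        have h0 : (0:ℝ) < h := hh
        intro hc
        nlinarith
    have h4 := h2.comp h3
    have h5 := (continuous_norm.tendsto _).comp h4
    refine Tendsto.congr' ?_ h5
    filter_upwards [self_mem_nhdsWithin] with h hh
    have h0 : (0:ℝ) < h := hh
    show ‖slope z τ (τ + h)‖ = ‖z (τ + h) - z τ‖ / h
    rw [slope]
    simp only [vsub_eq_sub, add_sub_cancel_left]
    rw [norm_smul, Real.norm_eq_abs, abs_inv, abs_of_pos h0]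
    rw [div_eq_inv_mul]
  refine le_of_tendsto_of_tendsto (hslope t (hs.trans hst)) (hslope s hs) ?_
  filter_upwards [self_mem_nhdsWithin] with h hh
  have h0 : (0:ℝ) < h := hh
  exact div_le_div_of_nonneg_right (hD h h0) h0.le

end Aux3

section Aux4
variable {H : Type*} [NormedAddCommGroup H] [InnerProductSpace ℝ H]

lemma deriv_tendsto_zero {z z' : ℝ → H} (c : H)
    (hzd : ∀ t, (0:ℝ) ≤ t → HasDerivAt z (z' t) t)
    (hkey : ∀ t, (0:ℝ) ≤ t → ⟪z' t, z t - c⟫ ≤ -‖z' t‖ ^ 2)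
    (hfej : AntitoneOn (fun t => ‖z t - c‖ ^ 2) (Ici (0:ℝ)))
    (hnorm : ∀ s t, (0:ℝ) ≤ s → s ≤ t → ‖z' t‖ ≤ ‖z' s‖) :
    Tendsto z' atTop (nhds 0) := by
  set h0 : ℝ := ‖z 0 - c‖ ^ 2 with hh0
  have claim : ∀ u : ℝ, 0 < u → ‖z' u‖ ^ 2 ≤ h0 / u := by
    intro u hu
    set K : ℝ := 2 * ‖z' u‖ ^ 2 with hK
    have hganti : AntitoneOn (fun s => ‖z s - c‖ ^ 2 + K * s) (Icc (u/2) u) := by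
      apply antitoneOn_of_deriv_nonpos (convex_Icc _ _)
      · apply ContinuousOn.add _ (Continuous.continuousOn (by continuity))
        intro τ hτ
        have hτ0 : (0:ℝ) ≤ τ := le_trans (by positivity) hτ.1
        exact (sq_dist_hasDeriv c (hzd τ hτ0)).continuousAt.continuousWithinAt
      · rw [interior_Icc]
        intro τ hτ
        have hτ0 : (0:ℝ) ≤ τ := le_trans (by positivity) hτ.1.le
        exact ((sq_dist_hasDeriv c (hzd τ hτ0)).differentiableAt.add
          ((differentiable_id.const_mul K) τ)).differentiableWithinAt
      · rw [interior_Icc]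
        intro τ hτ
        have hτ0 : (0:ℝ) ≤ τ := le_trans (by positivity) hτ.1.le
        have hd : HasDerivAt (fun s => ‖z s - c‖ ^ 2 + K * s)
            (2 * ⟪z' τ, z τ - c⟫ + K) τ := by
          have h1 := sq_dist_hasDeriv c (hzd τ hτ0)
          have h2 : HasDerivAt (fun s : ℝ => K * s) K τ := by
            simpa using (hasDerivAt_id τ).const_mul K
          exact h1.add h2
        rw [hd.deriv]
        have hle := hkey τ hτ0
        have hn := hnorm τ u hτ0 hτ.2.le
        have : ‖z' u‖ ^ 2 ≤ ‖z' τ‖ ^ 2 := by nlinarith [norm_nonneg (z' τ), norm_nonneg (z' u)]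
        simp only [hK]
        nlinarith
    have hgle := hganti (mem_Icc.2 ⟨le_refl _, half_le_self hu.le⟩)
      (mem_Icc.2 ⟨half_le_self hu.le, le_refl _⟩) (half_le_self hu.le)
    simp only [hK] at hgle
    -- ‖z u − c‖² + 2‖z'u‖² u ≤ ‖z (u/2) − c‖² + 2‖z'u‖² (u/2)
    have hfb : ‖z (u/2) - c‖ ^ 2 ≤ h0 :=
      hfej (mem_Ici.2 (le_refl 0)) (mem_Ici.2 (by positivity)) (by positivity)
    have hnn : (0:ℝ) ≤ ‖z u - c‖ ^ 2 := by positivity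
    rw [le_div_iff₀ hu]
    simp only [hh0] at hfb
    nlinarith
  have hsq : Tendsto (fun u => ‖z' u‖ ^ 2) atTop (nhds 0) := by
    have hdiv : Tendsto (fun u : ℝ => h0 / u) atTop (nhds 0) :=
      Tendsto.div_atTop tendsto_const_nhds tendsto_id
    apply squeeze_zero' (g := fun u : ℝ => h0 / u)
    · filter_upwards with u; positivity
    · filter_upwards [eventually_gt_atTop 0] with u hu
      exact claim u hu
    · exact hdiv
  rw [tendsto_zero_iff_norm_tendsto_zero]
  have : (fun u => ‖z' u‖) = fun u => Real.sqrt (‖z' u‖ ^ 2) :=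
    funext fun u => (Real.sqrt_sq (norm_nonneg _)).symm
  rw [this]
  have := (Real.continuous_sqrt.tendsto' 0 0 (by simp)).comp hsq
  exact this

end Aux4

section Aux5
variable {H : Type*} [NormedAddCommGroup H] [InnerProductSpace ℝ H]

lemma expand_ineq (X Y Z u v u' v' : H) :
    ⟪Y - v, X - u⟫ + ⟪(X - Y - (X + Z)) - v', (X + Z) - u'⟫
      = (⟪Y, u'⟫ - ⟪Y, u⟫ - ⟪X, v⟫ - ⟪X, v'⟫ + ⟪v, u⟫ + ⟪v', u'⟫)
        + ((⟪-Y - v', Z⟫) - ⟪Z, X + Z - u'⟫) := by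
  simp only [inner_sub_left, inner_sub_right, inner_add_left, inner_add_right, inner_neg_left]
  rw [real_inner_comm X v, real_inner_comm X v']
  ring

lemma expand_ineq2 (X Y u v u' v' : H) :
    ⟪Y - v, X - u⟫ + ⟪-Y - v', X - u'⟫
      = ⟪Y, u'⟫ - ⟪Y, u⟫ - ⟪X, v⟫ - ⟪X, v'⟫ + ⟪v, u⟫ + ⟪v', u'⟫ := by
  simp only [inner_sub_left, inner_sub_right, inner_neg_left]
  rw [real_inner_comm X v, real_inner_comm X v']
  ring

lemma inner_diff_identity (a z1 z2 : H) :
    ⟪a, z1 - z2⟫ = (‖a - z2‖ ^ 2 - ‖a - z1‖ ^ 2 + (‖z1‖ ^ 2 - ‖z2‖ ^ 2)) / 2 := by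
  rw [norm_sub_sq_real, norm_sub_sq_real, inner_sub_right]
  ring

lemma antitoneOn_tendsto {f : ℝ → ℝ} (hf : AntitoneOn f (Ici (0:ℝ)))
    (h0 : ∀ t, 0 ≤ f t) : ∃ L, Tendsto f atTop (nhds L) := by
  set g : ℝ → ℝ := fun t => f (max t 0) with hg
  have hga : Antitone g := by
    intro a b hab
    exact hf (mem_Ici.2 (le_max_right a 0)) (mem_Ici.2 (le_max_right b 0))
      (max_le_max hab le_rfl)
  have hbdd : BddBelow (Set.range g) := ⟨0, by rintro r ⟨t, rfl⟩; exact h0 _⟩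
  refine ⟨⨅ t, g t, ?_⟩
  have hgt := tendsto_atTop_ciInf hga hbdd
  refine Tendsto.congr' ?_ hgt
  filter_upwards [eventually_ge_atTop (0:ℝ)] with t ht
  simp [hg, max_eq_left ht]

end Aux5

section Main
variable {H : Type*} [NormedAddCommGroup H] [InnerProductSpace ℝ H] [CompleteSpace H]

lemma main_aux {lA lB : Set (H × H)} (hlA : IsMaximalMonotoneOp lA) (hlB : IsMaximalMonotoneOp lB)
    (x y x' y' p : ℝ → H)
    (hx : ∀ t : ℝ, 0 ≤ t → HasDerivAt x (x' t) t)
    (hy : ∀ t : ℝ, 0 ≤ t → HasDerivAt y (y' t) t)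
    (hyB : ∀ t : ℝ, 0 ≤ t → (x t, y t) ∈ lB)
    (hpA : ∀ t : ℝ, (p t, x t - y t - p t) ∈ lA)
    (hode : ∀ t : ℝ, 0 ≤ t → x' t + y' t = p t - x t)
    (ξ0 η0 : H) (h0B : (ξ0, η0) ∈ lB) (h0A : (ξ0, -η0) ∈ lA) :
    ∃ xbar ybar : H,
      (∀ w : H, Tendsto (fun t : ℝ => ⟪x t, w⟫) atTop (nhds ⟪xbar, w⟫)) ∧
      (∀ w : H, Tendsto (fun t : ℝ => ⟪y t, w⟫) atTop (nhds ⟪ybar, w⟫)) ∧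
      (xbar, ybar) ∈ lB ∧ (xbar, -ybar) ∈ lA := by
  classical
  set z : ℝ → H := fun t => x t + y t with hzdef
  set z' : ℝ → H := fun t => x' t + y' t with hz'def
  have hzd : ∀ t : ℝ, 0 ≤ t → HasDerivAt z (z' t) t := fun t ht => (hx t ht).add (hy t ht)
  have hz'p : ∀ t : ℝ, 0 ≤ t → z' t = p t - x t := fun t ht => hode t ht
  have hpz : ∀ t : ℝ, 0 ≤ t → p t = x t + z' t := by
    intro t ht; rw [hz'p t ht]; abel
  have hkeygen : ∀ ξ η : H, (ξ, η) ∈ lB → (ξ, -η) ∈ lA → ∀ t : ℝ, 0 ≤ t →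
      ⟪z' t, z t - (ξ + η)⟫ ≤ -‖z' t‖ ^ 2 := by
    intro ξ η hηB hηA t ht
    have hM1 : (0:ℝ) ≤ ⟪y t - η, x t - ξ⟫ := hlB.1 (x t, y t) (hyB t ht) (ξ, η) hηB
    have hM2 : (0:ℝ) ≤ ⟪(x t - y t - p t) - (-η), p t - ξ⟫ :=
      hlA.1 (p t, x t - y t - p t) (hpA t) (ξ, -η) hηA
    have hM2' : (0:ℝ) ≤ ⟪(x t - ξ) - (y t - η) - (p t - ξ), p t - ξ⟫ := by
      have he : (x t - ξ) - (y t - η) - (p t - ξ) = (x t - y t - p t) - (-η) := by abel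
      rw [he]; exact hM2
    have halg := alg_ineq (x t - ξ) (y t - η) (p t - ξ) hM1 hM2'
    have e1 : p t - ξ - (x t - ξ) = z' t := by rw [hz'p t ht]; abel
    have e2 : (x t - ξ) + (y t - η) = z t - (ξ + η) := by simp only [hzdef]; abel
    rwa [e1, e2] at halg
  have hkey0 : ∀ t : ℝ, 0 ≤ t → ⟪z' t, z t - (ξ0 + η0)⟫ ≤ -‖z' t‖ ^ 2 :=
    hkeygen ξ0 η0 h0B h0A
  have hkey2 : ∀ t s : ℝ, 0 ≤ t → 0 ≤ s → ⟪z' t - z' s, z t - z s⟫ ≤ 0 := by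
    intro t s ht hs
    have hM1 : (0:ℝ) ≤ ⟪y t - y s, x t - x s⟫ :=
      hlB.1 (x t, y t) (hyB t ht) (x s, y s) (hyB s hs)
    have hM2 : (0:ℝ) ≤ ⟪(x t - y t - p t) - (x s - y s - p s), p t - p s⟫ :=
      hlA.1 (p t, x t - y t - p t) (hpA t) (p s, x s - y s - p s) (hpA s)
    have hM2' : (0:ℝ) ≤ ⟪(x t - x s) - (y t - y s) - (p t - p s), p t - p s⟫ := by
      have he : (x t - x s) - (y t - y s) - (p t - p s)
          = (x t - y t - p t) - (x s - y s - p s) := by abel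
      rw [he]; exact hM2
    have halg := alg_ineq (x t - x s) (y t - y s) (p t - p s) hM1 hM2'
    have e1 : p t - p s - (x t - x s) = z' t - z' s := by
      rw [hz'p t ht, hz'p s hs]; abel
    have e2 : (x t - x s) + (y t - y s) = z t - z s := by simp only [hzdef]; abel
    rw [e1, e2] at halg
    exact le_trans halg (neg_nonpos.2 (sq_nonneg _))
  set c0 : H := ξ0 + η0 with hc0
  have hfej0 : AntitoneOn (fun t => ‖z t - c0‖ ^ 2) (Ici (0:ℝ)) :=
    fejer_antitone c0 hzd (fun t ht => le_trans (hkey0 t ht) (neg_nonpos.2 (sq_nonneg _)))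
  have hnorm : ∀ s t : ℝ, 0 ≤ s → s ≤ t → ‖z' t‖ ≤ ‖z' s‖ := normderiv_antitone hzd hkey2
  have hz'0 : Tendsto z' atTop (nhds 0) := deriv_tendsto_zero c0 hzd hkey0 hfej0 hnorm
  have hz'n : Tendsto (fun t => ‖z' t‖) atTop (nhds 0) := by
    have := hz'0.norm
    simpa using this
  have hzc : ∀ t : ℝ, 0 ≤ t → ‖z t - c0‖ ≤ ‖z 0 - c0‖ := by
    intro t ht
    have h1 := hfej0 (mem_Ici.2 le_rfl) (mem_Ici.2 ht) ht
    have h2 := Real.sqrt_le_sqrt h1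
    rwa [Real.sqrt_sq (norm_nonneg _), Real.sqrt_sq (norm_nonneg _)] at h2
  set Mz : ℝ := ‖c0‖ + ‖z 0 - c0‖ with hMz
  have hzbound : ∀ t : ℝ, 0 ≤ t → ‖z t‖ ≤ Mz := by
    intro t ht
    have h1 : z t = c0 + (z t - c0) := by abel
    calc ‖z t‖ = ‖c0 + (z t - c0)‖ := by rw [← h1]
    _ ≤ ‖c0‖ + ‖z t - c0‖ := norm_add_le _ _
    _ ≤ Mz := by have := hzc t ht; rw [hMz]; linarith
  have hxdist : ∀ t : ℝ, 0 ≤ t → ‖x t - ξ0‖ ≤ ‖z t - c0‖ := by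
    intro t ht
    have hM1 : (0:ℝ) ≤ ⟪y t - η0, x t - ξ0⟫ := hlB.1 (x t, y t) (hyB t ht) (ξ0, η0) h0B
    have hsplit : z t - c0 = (x t - ξ0) + (y t - η0) := by
      simp only [hzdef, hc0]; abel
    have h1 : ‖x t - ξ0‖ ^ 2 ≤ ⟪x t - ξ0, z t - c0⟫ := by
      rw [hsplit, inner_add_right, ← real_inner_self_eq_norm_sq]
      have h2 : (0:ℝ) ≤ ⟪x t - ξ0, y t - η0⟫ := by rw [real_inner_comm]; exact hM1
      linarith
    have h2 := real_inner_le_norm (x t - ξ0) (z t - c0)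
    rcases le_or_gt ‖x t - ξ0‖ ‖z t - c0‖ with h | h
    · exact h
    · exfalso
      nlinarith [norm_nonneg (x t - ξ0), norm_nonneg (z t - c0)]
  set Mx : ℝ := ‖ξ0‖ + ‖z 0 - c0‖ with hMxdef
  have hxbound : ∀ t : ℝ, 0 ≤ t → ‖x t‖ ≤ Mx := by
    intro t ht
    have h1 : x t = ξ0 + (x t - ξ0) := by abel
    calc ‖x t‖ = ‖ξ0 + (x t - ξ0)‖ := by rw [← h1]
    _ ≤ ‖ξ0‖ + ‖x t - ξ0‖ := norm_add_le _ _
    _ ≤ Mx := by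
        have := le_trans (hxdist t ht) (hzc t ht)
        rw [hMxdef]; linarith
  set My : ℝ := Mz + Mx with hMydef
  have hybound : ∀ t : ℝ, 0 ≤ t → ‖y t‖ ≤ My := by
    intro t ht
    have h1 : y t = z t - x t := by simp only [hzdef]; abel
    calc ‖y t‖ = ‖z t - x t‖ := by rw [← h1]
    _ ≤ ‖z t‖ + ‖x t‖ := norm_sub_le _ _
    _ ≤ My := by
        have := hzbound t ht
        have := hxbound t ht
        rw [hMydef]; linarith
  -- ultrafilter cluster machinery
  have hUlim : ∀ U : Ultrafilter ℝ, (U : Filter ℝ) ≤ atTop → ∃ xU yU : H,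
      (∀ v : H, Tendsto (fun t => ⟪x t, v⟫) (U : Filter ℝ) (nhds ⟪xU, v⟫)) ∧
      (∀ v : H, Tendsto (fun t => ⟪y t, v⟫) (U : Filter ℝ) (nhds ⟪yU, v⟫)) ∧
      (xU, yU) ∈ lB ∧ (xU, -yU) ∈ lA := by
    intro U hU
    have hev : ∀ᶠ t in (U : Filter ℝ), (0:ℝ) ≤ t := hU (eventually_ge_atTop 0)
    obtain ⟨xU, hxU⟩ := ultra_weak_lim U x Mx (hev.mono fun t ht => hxbound t ht)
    obtain ⟨yU, hyU⟩ := ultra_weak_lim U y My (hev.mono fun t ht => hybound t ht)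
    have hkeyinf : ∀ q ∈ lB, ∀ q' ∈ lA,
        (0:ℝ) ≤ ⟪yU - q.2, xU - q.1⟫ + ⟪-yU - q'.2, xU - q'.1⟫ := by
      rintro ⟨u, v⟩ hpB ⟨u', v'⟩ hqA
      rw [expand_ineq2]
      set G : ℝ → ℝ := fun t =>
        ⟪y t, u'⟫ - ⟪y t, u⟫ - ⟪x t, v⟫ - ⟪x t, v'⟫ + ⟪v, u⟫ + ⟪v', u'⟫ with hGdef
      set r : ℝ → ℝ := fun t =>
        ⟪-y t - v', z' t⟫ - ⟪z' t, x t + z' t - u'⟫ with hrdef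
      have hGr : ∀ t : ℝ, 0 ≤ t → 0 ≤ G t + r t := by
        intro t ht
        have hM1 : (0:ℝ) ≤ ⟪y t - v, x t - u⟫ := hlB.1 (x t, y t) (hyB t ht) (u, v) hpB
        have hM2 : (0:ℝ) ≤ ⟪(x t - y t - p t) - v', p t - u'⟫ :=
          hlA.1 (p t, x t - y t - p t) (hpA t) (u', v') hqA
        rw [hpz t ht] at hM2
        have hid := expand_ineq (x t) (y t) (z' t) u v u' v'
        simp only [hGdef, hrdef]
        rw [← hid]
        exact add_nonneg hM1 hM2
      have hGlim : Tendsto G (U : Filter ℝ)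
          (nhds (⟪yU, u'⟫ - ⟪yU, u⟫ - ⟪xU, v⟫ - ⟪xU, v'⟫ + ⟪v, u⟫ + ⟪v', u'⟫)) := by
        simp only [hGdef]
        exact ((((((hyU u').sub (hyU u)).sub (hxU v)).sub (hxU v')).add_const
          (⟪v, u⟫ : ℝ)).add_const (⟪v', u'⟫ : ℝ))
      have hr0 : Tendsto r atTop (nhds 0) := by
        have ht1 : Tendsto (fun t => (⟪-y t - v', z' t⟫ : ℝ)) atTop (nhds 0) := by
          apply squeeze_zero_norm'
          · filter_upwards [eventually_ge_atTop (0:ℝ)] with t ht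
            calc ‖(⟪-y t - v', z' t⟫ : ℝ)‖ ≤ ‖-y t - v'‖ * ‖z' t‖ := norm_inner_le_norm _ _
            _ ≤ (My + ‖v'‖) * ‖z' t‖ := by
                apply mul_le_mul_of_nonneg_right _ (norm_nonneg _)
                calc ‖-y t - v'‖ ≤ ‖-y t‖ + ‖v'‖ := norm_sub_le _ _
                _ ≤ My + ‖v'‖ := by
                    rw [norm_neg]
                    have := hybound t ht
                    linarith
          · have := hz'n.const_mul (My + ‖v'‖)
            simpa using this
        have hev1 : ∀ᶠ t in atTop, ‖z' t‖ ≤ 1 := by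
          have h1 : Set.Iic (1:ℝ) ∈ nhds (0:ℝ) := Iic_mem_nhds (by norm_num)
          exact hz'n h1
        have ht2 : Tendsto (fun t => (⟪z' t, x t + z' t - u'⟫ : ℝ)) atTop (nhds 0) := by
          apply squeeze_zero_norm'
          · filter_upwards [eventually_ge_atTop (0:ℝ), hev1] with t ht h1
            calc ‖(⟪z' t, x t + z' t - u'⟫ : ℝ)‖ ≤ ‖z' t‖ * ‖x t + z' t - u'‖ :=
              norm_inner_le_norm _ _
            _ ≤ ‖z' t‖ * (Mx + 1 + ‖u'‖) := by
                apply mul_le_mul_of_nonneg_left _ (norm_nonneg _)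
                calc ‖x t + z' t - u'‖ ≤ ‖x t + z' t‖ + ‖u'‖ := norm_sub_le _ _
                _ ≤ ‖x t‖ + ‖z' t‖ + ‖u'‖ := by
                    have := norm_add_le (x t) (z' t)
                    linarith
                _ ≤ Mx + 1 + ‖u'‖ := by
                    have := hxbound t ht
                    linarith
            _ = (Mx + 1 + ‖u'‖) * ‖z' t‖ := by ring
          · have := hz'n.const_mul (Mx + 1 + ‖u'‖)
            simpa using this
        have : Tendsto (fun t => (⟪-y t - v', z' t⟫ : ℝ) - ⟪z' t, x t + z' t - u'⟫)
            atTop (nhds (0 - 0)) := ht1.sub ht2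
        simp only [hrdef]
        simpa using this
      have hGrU : Tendsto (fun t => G t + r t) (U : Filter ℝ)
          (nhds ((⟪yU, u'⟫ - ⟪yU, u⟫ - ⟪xU, v⟫ - ⟪xU, v'⟫ + ⟪v, u⟫ + ⟪v', u'⟫) + 0)) :=
        hGlim.add (hr0.mono_left hU)
      have h0le := ge_of_tendsto hGrU (hev.mono hGr)
      simpa using h0le
    have hpair := pair_mem_of_forall hlA hlB xU yU hkeyinf
    exact ⟨xU, yU, hxU, hyU, hpair.1, hpair.2⟩
  obtain ⟨U0, hU0⟩ := Ultrafilter.exists_le (atTop : Filter ℝ)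
  obtain ⟨xbar, ybar, hxbar, hybar, hmemB, hmemA⟩ := hUlim U0 hU0
  have huniq : ∀ (U : Ultrafilter ℝ), (U : Filter ℝ) ≤ atTop → ∀ xU yU : H,
      (∀ v : H, Tendsto (fun t => ⟪x t, v⟫) (U : Filter ℝ) (nhds ⟪xU, v⟫)) →
      (∀ v : H, Tendsto (fun t => ⟪y t, v⟫) (U : Filter ℝ) (nhds ⟪yU, v⟫)) →
      (xU, yU) ∈ lB → (xU, -yU) ∈ lA → xU = xbar ∧ yU = ybar := by
    intro U hU xU yU hxU hyU hBU hAU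
    set z1 : H := xU + yU with hz1
    set z2 : H := xbar + ybar with hz2
    have hfej1 : AntitoneOn (fun t => ‖z t - z1‖ ^ 2) (Ici (0:ℝ)) :=
      fejer_antitone z1 hzd
        (fun t ht => le_trans (hkeygen xU yU hBU hAU t ht) (neg_nonpos.2 (sq_nonneg _)))
    have hfej2 : AntitoneOn (fun t => ‖z t - z2‖ ^ 2) (Ici (0:ℝ)) :=
      fejer_antitone z2 hzd
        (fun t ht => le_trans (hkeygen xbar ybar hmemB hmemA t ht) (neg_nonpos.2 (sq_nonneg _)))
    obtain ⟨L1, hL1⟩ := antitoneOn_tendsto hfej1 (fun t => by positivity)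
    obtain ⟨L2, hL2⟩ := antitoneOn_tendsto hfej2 (fun t => by positivity)
    set Lq : ℝ := ((L2 - L1) + (‖z1‖ ^ 2 - ‖z2‖ ^ 2)) / 2 with hLq
    have hq : Tendsto (fun t => (⟪z t, z1 - z2⟫ : ℝ)) atTop (nhds Lq) := by
      have heq : (fun t => (⟪z t, z1 - z2⟫ : ℝ))
          = fun t => (‖z t - z2‖ ^ 2 - ‖z t - z1‖ ^ 2 + (‖z1‖ ^ 2 - ‖z2‖ ^ 2)) / 2 :=
        funext fun t => inner_diff_identity (z t) z1 z2
      rw [heq, hLq]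
      exact ((hL2.sub hL1).add_const (‖z1‖ ^ 2 - ‖z2‖ ^ 2)).div_const (2:ℝ)
    have hqU : ∀ (V : Ultrafilter ℝ), (V : Filter ℝ) ≤ atTop → ∀ xV yV : H,
        (∀ v : H, Tendsto (fun t => ⟪x t, v⟫) (V : Filter ℝ) (nhds ⟪xV, v⟫)) →
        (∀ v : H, Tendsto (fun t => ⟪y t, v⟫) (V : Filter ℝ) (nhds ⟪yV, v⟫)) →
        (⟪xV + yV, z1 - z2⟫ : ℝ) = Lq := by
      intro V hV xV yV hxV hyV
      have h1 := (hxV (z1 - z2)).add (hyV (z1 - z2))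
      have h2 : Tendsto (fun t => (⟪z t, z1 - z2⟫ : ℝ)) (V : Filter ℝ)
          (nhds (⟪xV, z1 - z2⟫ + ⟪yV, z1 - z2⟫)) := by
        refine Tendsto.congr (fun t => ?_) h1
        simp only [hzdef]
        rw [inner_add_left]
      have h3 := hq.mono_left hV
      have h4 := tendsto_nhds_unique h2 h3
      rw [inner_add_left]
      exact h4
    have hv1 : (⟪z1, z1 - z2⟫ : ℝ) = Lq := by
      rw [hz1]; exact hqU U hU xU yU hxU hyU
    have hv2 : (⟪z2, z1 - z2⟫ : ℝ) = Lq := by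
      rw [hz2]; exact hqU U0 hU0 xbar ybar hxbar hybar
    have hzz : z1 = z2 := by
      have h5 : (⟪z1 - z2, z1 - z2⟫ : ℝ) = 0 := by
        rw [inner_sub_left, hv1, hv2]; ring
      have h6 := inner_self_eq_zero.1 h5
      exact sub_eq_zero.1 h6
    have hxx : xU = xbar := by
      have hm := hlB.1 (xU, yU) hBU (xbar, ybar) hmemB
      have hsum : xU + yU = xbar + ybar := by rw [← hz1, ← hz2, hzz]
      have h4 : (yU - ybar) + (xU - xbar) = 0 := by
        have h5 := sub_eq_zero.2 hsum
        rw [show xU + yU - (xbar + ybar) = (yU - ybar) + (xU - xbar) from by abel] at h5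
        exact h5
      have hy' : yU - ybar = -(xU - xbar) := eq_neg_of_add_eq_zero_left h4
      simp only at hm
      rw [hy', inner_neg_left] at hm
      have h7 : (⟪xU - xbar, xU - xbar⟫ : ℝ) = 0 :=
        le_antisymm (by linarith) real_inner_self_nonneg
      exact sub_eq_zero.1 (inner_self_eq_zero.1 h7)
    have hyy : yU = ybar := by
      have h := hzz
      simp only [hz1, hz2] at h
      rw [hxx] at h
      exact add_left_cancel h
    exact ⟨hxx, hyy⟩
  refine ⟨xbar, ybar, ?_, ?_, hmemB, hmemA⟩
  · intro w
    rw [tendsto_iff_ultrafilter]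
    intro U hU
    obtain ⟨xU, yU, hxU, hyU, hBU, hAU⟩ := hUlim U hU
    obtain ⟨hxx, _⟩ := huniq U hU xU yU hxU hyU hBU hAU
    rw [← hxx]
    exact hxU w
  · intro w
    rw [tendsto_iff_ultrafilter]
    intro U hU
    obtain ⟨xU, yU, hxU, hyU, hBU, hAU⟩ := hUlim U hU
    obtain ⟨_, hyy⟩ := huniq U hU xU yU hxU hyU hBU hAU
    rw [← hyy]
    exact hyU w

end Main


/-- Theorem 2.2 (asymptotic behaviour of the continuous dynamical system
`ẋ(t) + x(t) = J_{λA}(x(t) − y(t)) − ẏ(t)`, `y(t) ∈ λB(x(t))`): the trajectory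
`x(t)` converges weakly to a zero `xbar` of `A + B`, and `y(t)` converges weakly to
`ybar` with `ybar/λ ∈ B(xbar)` and `−ybar/λ ∈ A(xbar)`. -/
theorem statement2
    {H : Type*} [NormedAddCommGroup H] [InnerProductSpace ℝ H] [CompleteSpace H]
    (A B : Set (H × H)) (hA : IsMaximalMonotoneOp A) (hB : IsMaximalMonotoneOp B)
    (hzer : ∃ xs us : H, (xs, us) ∈ A ∧ (xs, -us) ∈ B)
    (lam : ℝ) (hlam : 0 < lam)
    (J : H → H) (hJ : ∀ w : H, (J w, w - J w) ∈ smulOp lam A)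
    (x y x' y' : ℝ → H)
    (hx : ∀ t : ℝ, 0 ≤ t → HasDerivAt x (x' t) t)
    (hy : ∀ t : ℝ, 0 ≤ t → HasDerivAt y (y' t) t)
    (hyB : ∀ t : ℝ, 0 ≤ t → (x t, y t) ∈ smulOp lam B)
    (hode : ∀ t : ℝ, 0 ≤ t → x' t + x t = J (x t - y t) - y' t) :
    ∃ xbar ybar : H,
      (∀ w : H, Tendsto (fun t : ℝ => ⟪x t, w⟫) atTop (nhds ⟪xbar, w⟫)) ∧
      (∀ w : H, Tendsto (fun t : ℝ => ⟪y t, w⟫) atTop (nhds ⟪ybar, w⟫)) ∧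
      (xbar, ybar) ∈ smulOp lam B ∧ (xbar, -ybar) ∈ smulOp lam A := by
  obtain ⟨xs, us, hxsA, hxsB⟩ := hzer
  have hlA : IsMaximalMonotoneOp (smulOp lam A) := smulOp_maximal hlam hA
  have hlB : IsMaximalMonotoneOp (smulOp lam B) := smulOp_maximal hlam hB
  have h0B : (xs, -(lam • us)) ∈ smulOp lam B := ⟨(xs, -us), hxsB, by simp⟩
  have h0A' : (xs, lam • us) ∈ smulOp lam A := ⟨(xs, us), hxsA, rfl⟩
  have h0A : (xs, -(-(lam • us))) ∈ smulOp lam A := by rw [neg_neg]; exact h0A'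
  have hpA : ∀ t : ℝ, (J (x t - y t), x t - y t - J (x t - y t)) ∈ smulOp lam A :=
    fun t => hJ (x t - y t)
  have hode' : ∀ t : ℝ, 0 ≤ t → x' t + y' t = J (x t - y t) - x t := by
    intro t ht
    have h := hode t ht
    have h2 : x' t = J (x t - y t) - y' t - x t := by rw [← h]; abel
    rw [h2]; abel
  exact main_aux hlA hlB x y x' y' (fun t => J (x t - y t)) hx hy hyB hpA hode'
    xs (-(lam • us)) h0B h0A
end

section
/- Let H be a real Hilbert space, let A and B be maximally monotone set-valued operators on H, let λ > 0, and let J denote the resolvent of λA. Suppose x, y : [0,∞) → H are differentiable trajectories satisfying, for all t ≥ 0, y(t) ∈ λB(x(t)) and x'(t) + x(t) = J(x(t) − y(t)) − y'(t). Let x̄, ȳ ∈ H satisfy ȳ ∈ λB(x̄) and −ȳ ∈ λA(x̄), and set z̄ = x̄ + ȳ and z(t) = x(t) + y(t). Then for every t ≥ 0, the derivative of the function t ↦ ‖z(t) − z̄‖² satisfies (d/dt)‖z(t) − z̄‖² ≤ −2‖z'(t)‖². In particular, t ↦ ‖z(t) − z̄‖ is nonincreasing and ∫₀^∞ ‖z'(t)‖²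 dt ≤ (1/2)‖z(0) − z̄‖². -/
open scoped RealInnerProductSpace
open Filter MeasureTheory

/-- The key Lyapunov estimate (inequality (12) in the paper): along the trajectory of
`ẋ(t) + x(t) = J_{λA}(x(t) − y(t)) − ẏ(t)`, `y(t) ∈ λB(x(t))`, with `z = x + y` and
`z̄ = xbar + ybar` for `ybar ∈ λB(xbar) ∩ (−λA(xbar))`, one has `(d/dt)‖z(t) − z̄‖² ≤ −2‖ż(t)‖²`;
consequently `t ↦ ‖z(t) − z̄‖` is nonincreasing and `∫₀^∞ ‖ż(t)‖² dt ≤ ½‖z(0) − z̄‖²`. -/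
theorem statement5
    {H : Type*} [NormedAddCommGroup H] [InnerProductSpace ℝ H] [CompleteSpace H]
    (A B : Set (H × H)) (hA : IsMaximalMonotoneOp A) (hB : IsMaximalMonotoneOp B)
    (lam : ℝ) (hlam : 0 < lam)
    (J : H → H) (hJ : ∀ w : H, (J w, w - J w) ∈ smulOp lam A)
    (x y x' y' : ℝ → H)
    (hx : ∀ t : ℝ, 0 ≤ t → HasDerivAt x (x' t) t)
    (hy : ∀ t : ℝ, 0 ≤ t → HasDerivAt y (y' t) t)
    (hyB : ∀ t : ℝ, 0 ≤ t → (x t, y t) ∈ smulOp lam B)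
    (hode : ∀ t : ℝ, 0 ≤ t → x' t + x t = J (x t - y t) - y' t)
    (xbar ybar : H) (hybarB : (xbar, ybar) ∈ smulOp lam B) (hybarA : (xbar, -ybar) ∈ smulOp lam A) :
    (∀ t : ℝ, 0 ≤ t → ∀ d : ℝ,
        HasDerivAt (fun s : ℝ => ‖(x s + y s) - (xbar + ybar)‖ ^ 2) d t →
          d ≤ -2 * ‖x' t + y' t‖ ^ 2) ∧
    AntitoneOn (fun t : ℝ => ‖(x t + y t) - (xbar + ybar)‖) (Set.Ici 0) ∧
    ∫⁻ t in Set.Ioi (0 : ℝ), ENNReal.ofReal (‖x' t + y' t‖ ^ 2) ≤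
      ENNReal.ofReal ((1 / 2) * ‖(x 0 + y 0) - (xbar + ybar)‖ ^ 2) := by

  classical
  have hAm : ∀ p ∈ smulOp lam A, ∀ q ∈ smulOp lam A, (0:ℝ) ≤ ⟪p.2 - q.2, p.1 - q.1⟫ := by
    rintro p ⟨p0, hp0, rfl⟩ q ⟨q0, hq0, rfl⟩
    simp only
    rw [← smul_sub, real_inner_smul_left]
    exact mul_nonneg hlam.le (hA.1 p0 hp0 q0 hq0)
  have hBm : ∀ p ∈ smulOp lam B, ∀ q ∈ smulOp lam B, (0:ℝ) ≤ ⟪p.2 - q.2, p.1 - q.1⟫ := by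
    rintro p ⟨p0, hp0, rfl⟩ q ⟨q0, hq0, rfl⟩
    simp only
    rw [← smul_sub, real_inner_smul_left]
    exact mul_nonneg hlam.le (hB.1 p0 hp0 q0 hq0)
  set zb := xbar + ybar with hzb
  have hz' : ∀ t : ℝ, 0 ≤ t → x' t + y' t = J (x t - y t) - x t := by
    intro t ht
    have h := hode t ht
    have h2 : x' t + y' t = (x' t + x t) + y' t - x t := by abel
    rw [h2, h]; abel
  have key : ∀ t : ℝ, 0 ≤ t →
      ⟪x' t + y' t, (x t + y t) - zb⟫ ≤ - ‖x' t + y' t‖^2 := by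
    intro t ht
    set u := J (x t - y t) with hu
    have hA1 : (0:ℝ) ≤ ⟪(x t - y t - u) - (-ybar), u - xbar⟫ := hAm _ (hJ (x t - y t)) _ hybarA
    have hB1 : (0:ℝ) ≤ ⟪y t - ybar, x t - xbar⟫ := hBm _ (hyB t ht) _ hybarB
    have hzd : x' t + y' t = u - x t := hz' t ht
    rw [hzd]
    have expand : ⟪u - x t, (x t + y t) - zb⟫ + ⟪u - x t, u - x t⟫
        + (⟪(x t - y t - u) - (-ybar), u - xbar⟫ + ⟪y t - ybar, x t - xbar⟫) = 0 := by
      simp only [hzb, inner_sub_left, inner_sub_right, inner_add_left, inner_add_right,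
        inner_neg_left, inner_neg_right]
      linarith [real_inner_comm u (x t), real_inner_comm u (y t), real_inner_comm u xbar,
        real_inner_comm u ybar, real_inner_comm (x t) (y t), real_inner_comm (x t) xbar,
        real_inner_comm (x t) ybar, real_inner_comm (y t) xbar, real_inner_comm (y t) ybar,
        real_inner_comm xbar ybar]
    have hnorm : ⟪u - x t, u - x t⟫ = ‖u - x t‖^2 := real_inner_self_eq_norm_sq _
    linarith
  have hzderiv : ∀ t : ℝ, 0 ≤ t → HasDerivAt (fun s => x s + y s) (x' t + y' t) t :=
    fun t ht => (hx t ht).add (hy t ht)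
  have hphi : ∀ t : ℝ, 0 ≤ t → HasDerivAt (fun s => ‖(x s + y s) - zb‖^2)
      (2 * ⟪x' t + y' t, (x t + y t) - zb⟫) t := by
    intro t ht
    have hg : HasDerivAt (fun s => (x s + y s) - zb) (x' t + y' t) t :=
      (hzderiv t ht).sub_const zb
    have hin := hg.inner ℝ hg
    have heq : (fun s => ⟪(x s + y s) - zb, (x s + y s) - zb⟫) =
        fun s => ‖(x s + y s) - zb‖^2 := by
      funext s; exact real_inner_self_eq_norm_sq _
    rw [heq] at hin
    rw [real_inner_comm (x' t + y' t) (x t + y t - zb), ← two_mul] at hin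
    exact hin
  have part1 : ∀ t : ℝ, 0 ≤ t → ∀ d : ℝ,
      HasDerivAt (fun s : ℝ => ‖(x s + y s) - zb‖ ^ 2) d t →
        d ≤ -2 * ‖x' t + y' t‖ ^ 2 := by
    intro t ht d hd
    have hd2 : d = 2 * ⟪x' t + y' t, (x t + y t) - zb⟫ := hd.unique (hphi t ht)
    have hk := key t ht
    rw [hd2]; linarith
  have hcont : ContinuousOn (fun s => ‖(x s + y s) - zb‖^2) (Set.Ici (0:ℝ)) :=
    fun t ht => ((hphi t ht).continuousAt).continuousWithinAt
  have hant2 : AntitoneOn (fun s => ‖(x s + y s) - zb‖^2) (Set.Ici (0:ℝ)) := by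
    apply antitoneOn_of_deriv_nonpos (convex_Ici 0) hcont
    · intro t ht
      rw [interior_Ici] at ht
      exact ((hphi t (le_of_lt ht)).differentiableAt).differentiableWithinAt
    · intro t ht
      rw [interior_Ici] at ht
      rw [(hphi t ht.le).deriv]
      have hk := key t ht.le
      have hnn : (0:ℝ) ≤ ‖x' t + y' t‖^2 := sq_nonneg _
      linarith
  have part2 : AntitoneOn (fun t : ℝ => ‖(x t + y t) - zb‖) (Set.Ici 0) := by
    intro a ha b hb hab
    have h2 := hant2 ha hb hab
    have h3 := Real.sqrt_le_sqrt h2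
    simpa [Real.sqrt_sq (norm_nonneg _)] using h3
  refine ⟨part1, part2, ?_⟩
  set C := ‖(x 0 + y 0) - zb‖^2 with hC
  set w := deriv (fun s => x s + y s) with hw
  have hwz : ∀ t : ℝ, 0 ≤ t → w t = x' t + y' t := fun t ht => (hzderiv t ht).deriv
  have hwsm : StronglyMeasurable w := stronglyMeasurable_deriv _
  have hwm : Measurable fun t => ‖w t‖^2 := hwsm.norm.measurable.pow_const 2
  have hcongr : ∫⁻ t in Set.Ioi (0:ℝ), ENNReal.ofReal (‖x' t + y' t‖^2)
      = ∫⁻ t in Set.Ioi (0:ℝ), ENNReal.ofReal (‖w t‖^2) := by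
    apply setLIntegral_congr_fun measurableSet_Ioi
    exact fun t ht => by rw [hwz t (le_of_lt ht)]
  have hunion : Set.Ioi (0:ℝ) = ⋃ n : ℕ, Set.Ioc (0:ℝ) (n:ℝ) := by
    ext t
    simp only [Set.mem_Ioi, Set.mem_iUnion, Set.mem_Ioc]
    constructor
    · intro ht; obtain ⟨n, hn⟩ := exists_nat_ge t; exact ⟨n, ht, hn⟩
    · rintro ⟨n, h1, -⟩; exact h1
  have hdir : Directed (· ⊆ ·) (fun n : ℕ => Set.Ioc (0:ℝ) (n:ℝ)) := by
    apply Monotone.directed_le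
    intro i j hij
    exact Set.Ioc_subset_Ioc_right (Nat.cast_le.2 hij)
  rw [hcongr, hunion, setLIntegral_iUnion_of_directed _ hdir]
  apply iSup_le
  intro n
  have hn0 : (0:ℝ) ≤ (n:ℝ) := Nat.cast_nonneg n
  have main : ∀ M : ℕ, ∫⁻ t in Set.Ioc (0:ℝ) (n:ℝ), ENNReal.ofReal (min (‖w t‖^2) (M:ℝ))
      ≤ ENNReal.ofReal ((1/2) * C) := by
    intro M
    set fM : ℝ → ℝ := fun t => min (‖w t‖^2) (M:ℝ) with hfM
    have hfMm : Measurable fM := hwm.min measurable_const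
    have hfMnn : ∀ t, 0 ≤ fM t := fun t => le_min (sq_nonneg _) (Nat.cast_nonneg M)
    have hintIcc : IntegrableOn fM (Set.Icc (0:ℝ) (n:ℝ)) := by
      apply Measure.integrableOn_of_bounded (M := (M:ℝ)) measure_Icc_lt_top.ne
        hfMm.aestronglyMeasurable
      exact ae_of_all _ fun a => by
        rw [Real.norm_of_nonneg (hfMnn a)]; exact min_le_right _ _
    have hint : IntegrableOn fM (Set.Ioc (0:ℝ) (n:ℝ)) :=
      hintIcc.mono_set Set.Ioc_subset_Icc_self
    have hG : ∀ t ∈ Set.Ioo (0:ℝ) (n:ℝ), HasDerivWithinAt (fun s => -‖(x s + y s) - zb‖^2)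
        ((fun t => -(2 * ⟪x' t + y' t, (x t + y t) - zb⟫)) t) (Set.Ioi t) t :=
      fun t ht => ((hphi t ht.1.le).neg).hasDerivWithinAt
    have hGcont : ContinuousOn (fun s => -‖(x s + y s) - zb‖^2) (Set.Icc (0:ℝ) (n:ℝ)) :=
      (hcont.mono (Set.Icc_subset_Ici_self)).neg
    have hle : ∀ t ∈ Set.Ioo (0:ℝ) (n:ℝ),
        (2:ℝ) * fM t ≤ (fun t => -(2 * ⟪x' t + y' t, (x t + y t) - zb⟫)) t := by
      intro t ht
      have hk := key t ht.1.le
      have h1 : fM t ≤ ‖w t‖^2 := min_le_left _ _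
      rw [hwz t ht.1.le] at h1
      simp only
      linarith
    have hIcc2 : IntegrableOn (fun t => 2 * fM t) (Set.Icc (0:ℝ) (n:ℝ)) :=
      hintIcc.const_mul 2
    have hintineq := intervalIntegral.integral_le_sub_of_hasDeriv_right_of_le hn0 hGcont hG hIcc2 hle
    rw [intervalIntegral.integral_of_le hn0] at hintineq
    have hnn2 : (0:ℝ) ≤ ‖(x n + y n) - zb‖^2 := sq_nonneg _
    have h1 : (∫ t in Set.Ioc (0:ℝ) (n:ℝ), 2 * fM t) ≤ C := by
      simp only [hC]; linarith
    have h2 : (∫ t in Set.Ioc (0:ℝ) (n:ℝ), fM t) ≤ (1/2) * C := by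
      rw [MeasureTheory.integral_const_mul] at h1
      linarith
    calc ∫⁻ t in Set.Ioc (0:ℝ) (n:ℝ), ENNReal.ofReal (fM t)
        = ENNReal.ofReal (∫ t in Set.Ioc (0:ℝ) (n:ℝ), fM t) :=
          (ofReal_integral_eq_lintegral_ofReal hint (ae_of_all _ hfMnn)).symm
      _ ≤ ENNReal.ofReal ((1/2) * C) := ENNReal.ofReal_le_ofReal h2
  have hsup : ∫⁻ t in Set.Ioc (0:ℝ) (n:ℝ), ENNReal.ofReal (‖w t‖^2)
      = ⨆ M : ℕ, ∫⁻ t in Set.Ioc (0:ℝ) (n:ℝ), ENNReal.ofReal (min (‖w t‖^2) (M:ℝ)) := by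
    rw [← lintegral_iSup]
    · apply lintegral_congr
      intro t
      apply le_antisymm
      · obtain ⟨M, hM⟩ := exists_nat_ge (‖w t‖^2)
        exact le_iSup_of_le M (by rw [min_eq_left hM])
      · exact iSup_le fun M => ENNReal.ofReal_le_ofReal (min_le_left _ _)
    · exact fun M => (hwm.min measurable_const).ennreal_ofReal
    · exact fun i j hij t =>
        ENNReal.ofReal_le_ofReal (min_le_min le_rfl (Nat.cast_le.2 hij))
  rw [hsup]
  exact iSup_le main
end

section
/- Let H be a real Hilbert space, let A and B be maximally monotone set-valued operators on H with zer(A+B) ≠ ∅ (i.e. there exist x*, u* with u* ∈ A(x*) and −u* ∈ B(x*)), let λ > 0, and let J denote the resolvent of λA. Suppose x, y : [0,∞) → H are differentiable trajectories satisfying, for all t ≥ 0, y(t) ∈ λB(x(t)) and x'(t) + x(t) = J(x(t) − y(t)) − y'(t). Then, with z(t) = x(t) + y(t), the derivative z'(t) converges strongly to 0 as t → +∞. -/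
open scoped RealInnerProductSpace
open Filter Topology

section Aux

variable {H : Type*} [NormedAddCommGroup H] [InnerProductSpace ℝ H]

lemma smulOp_monotone {A : Set (H × H)} (hA : IsMonotoneOp A) {c : ℝ} (hc : 0 ≤ c) :
    IsMonotoneOp (smulOp c A) := by
  rintro _ ⟨p, hp, rfl⟩ _ ⟨q, hq, rfl⟩
  simp only
  rw [← smul_sub, real_inner_smul_left]
  exact mul_nonneg hc (hA p hp q hq)

/-- Firm (cocoercive) inequality of the Douglas–Rachford operator, from
monotonicity of `A` and `B`. -/
lemma key_ineq {A B : Set (H × H)} (hA : IsMonotoneOp A) (hB : IsMonotoneOp B)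
    {x₁ y₁ u₁ x₂ y₂ u₂ : H}
    (h1 : (u₁, x₁ - y₁ - u₁) ∈ A) (h2 : (u₂, x₂ - y₂ - u₂) ∈ A)
    (h3 : (x₁, y₁) ∈ B) (h4 : (x₂, y₂) ∈ B) :
    ⟪(u₁ - x₁) - (u₂ - x₂), (x₁ + y₁) - (x₂ + y₂)⟫ ≤ -‖(u₁ - x₁) - (u₂ - x₂)‖^2 := by
  have hA' := hA _ h1 _ h2
  have hB' := hB _ h3 _ h4
  simp only at hA' hB'
  rw [← real_inner_self_eq_norm_sq]
  simp only [inner_sub_left, inner_sub_right, inner_add_left, inner_add_right] at hA' hB' ⊢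
  linarith [real_inner_comm x₁ y₁, real_inner_comm x₁ u₁, real_inner_comm x₁ x₂,
    real_inner_comm x₁ y₂, real_inner_comm x₁ u₂, real_inner_comm y₁ u₁,
    real_inner_comm y₁ x₂, real_inner_comm y₁ y₂, real_inner_comm y₁ u₂,
    real_inner_comm u₁ x₂, real_inner_comm u₁ y₂, real_inner_comm u₁ u₂,
    real_inner_comm x₂ y₂, real_inner_comm x₂ u₂, real_inner_comm y₂ u₂]

/-- The one-sided difference quotient of norms converges to the norm of the derivative. -/
lemma norm_slope_tendsto {f : ℝ → H} {f' : H} {t : ℝ} (hf : HasDerivAt f f' t) :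
    Tendsto (fun h : ℝ => ‖f (t + h) - f t‖ / h) (𝓝[>] (0:ℝ)) (𝓝 ‖f'‖) := by
  have h1 := hasDerivAt_iff_tendsto_slope.mp hf
  have h2 : Tendsto (fun h : ℝ => t + h) (𝓝[>] (0:ℝ)) (𝓝[≠] t) := by
    apply tendsto_nhdsWithin_of_tendsto_nhds_of_eventually_within
    · have : Tendsto (fun h : ℝ => t + h) (𝓝 (0:ℝ)) (𝓝 (t + 0)) :=
        (continuous_const.add continuous_id).tendsto 0
      simpa using this.mono_left nhdsWithin_le_nhds
    · filter_upwards [self_mem_nhdsWithin] with h hh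
      exact ne_of_gt (lt_add_of_pos_right t hh)
  have h3 := ((h1.comp h2).norm)
  refine h3.congr' ?_
  filter_upwards [self_mem_nhdsWithin] with h hh
  show ‖slope f t (t + h)‖ = ‖f (t + h) - f t‖ / h
  rw [slope_def_module, norm_smul]
  simp [abs_of_pos (show (0:ℝ) < h from hh), div_eq_inv_mul]

/-- Derivative of the squared distance between two differentiable curves. -/
lemma sq_dist_deriv {f g : ℝ → H} {f' g' : H} {t : ℝ} (hf : HasDerivAt f f' t)
    (hg : HasDerivAt g g' t) :
    HasDerivAt (fun τ => ‖f τ - g τ‖^2) (2 * ⟪f' - g', f t - g t⟫) t := by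
  have hd : HasDerivAt (fun τ => f τ - g τ) (f' - g') t := hf.sub hg
  have := hd.inner ℝ hd
  have h2 : (fun τ => (⟪f τ - g τ, f τ - g τ⟫ : ℝ)) = fun τ => ‖f τ - g τ‖^2 := by
    funext τ; exact real_inner_self_eq_norm_sq _
  rw [h2] at this
  exact this.congr_deriv (by rw [real_inner_comm]; ring)

end Aux

/-- Along the trajectory of `ẋ(t) + x(t) = J_{λA}(x(t) − y(t)) − ẏ(t)`,
`y(t) ∈ λB(x(t))`, with `zer(A+B) ≠ ∅`, the derivative `ż(t) = ẋ(t) + ẏ(t)` of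
`z(t) = x(t) + y(t)` converges strongly to `0` as `t → +∞`. -/
theorem statement6
    {H : Type*} [NormedAddCommGroup H] [InnerProductSpace ℝ H] [CompleteSpace H]
    (A B : Set (H × H)) (hA : IsMaximalMonotoneOp A) (hB : IsMaximalMonotoneOp B)
    (hzer : ∃ xs us : H, (xs, us) ∈ A ∧ (xs, -us) ∈ B)
    (lam : ℝ) (hlam : 0 < lam)
    (J : H → H) (hJ : ∀ w : H, (J w, w - J w) ∈ smulOp lam A)
    (x y x' y' : ℝ → H)
    (hx : ∀ t : ℝ, 0 ≤ t → HasDerivAt x (x' t) t)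
    (hy : ∀ t : ℝ, 0 ≤ t → HasDerivAt y (y' t) t)
    (hyB : ∀ t : ℝ, 0 ≤ t → (x t, y t) ∈ smulOp lam B)
    (hode : ∀ t : ℝ, 0 ≤ t → x' t + x t = J (x t - y t) - y' t) :
    Tendsto (fun t : ℝ => x' t + y' t) atTop (nhds 0) := by
  obtain ⟨xs, us, hxsA, hxsB⟩ := hzer
  have hAm := smulOp_monotone hA.1 hlam.le
  have hBm := smulOp_monotone hB.1 hlam.le
  set u : ℝ → H := fun t => J (x t - y t) with hu
  set z : ℝ → H := fun t => x t + y t with hzdef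
  set zd : ℝ → H := fun t => x' t + y' t with hzddef
  set ys : H := -(lam • us) with hysdef
  set zs : H := xs + ys with hzsdef
  -- trajectory memberships
  have memA : ∀ t : ℝ, (u t, x t - y t - u t) ∈ smulOp lam A := fun t => hJ (x t - y t)
  have memAs : (xs, xs - ys - xs) ∈ smulOp lam A := by
    have h : xs - ys - xs = lam • us := by rw [hysdef]; abel
    rw [h]; exact ⟨(xs, us), hxsA, rfl⟩
  have memBs : (xs, ys) ∈ smulOp lam B := ⟨(xs, -us), hxsB, by simp [hysdef]⟩
  -- `ż = u - x` along the trajectory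
  have hz' : ∀ t : ℝ, 0 ≤ t → zd t = u t - x t := by
    intro t ht
    have h := hode t ht
    calc zd t = (x' t + x t) - x t + y' t := by rw [hzddef]; abel
    _ = (u t - y' t) - x t + y' t := by rw [h]
    _ = u t - x t := by abel
  -- cocoercive inequality between two times
  have key : ∀ t s : ℝ, 0 ≤ t → 0 ≤ s →
      ⟪zd t - zd s, z t - z s⟫ ≤ -‖zd t - zd s‖^2 := by
    intro t s ht hs
    rw [hz' t ht, hz' s hs]
    exact key_ineq hAm hBm (memA t) (memA s) (hyB t ht) (hyB s hs)
  -- cocoercive inequality against the stationary point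
  have keyS : ∀ t : ℝ, 0 ≤ t → ⟪zd t, z t - zs⟫ ≤ -‖zd t‖^2 := by
    intro t ht
    have h := key_ineq hAm hBm (memA t) memAs (hyB t ht) memBs
    rw [sub_self, sub_zero] at h
    rw [hz' t ht]
    exact h
  have hzd : ∀ t : ℝ, 0 ≤ t → HasDerivAt z (zd t) t := fun t ht => (hx t ht).add (hy t ht)
  -- Step A : ‖zd‖ is nonincreasing on [0, ∞)
  have normA : ∀ s t : ℝ, 0 ≤ s → s ≤ t → ‖zd t‖ ≤ ‖zd s‖ := by
    intro s t hs hst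
    have ht : 0 ≤ t := hs.trans hst
    have step : ∀ h : ℝ, 0 < h → ‖z (t + h) - z t‖ ≤ ‖z (s + h) - z s‖ := by
      intro h hh
      set δ : ℝ → ℝ := fun τ => ‖z (τ + h) - z τ‖^2 with hδdef
      have hδ : ∀ τ : ℝ, 0 ≤ τ →
          HasDerivAt δ (2 * ⟪zd (τ + h) - zd τ, z (τ + h) - z τ⟫) τ := by
        intro τ hτ
        have h1 : HasDerivAt (fun σ => z (σ + h)) (zd (τ + h)) τ := by
          have h0 : HasDerivAt (fun σ : ℝ => σ + h) 1 τ := by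
            simpa using (hasDerivAt_id τ).add_const h
          have h2 : HasDerivAt z (zd (τ + h)) (τ + h) := hzd (τ + h) (by linarith)
          have := HasDerivAt.scomp τ h2 h0
          exact this.congr_deriv (one_smul ℝ _)
        exact sq_dist_deriv h1 (hzd τ hτ)
      have anti : AntitoneOn δ (Set.Icc s t) := by
        apply antitoneOn_of_deriv_nonpos (convex_Icc s t)
        · intro τ hτ
          exact ((hδ τ (hs.trans hτ.1)).continuousAt).continuousWithinAt
        · intro τ hτ
          rw [interior_Icc] at hτ
          exact ((hδ τ (hs.trans hτ.1.le)).differentiableAt).differentiableWithinAt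
        · intro τ hτ
          rw [interior_Icc] at hτ
          have hτ0 : 0 ≤ τ := hs.trans hτ.1.le
          rw [(hδ τ hτ0).deriv]
          have := key (τ + h) τ (by linarith) hτ0
          nlinarith [norm_nonneg (zd (τ + h) - zd τ), sq_nonneg ‖zd (τ + h) - zd τ‖]
      have hδle : δ t ≤ δ s := anti ⟨le_refl s, hst⟩ ⟨hst, le_refl t⟩ hst
      have h1 : ‖z (t + h) - z t‖^2 ≤ ‖z (s + h) - z s‖^2 := hδle
      nlinarith [norm_nonneg (z (t + h) - z t), norm_nonneg (z (s + h) - z s)]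
    have limT := norm_slope_tendsto (hzd t ht)
    have limS := norm_slope_tendsto (hzd s hs)
    refine le_of_tendsto_of_tendsto limT limS ?_
    filter_upwards [self_mem_nhdsWithin] with h hh
    have hh' : (0:ℝ) < h := hh
    gcongr
    exact step h hh'
  -- Step B : quantitative decay  2 t ‖zd t‖² ≤ ‖z 0 - zs‖²
  have stepB : ∀ t : ℝ, 0 < t → 2 * t * ‖zd t‖^2 ≤ ‖z 0 - zs‖^2 := by
    intro t ht
    set c : ℝ := ‖zd t‖^2 with hcdef
    set φ : ℝ → ℝ := fun τ => ‖z τ - zs‖^2 + 2 * c * τ with hφdef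
    have hφ : ∀ τ : ℝ, 0 ≤ τ →
        HasDerivAt φ (2 * ⟪zd τ, z τ - zs⟫ + 2 * c) τ := by
      intro τ hτ
      have h1 : HasDerivAt (fun σ : ℝ => ‖z σ - zs‖^2) (2 * ⟪zd τ - 0, z τ - zs⟫) τ :=
        sq_dist_deriv (hzd τ hτ) (hasDerivAt_const τ zs)
      rw [sub_zero] at h1
      exact (h1.add (((hasDerivAt_id τ).const_mul (2 * c)))).congr_deriv (by simp)
    have anti : AntitoneOn φ (Set.Icc 0 t) := by
      apply antitoneOn_of_deriv_nonpos (convex_Icc 0 t)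
      · intro τ hτ
        exact ((hφ τ hτ.1).continuousAt).continuousWithinAt
      · intro τ hτ
        rw [interior_Icc] at hτ
        exact ((hφ τ hτ.1.le).differentiableAt).differentiableWithinAt
      · intro τ hτ
        rw [interior_Icc] at hτ
        rw [(hφ τ hτ.1.le).deriv]
        have h1 := keyS τ hτ.1.le
        have h2 : ‖zd t‖ ≤ ‖zd τ‖ := normA τ t hτ.1.le hτ.2.le
        nlinarith [norm_nonneg (zd t), norm_nonneg (zd τ)]
    have hφle : φ t ≤ φ 0 := anti ⟨le_refl 0, ht.le⟩ ⟨ht.le, le_refl t⟩ ht.le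
    have h0 : ‖z t - zs‖^2 + 2 * c * t ≤ ‖z 0 - zs‖^2 + 2 * c * 0 := hφle
    nlinarith [sq_nonneg ‖z t - zs‖]
  -- conclusion
  rw [tendsto_zero_iff_norm_tendsto_zero]
  have hC : Tendsto (fun t : ℝ => Real.sqrt (‖z 0 - zs‖^2 / (2 * t))) atTop (𝓝 0) := by
    have h1 : Tendsto (fun t : ℝ => ‖z 0 - zs‖^2 / (2 * t)) atTop (𝓝 0) :=
      Tendsto.div_atTop tendsto_const_nhds
        (Tendsto.const_mul_atTop (by norm_num) tendsto_id)
    have h2 := (Real.continuous_sqrt.tendsto 0).comp h1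
    rw [Real.sqrt_zero] at h2
    simpa only [Function.comp_def] using h2
  refine squeeze_zero' ?_ ?_ hC
  · filter_upwards with t using norm_nonneg _
  · filter_upwards [eventually_gt_atTop (0:ℝ)] with t ht
    rw [Real.le_sqrt (norm_nonneg _) (by positivity), le_div_iff₀ (by positivity)]
    nlinarith [stepB t ht]
end

section
/- Let H be a real Hilbert space, let λ > 0, let B : H → H be a monotone single-valued map, and let J_B : H → H satisfy J_B(w) + λB(J_B(w)) = w for all w ∈ H (i.e. J_B is the resolvent of λB). Let J_A : H → H be any map. Suppose a sequence (x_k) in H satisfies the implicit recursion x_{k+1} = J_A(x_k − λB(x_k)) − λ(B(x_{k+1}) − B(x_k)) for all k, and define z_k = x_k + λB(x_k). Then for all k, z_{k+1} = z_k + J_A(2 J_B(z_k) − z_k) − J_B(z_k); that is, (z_k) follows the classical Douglas–Rachford iteration. -/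
open scoped RealInnerProductSpace

/-!
Monotonicity of `B` makes `I + λB` injective, so the resolvent `J_B` is also a left inverse of
`I + λB`: `J_B(z_k) = x_k`. Then `2 J_B(z_k) - z_k = x_k - λB(x_k)`, and the implicit recursion,
rearranged, reads `x_{k+1} + λB(x_{k+1}) = x_k + λB(x_k) + J_A(x_k - λB(x_k)) - x_k`.
-/

theorem injective_add_smul_of_monotone {H : Type*} [NormedAddCommGroup H] [InnerProductSpace ℝ H]
    {B : H → H} (hB : ∀ u v : H, 0 ≤ ⟪B u - B v, u - v⟫) {lam : ℝ} (hlam : 0 ≤ lam) :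
    Function.Injective fun u => u + lam • B u := by
  intro u v huv
  have hdiff : u - v = -(lam • (B u - B v)) := by
    simp only at huv
    rw [smul_sub]
    linear_combination (norm := module) huv
  have hnonpos : ⟪u - v, u - v⟫ ≤ 0 :=
    calc ⟪u - v, u - v⟫ = -(lam * ⟪B u - B v, u - v⟫) := by
          nth_rewrite 1 [hdiff]
          rw [inner_neg_left, real_inner_smul_left]
      _ ≤ 0 := neg_nonpos.mpr (mul_nonneg hlam (hB u v))
  exact sub_eq_zero.mp (real_inner_self_nonpos.mp hnonpos)

theorem statement7_general
    {H : Type*} [NormedAddCommGroup H] [InnerProductSpace ℝ H]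
    (lam : ℝ) (hlam : 0 < lam)
    (B : H → H) (hB : ∀ u v : H, (0 : ℝ) ≤ ⟪B u - B v, u - v⟫)
    (JB : H → H) (hJB : ∀ w : H, JB w + lam • B (JB w) = w)
    (JA : H → H)
    (x : ℕ → H)
    (hrec : ∀ k : ℕ,
      x (k + 1) = JA (x k - lam • B (x k)) - lam • (B (x (k + 1)) - B (x k)))
    (z : ℕ → H) (hz : ∀ k : ℕ, z k = x k + lam • B (x k)) :
    ∀ k : ℕ, z (k + 1) = z k + JA ((2 : ℝ) • JB (z k) - z k) - JB (z k) := by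
  have hJB_left : Function.LeftInverse JB fun u => u + lam • B u :=
    Function.LeftInverse.rightInverse_of_injective hJB
      (injective_add_smul_of_monotone hB hlam.le)
  intro k
  have hJBz : JB (z k) = x k := by rw [hz k]; exact hJB_left (x k)
  have harg : (2 : ℝ) • JB (z k) - z k = x k - lam • B (x k) := by
    rw [hJBz, hz k]; module
  rw [harg, hJBz, hz (k + 1), hz k]
  linear_combination (norm := module) hrec k

/-- The implicit recursion `x_{k+1} = J_A(x_k − λB(x_k)) − λ(B(x_{k+1}) − B(x_k))`,
rewritten in terms of `z_k = x_k + λB(x_k)`, is exactly the classical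
Douglas–Rachford iteration `z_{k+1} = z_k + J_A(2J_B(z_k) − z_k) − J_B(z_k)`. -/
theorem statement7
    {H : Type*} [NormedAddCommGroup H] [InnerProductSpace ℝ H] [CompleteSpace H]
    (lam : ℝ) (hlam : 0 < lam)
    (B : H → H) (hB : ∀ u v : H, (0 : ℝ) ≤ ⟪B u - B v, u - v⟫)
    (JB : H → H) (hJB : ∀ w : H, JB w + lam • B (JB w) = w)
    (JA : H → H)
    (x : ℕ → H)
    (hrec : ∀ k : ℕ,
      x (k + 1) = JA (x k - lam • B (x k)) - lam • (B (x (k + 1)) - B (x k)))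
    (z : ℕ → H) (hz : ∀ k : ℕ, z k = x k + lam • B (x k)) :
    ∀ k : ℕ, z (k + 1) = z k + JA ((2 : ℝ) • JB (z k) - z k) - JB (z k) :=
  statement7_general lam hlam B hB JB hJB JA x hrec z hz
end

section
/- Let H be a real Hilbert space, let A be a maximally monotone set-valued operator on H, let B : H → H be monotone and single-valued, let λ > 0, and let J denote the resolvent of λA. Let x_0, x_{−1} ∈ H and define x_{k+1} = J(x_k − λB(x_k)) − λ(B(x_k) − B(x_{k−1})) for k ≥ 0, and set y_k = λB(x_k). Then for every x ∈ H with −B(x) ∈ A(x), setting y = λB(x), the following holds for all k ≥ 0: ‖(x_{k+1} + y_k) − (x + y)‖² ≤ ‖(x_k + y_{k−1}) − (x + y)‖² + 4⟪y_k − y_{k−1}, x_k − x_{k+1}⟫ − ‖x_{k+1} − x_k‖² − 3‖y_k − y_{k−1}‖². -/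
/-!
With `w = x_k - λB(x_k)` the recursion says `J(w) = x_{k+1} + y_k - y_{k-1}`. Monotonicity of `λA`
at the pairs `(J(w), w - J(w))` and `(p, -y)` gives `0 ≤ ⟪w - J(w) + y, J(w) - p⟫`, monotonicity
of `B` gives `0 ≤ ⟪y_k - y, x_k - p⟫`, and the estimate is twice the sum of these two inequalities,
rewritten by expanding all squared norms.
-/

open scoped RealInnerProductSpace

section

variable {H : Type*} [NormedAddCommGroup H] [InnerProductSpace ℝ H]

theorem IsMonotoneOp.inner_resolvent_nonneg {A : Set (H × H)} (hA : IsMonotoneOp A)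
    {lam : ℝ} (hlam : 0 ≤ lam) {J : H → H} (hJ : ∀ w : H, (J w, w - J w) ∈ smulOp lam A)
    {p u : H} (hp : (p, u) ∈ A) (w : H) :
    0 ≤ ⟪w - J w - lam • u, J w - p⟫ := by
  obtain ⟨q, hqA, hq⟩ := hJ w
  obtain ⟨hq₁, hq₂⟩ : q.1 = J w ∧ lam • q.2 = w - J w := Prod.ext_iff.mp hq
  have hmono : 0 ≤ lam * ⟪q.2 - u, q.1 - p⟫ := mul_nonneg hlam (hA q hqA (p, u) hp)
  rwa [← real_inner_smul_left, smul_sub, hq₁, hq₂] at hmono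

theorem norm_add_sub_sq_le_of_inner_nonneg {x₀ x₁ y₀ y₁ p y : H}
    (hres : 0 ≤ ⟪x₀ - y₁ - (x₁ + (y₁ - y₀)) + y, x₁ + (y₁ - y₀) - p⟫)
    (hmono : 0 ≤ ⟪y₁ - y, x₀ - p⟫) :
    ‖(x₁ + y₁) - (p + y)‖ ^ 2 ≤
      ‖(x₀ + y₀) - (p + y)‖ ^ 2 + 4 * ⟪y₁ - y₀, x₀ - x₁⟫ - ‖x₁ - x₀‖ ^ 2
        - 3 * ‖y₁ - y₀‖ ^ 2 := by
  simp only [← real_inner_self_eq_norm_sq]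
  simp only [inner_sub_left, inner_sub_right, inner_add_left, inner_add_right] at hres hmono ⊢
  simp only [real_inner_comm] at hres hmono ⊢
  linear_combination 2 * hres + 2 * hmono

end

theorem statement8_general
    {H : Type*} [NormedAddCommGroup H] [InnerProductSpace ℝ H]
    (A : Set (H × H)) (hA : IsMaximalMonotoneOp A)
    (B : H → H) (hBmono : ∀ u v : H, (0 : ℝ) ≤ ⟪B u - B v, u - v⟫)
    (lam : ℝ) (hlam : 0 < lam)
    (J : H → H) (hJ : ∀ w : H, (J w, w - J w) ∈ smulOp lam A)
    (x : ℤ → H)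
    (hrec : ∀ k : ℤ, 0 ≤ k →
      x (k + 1) = J (x k - lam • B (x k)) - lam • (B (x k) - B (x (k - 1))))
    (p : H) (hp : (p, -B p) ∈ A)
    (k : ℤ) (hk : 0 ≤ k) :
    ‖(x (k + 1) + lam • B (x k)) - (p + lam • B p)‖ ^ 2 ≤
      ‖(x k + lam • B (x (k - 1))) - (p + lam • B p)‖ ^ 2
        + 4 * ⟪lam • B (x k) - lam • B (x (k - 1)), x k - x (k + 1)⟫
        - ‖x (k + 1) - x k‖ ^ 2
        - 3 * ‖lam • B (x k) - lam • B (x (k - 1))‖ ^ 2 := by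
  have hJx : J (x k - lam • B (x k)) = x (k + 1) + (lam • B (x k) - lam • B (x (k - 1))) := by
    rw [hrec k hk, smul_sub]
    abel
  have hres := hA.1.inner_resolvent_nonneg hlam.le hJ hp (x k - lam • B (x k))
  rw [hJx, smul_neg, sub_neg_eq_add] at hres
  have hmono : 0 ≤ ⟪lam • B (x k) - lam • B p, x k - p⟫ := by
    rw [← smul_sub, real_inner_smul_left]
    exact mul_nonneg hlam.le (hBmono _ _)
  exact norm_add_sub_sq_le_of_inner_nonneg hres hmono

/-- Inequality (24) of the paper: the one-step estimate for the shadow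
Douglas–Rachford iteration, after using monotonicity of `B` to drop the
inner-product term. Here `y_k = λB(x_k)`. -/
theorem statement8
    {H : Type*} [NormedAddCommGroup H] [InnerProductSpace ℝ H] [CompleteSpace H]
    (A : Set (H × H)) (hA : IsMaximalMonotoneOp A)
    (B : H → H) (hBmono : ∀ u v : H, (0 : ℝ) ≤ ⟪B u - B v, u - v⟫)
    (lam : ℝ) (hlam : 0 < lam)
    (J : H → H) (hJ : ∀ w : H, (J w, w - J w) ∈ smulOp lam A)
    (x : ℤ → H)
    (hrec : ∀ k : ℤ, 0 ≤ k →
      x (k + 1) = J (x k - lam • B (x k)) - lam • (B (x k) - B (x (k - 1))))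
    (p : H) (hp : (p, -B p) ∈ A)
    (k : ℤ) (hk : 0 ≤ k) :
    ‖(x (k + 1) + lam • B (x k)) - (p + lam • B p)‖ ^ 2 ≤
      ‖(x k + lam • B (x (k - 1))) - (p + lam • B p)‖ ^ 2
        + 4 * ⟪lam • B (x k) - lam • B (x (k - 1)), x k - x (k + 1)⟫
        - ‖x (k + 1) - x k‖ ^ 2
        - 3 * ‖lam • B (x k) - lam • B (x (k - 1))‖ ^ 2 :=
  statement8_general A hA B hBmono lam hlam J hJ x hrec p hp k hk
end

section
/- Let H be a real Hilbert space, let A be a maximally monotone set-valued operator on H, let B : H → H be monotone and L-Lipschitz with L > 0 and such that there exists x with −B(x) ∈ A(x). Let ε > 0 and λ ∈ [ε, (1 − 3ε)/(3L)], let J denote the resolvent of λA, let x_0, x_{−1} ∈ H, define x_{k+1} = J(x_k − λB(x_k)) − λ(B(x_k) − B(x_{k−1})) for k ≥ 0, and set y_k = λB(x_k), z_k = x_k + y_{k−1}, z = x + λB(x). THEN: for every k ≥ 1, ‖z_{k+1} − z‖² + (1/3)‖x_{k+1} − x_k‖² + ε · Σ_{i=1}^{k} ‖x_{i+1} − x_i‖²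 ≤ ‖z_1 − z‖² + (1/3)‖x_1 − x_0‖²; consequently Σ_{i=1}^{∞} ‖x_{i+1} − x_i‖² < ∞, the sequences (z_k) and (x_k) are bounded, and ‖x_{k+1} − x_k‖ → 0 and ‖B(x_{k+1}) − B(x_k)‖ → 0 as k → ∞. -/
open scoped RealInnerProductSpace
open Filter

private lemma key_identity' {H : Type*} [NormedAddCommGroup H] [InnerProductSpace ℝ H]
    (a c yk y1 yb p : H) :
    ‖(a + yk) - (p + yb)‖^2 + ‖a - c‖^2 + 4 * ⟪a - c, yk - y1⟫ + 3 * ‖yk - y1‖^2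
        + 2 * ⟪(c - yk - (a + yk - y1)) + yb, (a + yk - y1) - p⟫
        + 2 * ⟪yk - yb, c - p⟫
      = ‖(c + y1) - (p + yb)‖^2 := by
  simp only [← real_inner_self_eq_norm_sq, inner_sub_left, inner_sub_right,
    inner_add_left, inner_add_right, real_inner_comm]
  ring

private lemma scalar_ineq' (ε t a b s : ℝ) (hb : 0 ≤ b) (hs : 0 ≤ s)
    (ht : 0 ≤ t) (hsb : s ≤ t * b) (htε : t ≤ (1 - 3*ε)/3) (hε : 0 < ε) (hε3 : 3*ε < 1) :
    4 * a * s ≤ (2/3 - ε) * a^2 + 3 * s^2 + (1/3) * b^2 := by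
  have hs2 : s^2 ≤ ((1-3*ε)/3)^2 * b^2 := by
    nlinarith [mul_le_mul hsb hsb hs (mul_nonneg ht hb),
      mul_le_mul htε htε ht (by linarith : (0:ℝ) ≤ (1-3*ε)/3), sq_nonneg b]
  have hkey : (18+27*ε)*s^2 ≤ (2-3*ε)*b^2 := by
    nlinarith [hs2, mul_nonneg (mul_nonneg hε.le (by nlinarith : (0:ℝ) ≤ 2 - 9*ε^2)) (sq_nonneg b)]
  nlinarith [sq_nonneg ((2-3*ε)*a - 6*s), hkey, (show (0:ℝ) < 2-3*ε by linarith), sq_nonneg s]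

private lemma onestep' {H : Type*} [NormedAddCommGroup H] [InnerProductSpace ℝ H]
    (B : H → H) (p a c d : H) (lam L ε : ℝ)
    (hmonoBk : (0:ℝ) ≤ ⟪B c - B p, c - p⟫)
    (hBlip : ‖B c - B d‖ ≤ L * ‖c - d‖)
    (hε : 0 < ε) (hlam1 : ε ≤ lam) (hL : 0 < L) (hlam2 : lam ≤ (1 - 3*ε)/(3*L))
    (S1 : (0:ℝ) ≤ ⟪(c - lam • B c - (a + lam • B c - lam • B d)) + lam • B p,
        (a + lam • B c - lam • B d) - p⟫) :
    ‖(a + lam • B c) - (p + lam • B p)‖^2 + (1/3) * ‖a - c‖^2 + ε * ‖a - c‖^2 ≤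
      ‖(c + lam • B d) - (p + lam • B p)‖^2 + (1/3) * ‖c - d‖^2 := by
  have hlam0 : 0 < lam := hε.trans_le hlam1
  have h3L : 0 < 3*L := by linarith
  have h1 : lam * (3*L) ≤ 1 - 3*ε := (le_div_iff₀ h3L).mp hlam2
  have hε3 : 3*ε < 1 := by nlinarith
  have hτ : lam * L ≤ (1-3*ε)/3 := by linarith
  have hid := key_identity' a c (lam • B c) (lam • B d) (lam • B p) p
  have S2 : (0:ℝ) ≤ ⟪lam • B c - lam • B p, c - p⟫ := by
    rw [← smul_sub, real_inner_smul_left]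
    exact mul_nonneg hlam0.le hmonoBk
  have hip : -(‖a - c‖ * ‖lam • B c - lam • B d‖) ≤ ⟪a - c, lam • B c - lam • B d⟫ := by
    have h := abs_real_inner_le_norm (a - c) (lam • B c - lam • B d)
    have h2 := neg_abs_le ⟪a - c, lam • B c - lam • B d⟫
    linarith
  have hΔy : ‖lam • B c - lam • B d‖ ≤ (lam*L) * ‖c - d‖ := by
    rw [← smul_sub, norm_smul, Real.norm_eq_abs, abs_of_pos hlam0]
    calc lam * ‖B c - B d‖ ≤ lam * (L * ‖c - d‖) :=
          mul_le_mul_of_nonneg_left hBlip hlam0.le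
      _ = (lam*L) * ‖c - d‖ := by ring
  have hscal := scalar_ineq' ε (lam*L) ‖a - c‖ ‖c - d‖ ‖lam • B c - lam • B d‖
    (norm_nonneg _) (norm_nonneg _) (mul_nonneg hlam0.le hL.le) hΔy hτ hε hε3
  nlinarith [hid, S1, S2, hip, hscal]

/-- The telescoped Lyapunov estimate for the shadow Douglas–Rachford iteration and
its consequences: summability of `‖x_{i+1} − x_i‖²`, boundedness of `(x_k)` and
`(z_k)` (where `z_k = x_k + λB(x_{k−1})`), and `‖x_{k+1} − x_k‖ → 0`,
`‖B(x_{k+1}) − B(x_k)‖ → 0`. -/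
theorem statement10
    {H : Type*} [NormedAddCommGroup H] [InnerProductSpace ℝ H] [CompleteSpace H]
    (A : Set (H × H)) (hA : IsMaximalMonotoneOp A)
    (B : H → H) (hBmono : ∀ u v : H, (0 : ℝ) ≤ ⟪B u - B v, u - v⟫)
    (L : ℝ) (hL : 0 < L) (hBlip : ∀ u v : H, ‖B u - B v‖ ≤ L * ‖u - v‖)
    (p : H) (hp : (p, -B p) ∈ A)
    (ε lam : ℝ) (hε : 0 < ε) (hlam1 : ε ≤ lam) (hlam2 : lam ≤ (1 - 3 * ε) / (3 * L))
    (J : H → H) (hJ : ∀ w : H, (J w, w - J w) ∈ smulOp lam A)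
    (x : ℤ → H)
    (hrec : ∀ k : ℤ, 0 ≤ k →
      x (k + 1) = J (x k - lam • B (x k)) - lam • (B (x k) - B (x (k - 1)))) :
    (∀ k : ℤ, 1 ≤ k →
      ‖(x (k + 1) + lam • B (x k)) - (p + lam • B p)‖ ^ 2
          + (1 / 3) * ‖x (k + 1) - x k‖ ^ 2
          + ε * ∑ i ∈ Finset.Icc (1 : ℤ) k, ‖x (i + 1) - x i‖ ^ 2 ≤
        ‖(x 1 + lam • B (x 0)) - (p + lam • B p)‖ ^ 2
          + (1 / 3) * ‖x 1 - x 0‖ ^ 2) ∧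
    Summable (fun i : ℕ => ‖x ((i : ℤ) + 2) - x ((i : ℤ) + 1)‖ ^ 2) ∧
    (∃ M : ℝ, 0 < M ∧ ∀ k : ℤ, 0 ≤ k →
      ‖x k‖ ≤ M ∧ ‖x k + lam • B (x (k - 1))‖ ≤ M) ∧
    Tendsto (fun k : ℤ => ‖x (k + 1) - x k‖) atTop (nhds 0) ∧
    Tendsto (fun k : ℤ => ‖B (x (k + 1)) - B (x k)‖) atTop (nhds 0) := by
  have hlam0 : 0 < lam := hε.trans_le hlam1
  -- the one-step estimate
  have key : ∀ k : ℤ, 0 ≤ k →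
      ‖(x (k + 1) + lam • B (x k)) - (p + lam • B p)‖ ^ 2
          + (1/3) * ‖x (k + 1) - x k‖ ^ 2 + ε * ‖x (k + 1) - x k‖ ^ 2 ≤
        ‖(x k + lam • B (x (k - 1))) - (p + lam • B p)‖ ^ 2
          + (1/3) * ‖x k - x (k - 1)‖ ^ 2 := by
    intro k hk
    apply onestep' B p (x (k+1)) (x k) (x (k-1)) lam L ε (hBmono _ _) (hBlip _ _)
      hε hlam1 hL hlam2
    -- S1 from resolvent + recursion + monotonicity of A
    have hJw : J (x k - lam • B (x k)) = x (k+1) + lam • B (x k) - lam • B (x (k-1)) := by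
      rw [hrec k hk, smul_sub]; abel
    obtain ⟨q, hqA, hq⟩ := hJ (x k - lam • B (x k))
    have hq1 : q.1 = J (x k - lam • B (x k)) := congrArg Prod.fst hq
    have hq2 : lam • q.2 = (x k - lam • B (x k)) - J (x k - lam • B (x k)) :=
      congrArg Prod.snd hq
    have hmono := hA.1 q hqA (p, -B p) hp
    calc (0:ℝ) ≤ lam * ⟪q.2 - (p, -B p).2, q.1 - (p, -B p).1⟫ :=
          mul_nonneg hlam0.le hmono
      _ = ⟪lam • (q.2 - -B p), q.1 - p⟫ := (real_inner_smul_left _ _ _).symm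
      _ = ⟪(x k - lam • B (x k) - (x (k+1) + lam • B (x k) - lam • B (x (k-1))))
            + lam • B p,
          (x (k+1) + lam • B (x k) - lam • B (x (k-1))) - p⟫ := by
          rw [smul_sub, smul_neg, sub_neg_eq_add, hq2, hq1, hJw]
  -- the telescoped estimate
  have tele : ∀ k : ℤ, 1 ≤ k →
      ‖(x (k + 1) + lam • B (x k)) - (p + lam • B p)‖ ^ 2
          + (1 / 3) * ‖x (k + 1) - x k‖ ^ 2
          + ε * ∑ i ∈ Finset.Icc (1 : ℤ) k, ‖x (i + 1) - x i‖ ^ 2 ≤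
        ‖(x 1 + lam • B (x 0)) - (p + lam • B p)‖ ^ 2
          + (1 / 3) * ‖x 1 - x 0‖ ^ 2 := by
    intro k hk
    refine Int.le_induction (motive := fun k _ =>
      ‖(x (k + 1) + lam • B (x k)) - (p + lam • B p)‖ ^ 2
          + (1 / 3) * ‖x (k + 1) - x k‖ ^ 2
          + ε * ∑ i ∈ Finset.Icc (1 : ℤ) k, ‖x (i + 1) - x i‖ ^ 2 ≤
        ‖(x 1 + lam • B (x 0)) - (p + lam • B p)‖ ^ 2
          + (1 / 3) * ‖x 1 - x 0‖ ^ 2) ?_ (fun n hn ih => ?_) k hk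
    ·   beta_reduce
        have h := key 1 (by norm_num)
        rw [Finset.Icc_self, Finset.sum_singleton]
        norm_num at h ⊢
        linarith
    ·   beta_reduce
        have h := key (n+1) (by linarith)
        rw [show (n:ℤ)+1-1 = n by ring] at h
        have hins : Finset.Icc (1:ℤ) (n+1) = insert (n+1) (Finset.Icc 1 n) := by
          ext j
          simp only [Finset.mem_Icc, Finset.mem_insert]
          omega
        rw [hins, Finset.sum_insert (by simp)]
        linarith
  obtain ⟨C, hC⟩ : ∃ C : ℝ, ‖(x 1 + lam • B (x 0)) - (p + lam • B p)‖ ^ 2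
      + (1 / 3) * ‖x 1 - x 0‖ ^ 2 = C := ⟨_, rfl⟩
  rw [hC] at tele
  have hCnn : (0:ℝ) ≤ C := by rw [← hC]; positivity
  -- summability
  have hsum_eq : ∀ n : ℕ, ∑ i ∈ Finset.range n, ‖x ((i:ℤ) + 2) - x ((i:ℤ) + 1)‖ ^ 2
      = ∑ j ∈ Finset.Icc (1:ℤ) (n:ℤ), ‖x (j + 1) - x j‖ ^ 2 := by
    intro n
    induction n with
    | zero => simp
    | succ m ihm =>
        rw [Finset.sum_range_succ, ihm]
        push_cast
        have hins : Finset.Icc (1:ℤ) ((m:ℤ)+1) = insert ((m:ℤ)+1) (Finset.Icc 1 (m:ℤ)) := by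
          ext j; simp only [Finset.mem_Icc, Finset.mem_insert]; omega
        rw [hins, Finset.sum_insert (by simp), show (m:ℤ)+1+1 = (m:ℤ)+2 by ring]
        ring
  have hbound : ∀ n : ℕ,
      ∑ i ∈ Finset.range n, ‖x ((i:ℤ)+2) - x ((i:ℤ)+1)‖ ^ 2 ≤ C / ε := by
    intro n
    rcases Nat.eq_zero_or_pos n with h0 | hpos
    · subst h0; simpa using div_nonneg hCnn hε.le
    · have hn1 : (1:ℤ) ≤ (n:ℤ) := by exact_mod_cast hpos
      have ht := tele n hn1
      rw [hsum_eq, le_div_iff₀ hε]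
      have e1 : (0:ℝ) ≤ ‖(x ((n:ℤ) + 1) + lam • B (x (n:ℤ))) - (p + lam • B p)‖^2 := by positivity
      have e2 : (0:ℝ) ≤ ‖x ((n:ℤ) + 1) - x (n:ℤ)‖^2 := by positivity
      have e3 : ε * (∑ j ∈ Finset.Icc (1:ℤ) (n:ℤ), ‖x (j + 1) - x j‖ ^ 2) ≤ C := by
        linarith [ht, e1, e2]
      linarith [e3]
  have hsummable : Summable (fun i : ℕ => ‖x ((i:ℤ)+2) - x ((i:ℤ)+1)‖ ^ 2) :=
    summable_of_sum_range_le (fun i => by positivity) hbound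
  -- distance of z_k to z̄ for k ≥ 2
  have hzsq : ∀ k : ℤ, 2 ≤ k →
      ‖(x k + lam • B (x (k-1))) - (p + lam • B p)‖ ≤ Real.sqrt C := by
    intro k hk
    have ht := tele (k-1) (by linarith)
    rw [show k-1+1 = k by ring] at ht
    have hs : (0:ℝ) ≤ ∑ i ∈ Finset.Icc (1:ℤ) (k-1), ‖x (i+1) - x i‖ ^ 2 :=
      Finset.sum_nonneg (fun i _ => by positivity)
    refine (Real.le_sqrt (norm_nonneg _) hCnn).mpr ?_
    linarith [ht, hs, sq_nonneg ‖x k - x (k-1)‖, mul_nonneg hε.le hs]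
  have hD0 : (0:ℝ) ≤ Real.sqrt C := Real.sqrt_nonneg _
  obtain ⟨R, hR⟩ : ∃ R : ℝ, max (max ‖x 0 - p‖ ‖x 1 - p‖) ((3/2) * Real.sqrt C) = R :=
    ⟨_, rfl⟩
  have hmax1 : ‖x 0 - p‖ ≤ R := hR ▸ (le_max_left _ _).trans (le_max_left _ _)
  have hmax2 : ‖x 1 - p‖ ≤ R := hR ▸ (le_max_right _ _).trans (le_max_left _ _)
  have hmax3 : (3/2) * Real.sqrt C ≤ R := hR ▸ le_max_right _ _
  have hR0 : (0:ℝ) ≤ R := (norm_nonneg _).trans hmax1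
  have h3L : (0:ℝ) < 3*L := by linarith
  have h1L : lam * (3*L) ≤ 1 - 3*ε := (le_div_iff₀ h3L).mp hlam2
  have hτ : lam * L ≤ 1/3 := by nlinarith
  have hτ0 : (0:ℝ) ≤ lam * L := mul_nonneg hlam0.le hL.le
  have hsmul : ∀ u v : H, ‖lam • (B u - B v)‖ ≤ lam * L * ‖u - v‖ := by
    intro u v
    rw [norm_smul, Real.norm_eq_abs, abs_of_pos hlam0]
    calc lam * ‖B u - B v‖ ≤ lam * (L * ‖u - v‖) :=
          mul_le_mul_of_nonneg_left (hBlip _ _) hlam0.le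
      _ = lam * L * ‖u - v‖ := by ring
  have hxR : ∀ k : ℤ, 0 ≤ k → ‖x k - p‖ ≤ R := by
    intro k hk
    refine Int.le_induction (motive := fun k _ => ‖x k - p‖ ≤ R) ?_ (fun n hn ih => ?_) k hk
    · exact hmax1
    · beta_reduce
      rcases eq_or_lt_of_le hn with heq | hlt
      · rw [← heq]
        norm_num
        exact hmax2
      · have hz := hzsq (n+1) (by omega)
        rw [show (n:ℤ)+1-1 = n by ring] at hz
        have hdecomp : x (n+1) - p
            = ((x (n+1) + lam • B (x n)) - (p + lam • B p)) - lam • (B (x n) - B p) := by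
          rw [smul_sub]; abel
        have hnorm : ‖x (n+1) - p‖ ≤ Real.sqrt C + lam * L * ‖x n - p‖ := by
          rw [hdecomp]
          exact (norm_sub_le _ _).trans (add_le_add hz (hsmul _ _))
        have hDR : Real.sqrt C ≤ (2/3) * R := by linarith
        have hτR : lam * L * ‖x n - p‖ ≤ (1/3) * R := by
          have := mul_le_mul hτ ih (norm_nonneg _) (by norm_num : (0:ℝ) ≤ 1/3)
          linarith
        linarith
  -- boundedness
  have hM : ∃ M : ℝ, 0 < M ∧ ∀ k : ℤ, 0 ≤ k →
      ‖x k‖ ≤ M ∧ ‖x k + lam • B (x (k - 1))‖ ≤ M := by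
    refine ⟨1 + (‖p‖ + R) + (‖p + lam • B p‖ + 2*R) + ‖x 0 + lam • B (x (0-1))‖,
      by positivity, ?_⟩
    intro k hk
    have hxk : ‖x k‖ ≤ ‖p‖ + R := by
      have h1 : x k = (x k - p) + p := by abel
      calc ‖x k‖ = ‖(x k - p) + p‖ := by rw [← h1]
        _ ≤ ‖x k - p‖ + ‖p‖ := norm_add_le _ _
        _ ≤ ‖p‖ + R := by linarith [hxR k hk]
    constructor
    · have := norm_nonneg (x k + lam • B (x (k-1)))
      have := norm_nonneg (x 0 + lam • B (x (0-1)))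
      have := norm_nonneg (p + lam • B p)
      linarith
    · rcases eq_or_lt_of_le hk with heq | hlt
      · rw [← heq]
        have := norm_nonneg p
        have := norm_nonneg (p + lam • B p)
        have := norm_nonneg (x 0)
        linarith
      · have hk1 : (1:ℤ) ≤ k := hlt
        have hdecomp : x k + lam • B (x (k-1))
            = (p + lam • B p) + ((x k - p) + lam • (B (x (k-1)) - B p)) := by
          rw [smul_sub]; abel
        have hb : ‖x k + lam • B (x (k-1))‖
            ≤ ‖p + lam • B p‖ + (‖x k - p‖ + ‖lam • (B (x (k-1)) - B p)‖) := by
          rw [hdecomp]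
          exact (norm_add_le _ _).trans (add_le_add le_rfl (norm_add_le _ _))
        have h2 : ‖lam • (B (x (k-1)) - B p)‖ ≤ (1/3) * R := by
          refine (hsmul (x (k-1)) p).trans ?_
          have := mul_le_mul hτ (hxR (k-1) (by omega)) (norm_nonneg _)
            (by norm_num : (0:ℝ) ≤ 1/3)
          linarith
        have := norm_nonneg (x 0 + lam • B (x (0-1)))
        have := norm_nonneg p
        linarith [hxR k hk]
  -- tendsto
  have h0t : Tendsto (fun i : ℕ => ‖x ((i:ℤ)+2) - x ((i:ℤ)+1)‖ ^ 2) atTop (nhds 0) :=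
    hsummable.tendsto_atTop_zero
  have h1t : Tendsto (fun i : ℕ => ‖x ((i:ℤ)+2) - x ((i:ℤ)+1)‖) atTop (nhds 0) := by
    have hc := (Real.continuous_sqrt.tendsto 0).comp h0t
    rw [Real.sqrt_zero] at hc
    exact hc.congr (fun i => Real.sqrt_sq (norm_nonneg _))
  have hphi : Tendsto (fun k : ℤ => (k-1).toNat) atTop atTop := by
    apply tendsto_atTop_atTop.mpr
    intro b; exact ⟨(b:ℤ)+1, fun k hk => by omega⟩
  have hZt : Tendsto (fun k : ℤ => ‖x (k+1) - x k‖) atTop (nhds 0) := by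
    refine Filter.Tendsto.congr' ?_ (h1t.comp hphi)
    filter_upwards [eventually_ge_atTop (1:ℤ)] with k hk
    have hco : (((k-1).toNat : ℤ)) = k - 1 := Int.toNat_of_nonneg (by omega)
    simp only [Function.comp]
    rw [hco, show k-1+2 = k+1 by ring, show k-1+1 = k by ring]
  have hBt : Tendsto (fun k : ℤ => ‖B (x (k + 1)) - B (x k)‖) atTop (nhds 0) := by
    have hg := hZt.const_mul L
    rw [mul_zero] at hg
    exact squeeze_zero (fun k => norm_nonneg _) (fun k => hBlip _ _) hg
  refine ⟨fun k hk => ?_, hsummable, hM, hZt, hBt⟩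
  rw [hC]
  exact tele k hk
end

section
/- Let H be a real Hilbert space, let A be a maximally monotone set-valued operator on H, let B : H → H be monotone and L-Lipschitz, let λ > 0, and let J denote the resolvent of λA. Suppose (x_k) satisfies x_{k+1} = J(x_k − λB(x_k)) − λ(B(x_k) − B(x_{k−1})) for all k, and set z_k = x_k + λB(x_{k−1}). Suppose in addition that ‖x_{k+1} − x_k‖ → 0, and that along a strictly increasing sequence of indices (k_j), x_{k_j} converges weakly to some x and z_{k_j} converges weakly to some z. Then −B(x) ∈ A(x) (i.e. x is a zero of A + B) and z = x + λB(x). -/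
open scoped RealInnerProductSpace
open Filter

section Aux

variable {H : Type*} [NormedAddCommGroup H] [InnerProductSpace ℝ H]

/-- Existence of the resolvent of `μA`. -/
def HasResolvent (μ : ℝ) (A : Set (H × H)) : Prop :=
  ∃ J : H → H, ∀ w : H, (J w, w - J w) ∈ smulOp μ A

lemma smulOp_elim {c : ℝ} {A : Set (H × H)} {a b : H} (h : (a, b) ∈ smulOp c A) :
    ∃ p : H × H, p ∈ A ∧ p.1 = a ∧ c • p.2 = b := by
  obtain ⟨p, hp, heq⟩ := h
  exact ⟨p, hp, congrArg Prod.fst heq, congrArg Prod.snd heq⟩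

lemma resolvent_nonexpansive {A : Set (H × H)} (hA : IsMonotoneOp A)
    {μ : ℝ} (hμ : 0 < μ) {J : H → H}
    (hJ : ∀ w : H, (J w, w - J w) ∈ smulOp μ A) (w₁ w₂ : H) :
    ‖J w₁ - J w₂‖ ≤ ‖w₁ - w₂‖ := by
  obtain ⟨p₁, hp₁A, hp₁1, hp₁2⟩ := smulOp_elim (hJ w₁)
  obtain ⟨p₂, hp₂A, hp₂1, hp₂2⟩ := smulOp_elim (hJ w₂)
  have hmono := hA p₁ hp₁A p₂ hp₂A
  have key : (0:ℝ) ≤ ⟪(w₁ - J w₁) - (w₂ - J w₂), J w₁ - J w₂⟫ := by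
    rw [← hp₁2, ← hp₂2, ← hp₁1, ← hp₂1, ← smul_sub, real_inner_smul_left]
    exact mul_nonneg (le_of_lt hμ) hmono
  have h1 : ⟪(w₁ - J w₁) - (w₂ - J w₂), J w₁ - J w₂⟫
      = ⟪w₁ - w₂, J w₁ - J w₂⟫ - ⟪J w₁ - J w₂, J w₁ - J w₂⟫ := by
    rw [← inner_sub_left]; congr 1; abel
  have h2 : ⟪J w₁ - J w₂, J w₁ - J w₂⟫ = ‖J w₁ - J w₂‖ ^ 2 := real_inner_self_eq_norm_sq _
  have h3 : ⟪w₁ - w₂, J w₁ - J w₂⟫ ≤ ‖w₁ - w₂‖ * ‖J w₁ - J w₂‖ := real_inner_le_norm _ _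
  nlinarith [norm_nonneg (J w₁ - J w₂), norm_nonneg (w₁ - w₂)]

lemma hasResolvent_scale [CompleteSpace H] {A : Set (H × H)} (hA : IsMonotoneOp A)
    {μ ν : ℝ} (hμ : 0 < μ) (hν : 0 < ν) (hlt : μ < 2 * ν)
    (h : HasResolvent μ A) : HasResolvent ν A := by
  haveI : Nonempty H := ⟨0⟩
  obtain ⟨J, hJ⟩ := h
  have hnonexp := resolvent_nonexpansive hA hμ hJ
  set t : ℝ := μ / ν with ht
  have ht0 : 0 < t := div_pos hμ hν
  have ht2 : t < 2 := by rw [ht, div_lt_iff₀ hν]; linarith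
  have habs : |1 - t| < 1 := by rw [abs_lt]; constructor <;> linarith
  have key : ∀ w : H, ∃ v : H, (v, w - v) ∈ smulOp ν A := by
    intro w
    set Φ : H → H := fun v => J (t • w + (1 - t) • v) with hΦ
    have hlip : LipschitzWith ⟨|1 - t|, abs_nonneg _⟩ Φ := by
      apply LipschitzWith.of_dist_le_mul
      intro v₁ v₂
      simp only [dist_eq_norm, hΦ]
      calc ‖J (t • w + (1 - t) • v₁) - J (t • w + (1 - t) • v₂)‖
          ≤ ‖(t • w + (1 - t) • v₁) - (t • w + (1 - t) • v₂)‖ := hnonexp _ _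
        _ = |1 - t| * ‖v₁ - v₂‖ := by
            rw [add_sub_add_left_eq_sub, ← smul_sub, norm_smul, Real.norm_eq_abs]
    have hcontr : ContractingWith ⟨|1 - t|, abs_nonneg _⟩ Φ := ⟨by exact_mod_cast habs, hlip⟩
    set v := hcontr.fixedPoint Φ with hv
    have hfix : Φ v = v := hcontr.fixedPoint_isFixedPt
    obtain ⟨p, hpA, hp1, hp2⟩ := smulOp_elim (hJ (t • w + (1 - t) • v))
    have hJv : J (t • w + (1 - t) • v) = v := hfix
    have hp1' : p.1 = v := by rw [hp1]; exact hJv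
    have hp2' : μ • p.2 = t • (w - v) := by
      rw [hp2, hJv, sub_smul, one_smul, smul_sub]
      abel
    have hνp2 : ν • p.2 = w - v := by
      have hμ0 : μ ≠ 0 := ne_of_gt hμ
      have hν0 : ν ≠ 0 := ne_of_gt hν
      have : p.2 = μ⁻¹ • t • (w - v) := by
        rw [← hp2', smul_smul, inv_mul_cancel₀ hμ0, one_smul]
      rw [this, smul_smul, smul_smul]
      have h1 : ν * μ⁻¹ * (μ / ν) = 1 := by field_simp
      rw [h1, one_smul]
    refine ⟨v, p, hpA, ?_⟩
    rw [Prod.mk.injEq]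
    exact ⟨hp1', hνp2⟩
  exact ⟨fun w => (key w).choose, fun w => (key w).choose_spec⟩

lemma hasResolvent_small [CompleteSpace H] {A : Set (H × H)} (hA : IsMonotoneOp A)
    {lam : ℝ} (hlam : 0 < lam) (h : HasResolvent lam A) {ε : ℝ} (hε : 0 < ε) :
    ∃ ν : ℝ, 0 < ν ∧ ν < ε ∧ HasResolvent ν A := by
  have hind : ∀ n : ℕ, HasResolvent (lam * (3/4) ^ n) A := by
    intro n
    induction n with
    | zero => simpa using h
    | succ n ih =>
        have hp : (0:ℝ) < (3/4:ℝ) ^ n := by positivity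
        refine hasResolvent_scale hA (by positivity) (by positivity) ?_ ih
        rw [pow_succ]
        nlinarith
  obtain ⟨n, hn⟩ := exists_pow_lt_of_lt_one (div_pos hε hlam) (by norm_num : (3/4:ℝ) < 1)
  refine ⟨lam * (3/4) ^ n, by positivity, ?_, hind n⟩
  rw [← lt_div_iff₀' hlam]
  exact hn

lemma inner_tendsto_zero_left {v c : ℕ → H} {C : ℝ}
    (hv : Tendsto v atTop (nhds 0)) (hc : ∀ j, ‖c j‖ ≤ C) :
    Tendsto (fun j => ⟪v j, c j⟫) atTop (nhds 0) := by
  have hg : Tendsto (fun j => ‖v j‖ * C) atTop (nhds 0) := by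
    have := hv.norm.mul_const C
    simpa using this
  apply squeeze_zero_norm _ hg
  intro j
  calc ‖⟪v j, c j⟫‖ = |⟪v j, c j⟫| := rfl
    _ ≤ ‖v j‖ * ‖c j‖ := abs_real_inner_le_norm _ _
    _ ≤ ‖v j‖ * C := mul_le_mul_of_nonneg_left (hc j) (norm_nonneg _)

lemma inner_tendsto_zero_right {v c : ℕ → H} {C : ℝ}
    (hv : Tendsto v atTop (nhds 0)) (hc : ∀ j, ‖c j‖ ≤ C) :
    Tendsto (fun j => ⟪c j, v j⟫) atTop (nhds 0) := by
  have := inner_tendsto_zero_left hv hc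
  exact this.congr (fun j => real_inner_comm _ _)

end Aux

set_option maxHeartbeats 2000000 in
/-- Identification of weak sequential cluster points of the shadow Douglas–Rachford
iteration: if `‖x_{k+1} − x_k‖ → 0` and, along a subsequence, `x_{k_j} ⇀ x` and
`z_{k_j} ⇀ z` weakly (where `z_k = x_k + λB(x_{k−1})`), then `−B(x) ∈ A(x)` and
`z = x + λB(x)`. -/
theorem statement11
    {H : Type*} [NormedAddCommGroup H] [InnerProductSpace ℝ H] [CompleteSpace H]
    (A : Set (H × H)) (hA : IsMaximalMonotoneOp A)
    (B : H → H) (hBmono : ∀ u v : H, (0 : ℝ) ≤ ⟪B u - B v, u - v⟫)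
    (L : ℝ) (hBlip : ∀ u v : H, ‖B u - B v‖ ≤ L * ‖u - v‖)
    (lam : ℝ) (hlam : 0 < lam)
    (J : H → H) (hJ : ∀ w : H, (J w, w - J w) ∈ smulOp lam A)
    (x : ℤ → H)
    (hrec : ∀ k : ℤ,
      x (k + 1) = J (x k - lam • B (x k)) - lam • (B (x k) - B (x (k - 1))))
    (hdiff : Tendsto (fun k : ℤ => ‖x (k + 1) - x k‖) atTop (nhds 0))
    (kj : ℕ → ℤ) (hkj : StrictMono kj)
    (xw zw : H)
    (hxw : ∀ w : H, Tendsto (fun j : ℕ => ⟪x (kj j), w⟫) atTop (nhds ⟪xw, w⟫))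
    (hzw : ∀ w : H, Tendsto (fun j : ℕ => ⟪x (kj j) + lam • B (x (kj j - 1)), w⟫)
      atTop (nhds ⟪zw, w⟫)) :
    (xw, -B xw) ∈ A ∧ zw = xw + lam • B xw := by
  haveI : Nonempty H := ⟨0⟩
  have hlam0 : lam ≠ 0 := ne_of_gt hlam
  set L' : ℝ := max L 1 with hL'
  have hL1 : (1:ℝ) ≤ L' := le_max_right _ _
  have hL'0 : (0:ℝ) < L' := lt_of_lt_of_le one_pos hL1
  have hBlip' : ∀ u v : H, ‖B u - B v‖ ≤ L' * ‖u - v‖ := fun u v =>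
    le_trans (hBlip u v) (mul_le_mul_of_nonneg_right (le_max_left _ _) (norm_nonneg _))
  -- index sequence tends to infinity
  have hκle : ∀ j : ℕ, kj 0 + j ≤ kj j := by
    intro j
    induction j with
    | zero => simp
    | succ j ih =>
        have h1 : kj j < kj (j + 1) := hkj (Nat.lt_succ_self j)
        push_cast
        push_cast at ih
        omega
  have hκ : Tendsto kj atTop atTop := by
    apply tendsto_atTop_mono hκle
    exact tendsto_atTop_add_const_left _ _ tendsto_natCast_atTop_atTop
  -- strong null sequences
  have hD : Tendsto (fun j => x (kj j + 1) - x (kj j)) atTop (nhds 0) := by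
    rw [tendsto_zero_iff_norm_tendsto_zero]
    exact hdiff.comp hκ
  have hκ1 : Tendsto (fun j => kj j - 1) atTop atTop := by
    simp only [sub_eq_add_neg]
    exact tendsto_atTop_add_const_right _ _ hκ
  have hD' : Tendsto (fun j => x (kj j) - x (kj j - 1)) atTop (nhds 0) := by
    rw [tendsto_zero_iff_norm_tendsto_zero]
    have h1 := hdiff.comp hκ1
    simp only [Function.comp_def, sub_add_cancel] at h1
    exact h1
  have hE : Tendsto (fun j => B (x (kj j)) - B (x (kj j - 1))) atTop (nhds 0) := by
    rw [tendsto_zero_iff_norm_tendsto_zero]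
    have hg : Tendsto (fun j => L' * ‖x (kj j) - x (kj j - 1)‖) atTop (nhds 0) := by
      have := (tendsto_zero_iff_norm_tendsto_zero.mp hD').const_mul L'
      simpa using this
    exact squeeze_zero (fun j => norm_nonneg _) (fun j => hBlip' _ _) hg
  -- the resolvent outputs and the corresponding operator pairs
  obtain ⟨Y, U, hYU, hYx, hUB⟩ :
      ∃ Y U : ℕ → H, (∀ j, (Y j, U j) ∈ A) ∧
        (∀ j, Y j - x (kj j)
          = (x (kj j + 1) - x (kj j)) + lam • (B (x (kj j)) - B (x (kj j - 1)))) ∧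
        (∀ j, U j + B (x (kj j)) = (-lam⁻¹) • (Y j - x (kj j))) := by
    refine ⟨fun j => J (x (kj j) - lam • B (x (kj j))),
      fun j => lam⁻¹ • (x (kj j) - J (x (kj j) - lam • B (x (kj j)))) - B (x (kj j)),
      ?_, ?_, ?_⟩
    · intro j
      obtain ⟨p, hpA, hp1, hp2⟩ := smulOp_elim (hJ (x (kj j) - lam • B (x (kj j))))
      have hp2' : p.2
          = lam⁻¹ • (x (kj j) - J (x (kj j) - lam • B (x (kj j)))) - B (x (kj j)) := by
        have h1 : p.2 = lam⁻¹ • (lam • p.2) := by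
          rw [smul_smul, inv_mul_cancel₀ hlam0, one_smul]
        rw [h1, hp2]
        match_scalars <;> field_simp
      beta_reduce
      rw [← hp2', ← hp1]
      exact hpA
    · intro j
      have h := hrec (kj j)
      rw [h]
      abel
    · intro j
      module
  have hS : Tendsto (fun j => Y j - x (kj j)) atTop (nhds 0) := by
    have h1 := hD.add (hE.const_smul lam)
    simp only [smul_zero, add_zero] at h1
    exact h1.congr (fun j => (hYx j).symm)
  have hr : Tendsto (fun j => U j + B (x (kj j))) atTop (nhds 0) := by
    have h1 := hS.const_smul (-lam⁻¹)
    simp only [smul_zero] at h1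
    exact h1.congr (fun j => (hUB j).symm)
  -- boundedness
  have hMx : ∃ M : ℝ, ∀ j, ‖x (kj j)‖ ≤ M := by
    have hpt : ∀ w : H, ∃ C : ℝ, ∀ j : ℕ, ‖(innerSL ℝ (x (kj j))) w‖ ≤ C := by
      intro w
      obtain ⟨C, hC⟩ := ((hxw w).abs).bddAbove_range
      refine ⟨C, fun j => ?_⟩
      have := hC (Set.mem_range_self j)
      simpa [Real.norm_eq_abs] using this
    obtain ⟨C', hC'⟩ := banach_steinhaus hpt
    exact ⟨C', fun j => by simpa [innerSL_apply_norm] using hC' j⟩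
  obtain ⟨M, hM⟩ := hMx
  obtain ⟨C, hC⟩ := hS.norm.bddAbove_range
  have hCb : ∀ j, ‖Y j - x (kj j)‖ ≤ C := fun j => hC (Set.mem_range_self j)
  -- weak limits
  have hYw' : ∀ w : H, Tendsto (fun j => ⟪w, Y j⟫) atTop (nhds ⟪w, xw⟫) := by
    intro w
    have h1 : Tendsto (fun j => ⟪w, Y j - x (kj j)⟫) atTop (nhds 0) := by
      have h0 : Tendsto (fun _ : ℕ => w) atTop (nhds w) := tendsto_const_nhds
      have := Filter.Tendsto.inner (𝕜 := ℝ) h0 hS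
      simpa using this
    have h2 : Tendsto (fun j => ⟪w, x (kj j)⟫) atTop (nhds ⟪w, xw⟫) := by
      have h := hxw w
      rw [real_inner_comm w xw] at h
      exact h.congr (fun j => real_inner_comm w _)
    have h3 := h2.add h1
    rw [add_zero] at h3
    apply h3.congr
    intro j
    rw [← inner_add_right]
    congr 1
    abel
  have hxw0 : ∀ w : H, Tendsto (fun j => ⟪w, x (kj j) - xw⟫) atTop (nhds 0) := by
    intro w
    have h1 := (hxw w).sub_const ⟪xw, w⟫
    rw [sub_self] at h1
    apply h1.congr
    intro j
    rw [inner_sub_right, real_inner_comm w (x (kj j)), real_inner_comm w xw]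
  set b : H := lam⁻¹ • (zw - xw) with hbdef
  have hB1 : ∀ w : H, Tendsto (fun j => ⟪B (x (kj j - 1)), w⟫) atTop (nhds ⟪b, w⟫) := by
    intro w
    have h1 := (hzw w).sub (hxw w)
    have h2 : Tendsto (fun j => lam * ⟪B (x (kj j - 1)), w⟫) atTop
        (nhds (⟪zw, w⟫ - ⟪xw, w⟫)) := by
      apply h1.congr
      intro j
      rw [inner_add_left, real_inner_smul_left]
      ring
    have h3 := h2.const_mul lam⁻¹
    have h4 : lam⁻¹ * (⟪zw, w⟫ - ⟪xw, w⟫) = ⟪b, w⟫ := by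
      rw [hbdef, real_inner_smul_left, inner_sub_left]
    rw [h4] at h3
    apply h3.congr
    intro j
    rw [← mul_assoc, inv_mul_cancel₀ hlam0, one_mul]
  have hB2 : ∀ w : H, Tendsto (fun j => ⟪B (x (kj j)), w⟫) atTop (nhds ⟪b, w⟫) := by
    intro w
    have h1 : Tendsto (fun j => ⟪B (x (kj j)) - B (x (kj j - 1)), w⟫) atTop (nhds 0) := by
      have h0 : Tendsto (fun _ : ℕ => w) atTop (nhds w) := tendsto_const_nhds
      have := Filter.Tendsto.inner (𝕜 := ℝ) hE h0
      simpa using this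
    have h2 := (hB1 w).add h1
    rw [add_zero] at h2
    apply h2.congr
    intro j
    rw [← inner_add_left]
    congr 1
    abel
  -- the key variational inequality
  have hP : ∀ p : H × H, p ∈ A → (0:ℝ) ≤ ⟪-(p.2 + B p.1), xw - p.1⟫ := by
    intro p hp
    have hg : ∀ j, (0:ℝ) ≤ ⟪U j - p.2, Y j - p.1⟫ := fun j =>
      hA.1 (Y j, U j) (hYU j) p hp
    have hgh : ∀ j, ⟪U j - p.2, Y j - p.1⟫ ≤
        ⟪-(p.2 + B p.1), Y j - p.1⟫ + ⟪U j + B (x (kj j)), Y j - p.1⟫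
          + ⟪B p.1 - B (x (kj j)), Y j - x (kj j)⟫ := by
      intro j
      have hmB := hBmono (x (kj j)) p.1
      have expand : ⟪U j - p.2, Y j - p.1⟫ =
          ⟪-(p.2 + B p.1), Y j - p.1⟫ + ⟪U j + B (x (kj j)), Y j - p.1⟫
            + ⟪B p.1 - B (x (kj j)), Y j - x (kj j)⟫
            - ⟪B (x (kj j)) - B p.1, x (kj j) - p.1⟫ := by
        simp only [inner_sub_left, inner_add_left, inner_neg_left, inner_sub_right]
        ring
      rw [expand]
      linarith
    have hYb : ∀ j, ‖Y j - p.1‖ ≤ C + (M + ‖p.1‖) := by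
      intro j
      calc ‖Y j - p.1‖ = ‖(Y j - x (kj j)) + (x (kj j) - p.1)‖ := by congr 1; abel
        _ ≤ ‖Y j - x (kj j)‖ + ‖x (kj j) - p.1‖ := norm_add_le _ _
        _ ≤ C + (‖x (kj j)‖ + ‖p.1‖) := add_le_add (hCb j) (norm_sub_le _ _)
        _ ≤ C + (M + ‖p.1‖) := by
            have := hM j
            linarith
    have t1 : Tendsto (fun j => ⟪-(p.2 + B p.1), Y j - p.1⟫) atTop
        (nhds ⟪-(p.2 + B p.1), xw - p.1⟫) := by
      simp only [inner_sub_right]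
      exact (hYw' _).sub_const _
    have t2 : Tendsto (fun j => ⟪U j + B (x (kj j)), Y j - p.1⟫) atTop (nhds 0) :=
      inner_tendsto_zero_left hr hYb
    have t3 : Tendsto (fun j => ⟪B p.1 - B (x (kj j)), Y j - x (kj j)⟫) atTop (nhds 0) := by
      apply inner_tendsto_zero_right hS (C := L' * (‖p.1‖ + M))
      intro j
      calc ‖B p.1 - B (x (kj j))‖ ≤ L' * ‖p.1 - x (kj j)‖ := hBlip' _ _
        _ ≤ L' * (‖p.1‖ + M) := by
            have h1 : ‖p.1 - x (kj j)‖ ≤ ‖p.1‖ + ‖x (kj j)‖ := norm_sub_le _ _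
            have h2 := hM j
            nlinarith
    have hh := (t1.add t2).add t3
    rw [add_zero, add_zero] at hh
    exact ge_of_tendsto hh (Eventually.of_forall (fun j => le_trans (hg j) (hgh j)))
  -- Minty argument: construct a zero of x ↦ xw - x - ν(A+B)x via contraction
  obtain ⟨ν, hν0, hνinv, Jν, hJν⟩ :=
    hasResolvent_small hA.1 hlam ⟨J, hJ⟩ (show (0:ℝ) < L'⁻¹ by positivity)
  have hνL1 : ν * L' < 1 := by
    have := mul_lt_mul_of_pos_right hνinv hL'0
    rwa [inv_mul_cancel₀ (ne_of_gt hL'0)] at this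
  have hνne : ν ≠ 0 := ne_of_gt hν0
  set T : H → H := fun v => Jν (xw - ν • B v) with hT
  have hTlip : LipschitzWith ⟨ν * L', by positivity⟩ T := by
    apply LipschitzWith.of_dist_le_mul
    intro v₁ v₂
    simp only [dist_eq_norm, hT]
    calc ‖Jν (xw - ν • B v₁) - Jν (xw - ν • B v₂)‖
        ≤ ‖(xw - ν • B v₁) - (xw - ν • B v₂)‖ := resolvent_nonexpansive hA.1 hν0 hJν _ _
      _ = ν * ‖B v₂ - B v₁‖ := by
          rw [show (xw - ν • B v₁) - (xw - ν • B v₂) = ν • (B v₂ - B v₁) by module]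
          rw [norm_smul, Real.norm_eq_abs, abs_of_pos hν0]
      _ ≤ ν * (L' * ‖v₂ - v₁‖) := by
          exact mul_le_mul_of_nonneg_left (hBlip' _ _) (le_of_lt hν0)
      _ = (ν * L') * ‖v₁ - v₂‖ := by rw [norm_sub_rev]; ring
  have hTcon : ContractingWith ⟨ν * L', by positivity⟩ T := ⟨by exact_mod_cast hνL1, hTlip⟩
  set v := hTcon.fixedPoint T with hv
  have hfix : T v = v := hTcon.fixedPoint_isFixedPt
  have hJvv : Jν (xw - ν • B v) = v := hfix
  obtain ⟨p, hpA, hp1, hp2⟩ := smulOp_elim (hJν (xw - ν • B v))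
  have hp1' : p.1 = v := by rw [hp1]; exact hJvv
  have hp2' : ν • p.2 = xw - ν • B v - v := by rw [hp2, hJvv]
  have hp2'' : p.2 + B v = ν⁻¹ • (xw - v) := by
    have h1 : p.2 = ν⁻¹ • (xw - ν • B v - v) := by
      rw [← hp2', smul_smul, inv_mul_cancel₀ hνne, one_smul]
    rw [h1]
    match_scalars <;> field_simp <;> ring
  have h0 := hP p hpA
  rw [hp1', hp2''] at h0
  rw [inner_neg_left, real_inner_smul_left, real_inner_self_eq_norm_sq] at h0
  have hxv : xw = v := by
    have hinv : (0:ℝ) < ν⁻¹ := by positivity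
    have h2 : ‖xw - v‖ ^ 2 ≤ 0 := by nlinarith
    have h3 : ‖xw - v‖ = 0 := by nlinarith [norm_nonneg (xw - v), sq_nonneg ‖xw - v‖]
    have h4 : xw - v = 0 := norm_eq_zero.mp h3
    exact sub_eq_zero.mp h4
  have hmem : (xw, -B xw) ∈ A := by
    have hps : p.2 = -B xw := by
      have h5 := hp2''
      rw [← hxv, sub_self, smul_zero] at h5
      have : p.2 = -B xw := by
        have := h5
        rw [add_eq_zero_iff_eq_neg] at this
        exact this
      exact this
    have hpx : p.1 = xw := by rw [hp1', ← hxv]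
    have hpair : p = (xw, -B xw) := by
      rw [← hps, ← hpx]
    rwa [hpair] at hpA
  refine ⟨hmem, ?_⟩
  -- second part: identify the weak limit of B x_{k-1}
  have hc0 : Tendsto (fun j => ⟪B (x (kj j)) - B xw, x (kj j) - xw⟫) atTop (nhds 0) := by
    have hYb : ∀ j, ‖Y j - xw‖ ≤ C + (M + ‖xw‖) := by
      intro j
      calc ‖Y j - xw‖ = ‖(Y j - x (kj j)) + (x (kj j) - xw)‖ := by congr 1; abel
        _ ≤ ‖Y j - x (kj j)‖ + ‖x (kj j) - xw‖ := norm_add_le _ _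
        _ ≤ C + (‖x (kj j)‖ + ‖xw‖) := add_le_add (hCb j) (norm_sub_le _ _)
        _ ≤ C + (M + ‖xw‖) := by
            have := hM j
            linarith
    have hmono2 : ∀ j, ⟪B (x (kj j)) - B xw, x (kj j) - xw⟫ ≤
        ⟪U j + B (x (kj j)), Y j - xw⟫ + ⟪B xw - B (x (kj j)), Y j - x (kj j)⟫ := by
      intro j
      have hAm2 : (0:ℝ) ≤ ⟪U j - -B xw, Y j - xw⟫ :=
        hA.1 (Y j, U j) (hYU j) (xw, -B xw) hmem
      have expand : ⟪U j - -B xw, Y j - xw⟫ =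
          ⟪U j + B (x (kj j)), Y j - xw⟫ + ⟪B xw - B (x (kj j)), Y j - x (kj j)⟫
            - ⟪B (x (kj j)) - B xw, x (kj j) - xw⟫ := by
        simp only [inner_sub_left, inner_add_left, inner_neg_left, inner_sub_right,
          sub_neg_eq_add]
        ring
      rw [expand] at hAm2
      linarith
    have t2 : Tendsto (fun j => ⟪U j + B (x (kj j)), Y j - xw⟫) atTop (nhds 0) :=
      inner_tendsto_zero_left hr hYb
    have t3 : Tendsto (fun j => ⟪B xw - B (x (kj j)), Y j - x (kj j)⟫) atTop (nhds 0) := by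
      apply inner_tendsto_zero_right hS (C := L' * (‖xw‖ + M))
      intro j
      calc ‖B xw - B (x (kj j))‖ ≤ L' * ‖xw - x (kj j)‖ := hBlip' _ _
        _ ≤ L' * (‖xw‖ + M) := by
            have h1 : ‖xw - x (kj j)‖ ≤ ‖xw‖ + ‖x (kj j)‖ := norm_sub_le _ _
            have h2 := hM j
            nlinarith
    have hg := t2.add t3
    rw [add_zero] at hg
    exact squeeze_zero (fun j => hBmono _ _) hmono2 hg
  have hkey : ∀ h : H, ⟪b - B xw, h⟫ ≤ 0 := by
    intro h
    have hstep : ∀ t : ℝ, 0 < t → ⟪b - B xw, h⟫ ≤ L' * ‖h‖ ^ 2 * t := by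
      intro t ht
      set vt : H := xw + t • h with hvt
      have hseq : ∀ j, t * ⟪B (x (kj j)) - B vt, h⟫ ≤
          ⟪B (x (kj j)) - B xw, x (kj j) - xw⟫ + ⟪B xw - B vt, x (kj j) - xw⟫ := by
        intro j
        have h1 := hBmono (x (kj j)) vt
        have expand : ⟪B (x (kj j)) - B vt, x (kj j) - vt⟫ =
            ⟪B (x (kj j)) - B xw, x (kj j) - xw⟫ + ⟪B xw - B vt, x (kj j) - xw⟫
              - t * ⟪B (x (kj j)) - B vt, h⟫ := by
          rw [hvt]
          simp only [inner_sub_left, inner_sub_right, inner_add_right, real_inner_smul_right]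
          ring
        rw [expand] at h1
        linarith
      have hL1' : Tendsto (fun j => t * ⟪B (x (kj j)) - B vt, h⟫) atTop
          (nhds (t * ⟪b - B vt, h⟫)) := by
        have h1 := ((hB2 h).sub_const ⟪B vt, h⟫).const_mul t
        have h2 : t * (⟪b, h⟫ - ⟪B vt, h⟫) = t * ⟪b - B vt, h⟫ := by
          rw [inner_sub_left]
        rw [h2] at h1
        apply h1.congr
        intro j
        rw [inner_sub_left]
      have hR : Tendsto (fun j => ⟪B (x (kj j)) - B xw, x (kj j) - xw⟫
          + ⟪B xw - B vt, x (kj j) - xw⟫) atTop (nhds 0) := by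
        have h2 := hc0.add (hxw0 (B xw - B vt))
        rw [add_zero] at h2
        exact h2
      have hfin : t * ⟪b - B vt, h⟫ ≤ 0 := le_of_tendsto_of_tendsto' hL1' hR hseq
      have h4 : ⟪b - B vt, h⟫ ≤ 0 := by nlinarith
      have h5 : ⟪b - B xw, h⟫ = ⟪b - B vt, h⟫ + ⟪B vt - B xw, h⟫ := by
        rw [← inner_add_left]
        congr 1
        abel
      have h6 : ⟪B vt - B xw, h⟫ ≤ L' * ‖h‖ ^ 2 * t := by
        calc ⟪B vt - B xw, h⟫ ≤ ‖B vt - B xw‖ * ‖h‖ := real_inner_le_norm _ _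
          _ ≤ (L' * ‖vt - xw‖) * ‖h‖ :=
              mul_le_mul_of_nonneg_right (hBlip' _ _) (norm_nonneg _)
          _ = L' * ‖h‖ ^ 2 * t := by
              rw [hvt, add_sub_cancel_left, norm_smul, Real.norm_eq_abs, abs_of_pos ht]
              ring
      linarith
    by_contra hcon
    push_neg at hcon
    set K : ℝ := L' * ‖h‖ ^ 2 with hK
    have hK0 : 0 ≤ K := by positivity
    rcases eq_or_lt_of_le hK0 with hKeq | hKpos
    · have := hstep 1 one_pos
      rw [← hKeq, zero_mul] at this
      linarith
    · have ht0 : 0 < ⟪b - B xw, h⟫ / (2 * K) := by positivity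
      have hKne : K ≠ 0 := ne_of_gt hKpos
      have := hstep _ ht0
      rw [show K * (⟪b - B xw, h⟫ / (2 * K)) = ⟪b - B xw, h⟫ / 2 by
        field_simp] at this
      linarith
  have hbB : b = B xw := by
    have h1 := hkey (b - B xw)
    rw [real_inner_self_eq_norm_sq] at h1
    have h3 : ‖b - B xw‖ = 0 := by nlinarith [norm_nonneg (b - B xw)]
    have h4 : b - B xw = 0 := norm_eq_zero.mp h3
    exact sub_eq_zero.mp h4
  have h7 : lam • b = zw - xw := by
    rw [hbdef, smul_smul, mul_inv_cancel₀ hlam0, one_smul]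
  rw [← hbB, h7]
  abel
end

section
/- Let H₁ and H₂ be real Hilbert spaces and K : H₁ → H₂ a bounded linear operator with adjoint K* and operator norm ‖K‖. Let τ, σ > 0 satisfy τσ‖K‖² < 1. Let A₁ be a maximally monotone set-valued operator on H₁ with J₁ the resolvent of τA₁, and A₂ a maximally monotone set-valued operator on H₂ with J₂ the resolvent of σA₂. Suppose (u, v) ∈ H₁ × H₂ satisfies −K*v ∈ A₁(u) and Ku ∈ A₂(v). Let u_0 ∈ H₁, v_0 ∈ H₂ and define, for k ≥ 0 (with u_{-1} := u_0 allowed by taking the scheme from k = 1, or any fixed u_{-1}): u_{k+1} = J₁(u_k − τK*v_k) and v_{k+1} = J₂(v_k + σK u_{k+1}) + σ(K u_{k+1} − K u_k). Then for every k: (1/τ)‖u_{k+1} − u‖² + (1/σ)‖(v_{k+1} − σK u_{k+1}) − (v − σK u)‖² ≤ (1/τ)‖u_k − u‖² + (1/σ)‖(v_k − σK u_k) − (v − σK u)‖². -/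
/-!
Both updates are resolvent steps, so monotonicity of `τA₁` and `σA₂`, tested at the new
iterates against the saddle point, gives two inner-product inequalities. The key observation is
`v_{k+1} - σKu_{k+1} = ṽ - σKu_k` with `ṽ = J₂(v_k + σKu_{k+1})`, so the dual part of the
Lyapunov function only involves the resolvent output `ṽ`. Expanding the squared norms, the two inequalities
cancel every cross term except `-2⟪K(u_k - u_{k+1}), v_k - ṽ⟫`, and Young's inequality bounds this
by `‖u_k - u_{k+1}‖²/τ + ‖v_k - ṽ‖²/σ` because `τσ‖K‖² ≤ 1`.
-/

open scoped RealInnerProductSpace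
open Filter

theorem IsMonotoneOp.smulOp {H : Type*} [NormedAddCommGroup H] [InnerProductSpace ℝ H]
    {A : Set (H × H)} (hA : IsMonotoneOp A) {c : ℝ} (hc : 0 ≤ c) :
    IsMonotoneOp (smulOp c A) := by
  rintro _ ⟨p, hp, rfl⟩ _ ⟨q, hq, rfl⟩
  simpa only [← smul_sub, real_inner_smul_left] using mul_nonneg hc (hA p hp q hq)

section PrimalDual

variable {H₁ H₂ : Type*} [NormedAddCommGroup H₁] [InnerProductSpace ℝ H₁]
  [NormedAddCommGroup H₂] [InnerProductSpace ℝ H₂]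

theorem two_mul_inner_le_of_mul_opNorm_sq_le (K : H₁ →L[ℝ] H₂) {τ σ : ℝ} (hτ : 0 < τ)
    (hσ : 0 < σ) (hK : τ * σ * ‖K‖ ^ 2 ≤ 1) (x : H₁) (y : H₂) :
    2 * ⟪K x, y⟫ ≤ τ⁻¹ * ‖x‖ ^ 2 + σ⁻¹ * ‖y‖ ^ 2 := by
  have hinner : ⟪K x, y⟫ ≤ ‖K‖ * ‖x‖ * ‖y‖ :=
    (real_inner_le_norm _ _).trans (mul_le_mul_of_nonneg_right (K.le_opNorm x) (norm_nonneg y))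
  have hyoung : 2 * τ * σ * (‖K‖ * ‖x‖ * ‖y‖) ≤ σ * ‖x‖ ^ 2 + τ * ‖y‖ ^ 2 := by
    nlinarith [sq_nonneg (σ * ‖x‖ - τ * σ * ‖K‖ * ‖y‖),
      mul_nonneg (mul_nonneg hτ.le hσ.le) (mul_nonneg (sub_nonneg.2 hK) (sq_nonneg ‖y‖))]
  rw [← mul_le_mul_iff_of_pos_left (mul_pos hτ hσ)]
  calc τ * σ * (2 * ⟪K x, y⟫) ≤ 2 * τ * σ * (‖K‖ * ‖x‖ * ‖y‖) := by
        nlinarith [mul_le_mul_of_nonneg_left hinner (mul_pos hτ hσ).le]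
    _ ≤ σ * ‖x‖ ^ 2 + τ * ‖y‖ ^ 2 := hyoung
    _ = τ * σ * (τ⁻¹ * ‖x‖ ^ 2 + σ⁻¹ * ‖y‖ ^ 2) := by field_simp

variable [CompleteSpace H₁] [CompleteSpace H₂]

theorem primalDual_energy_le_of_inner (K : H₁ →L[ℝ] H₂) {τ σ : ℝ} (hτ : 0 < τ)
    (hσ : 0 < σ) (hK : τ * σ * ‖K‖ ^ 2 ≤ 1) {x x' : H₁} {y y' : H₂}
    (h₁ : 0 ≤ ⟪x - x' - τ • ContinuousLinearMap.adjoint K y, x'⟫)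
    (h₂ : 0 ≤ ⟪y - y' + σ • K x', y'⟫) :
    1 / τ * ‖x'‖ ^ 2 + 1 / σ * ‖y' - σ • K x‖ ^ 2 ≤
      1 / τ * ‖x‖ ^ 2 + 1 / σ * ‖y - σ • K x‖ ^ 2 := by
  have hx : ‖x‖ ^ 2 = ‖x - x'‖ ^ 2 + 2 * ⟪x - x', x'⟫ + ‖x'‖ ^ 2 := by
    rw [← norm_add_sq_real, sub_add_cancel]
  have hy : ‖y - σ • K x‖ ^ 2
      = ‖y - y'‖ ^ 2 + 2 * ⟪y - y', y' - σ • K x⟫ + ‖y' - σ • K x‖ ^ 2 := by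
    rw [← norm_add_sq_real, sub_add_sub_cancel]
  have hcross := two_mul_inner_le_of_mul_opNorm_sq_le K hτ hσ hK (x - x') (y - y')
  rw [hx, hy]
  simp only [inner_sub_left, inner_add_left, real_inner_smul_left,
    ContinuousLinearMap.adjoint_inner_left] at h₁ h₂
  simp only [map_sub, inner_sub_left, inner_sub_right, real_inner_smul_right] at hcross ⊢
  rw [real_inner_comm (K x') y, real_inner_comm (K x) y, real_inner_comm (K x) y'] at *
  linear_combination 2 * τ⁻¹ * h₁ + 2 * σ⁻¹ * h₂ + hcross
    + 2 * (⟪K x, y⟫ - ⟪K x, y'⟫) * inv_mul_cancel₀ hσ.ne'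
    - 2 * ⟪K x', y⟫ * inv_mul_cancel₀ hτ.ne' + 2 * ⟪K x', y'⟫ * inv_mul_cancel₀ hσ.ne'

theorem primalDual_energy_le (K : H₁ →L[ℝ] H₂) {τ σ : ℝ} (hτ : 0 < τ) (hσ : 0 < σ)
    (hK : τ * σ * ‖K‖ ^ 2 ≤ 1) {u x x' : H₁} {v y y' : H₂}
    (h₁ : 0 ≤ ⟪x - τ • ContinuousLinearMap.adjoint K y - x'
      - τ • -ContinuousLinearMap.adjoint K v, x' - u⟫)
    (h₂ : 0 ≤ ⟪y + σ • K x' - y' - σ • K u, y' - v⟫) :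
    1 / τ * ‖x' - u‖ ^ 2 + 1 / σ * ‖(y' - σ • K x) - (v - σ • K u)‖ ^ 2 ≤
      1 / τ * ‖x - u‖ ^ 2 + 1 / σ * ‖(y - σ • K x) - (v - σ • K u)‖ ^ 2 := by
  have hcenter (z : H₂) : (z - σ • K x) - (v - σ • K u) = (z - v) - σ • K (x - u) := by
    rw [map_sub]; module
  rw [hcenter, hcenter]
  refine primalDual_energy_le_of_inner K hτ hσ hK ?_ ?_
  · convert h₁ using 2
    rw [map_sub]; module
  · convert h₂ using 2
    rw [map_sub]; module

end PrimalDual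

/-- Inequality (37) of the paper: the Lyapunov decrease for the new primal-dual
algorithm `u_{k+1} = J₁(u_k − τK*v_k)`,
`v_{k+1} = J₂(v_k + σKu_{k+1}) + σ(Ku_{k+1} − Ku_k)`. -/
theorem statement12
    {H₁ : Type*} [NormedAddCommGroup H₁] [InnerProductSpace ℝ H₁] [CompleteSpace H₁]
    {H₂ : Type*} [NormedAddCommGroup H₂] [InnerProductSpace ℝ H₂] [CompleteSpace H₂]
    (K : H₁ →L[ℝ] H₂)
    (τ σ : ℝ) (hτ : 0 < τ) (hσ : 0 < σ) (hK : τ * σ * ‖K‖ ^ 2 < 1)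
    (A₁ : Set (H₁ × H₁)) (hA₁ : IsMaximalMonotoneOp A₁)
    (A₂ : Set (H₂ × H₂)) (hA₂ : IsMaximalMonotoneOp A₂)
    (J₁ : H₁ → H₁) (hJ₁ : ∀ w : H₁, (J₁ w, w - J₁ w) ∈ smulOp τ A₁)
    (J₂ : H₂ → H₂) (hJ₂ : ∀ w : H₂, (J₂ w, w - J₂ w) ∈ smulOp σ A₂)
    (u : H₁) (v : H₂)
    (hu : (u, -(ContinuousLinearMap.adjoint K v)) ∈ A₁)
    (hv : (v, K u) ∈ A₂)
    (us : ℕ → H₁) (vs : ℕ → H₂)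
    (hrecu : ∀ k : ℕ,
      us (k + 1) = J₁ (us k - τ • (ContinuousLinearMap.adjoint K (vs k))))
    (hrecv : ∀ k : ℕ,
      vs (k + 1) = J₂ (vs k + σ • K (us (k + 1))) + σ • (K (us (k + 1)) - K (us k)))
    (k : ℕ) :
    (1 / τ) * ‖us (k + 1) - u‖ ^ 2
        + (1 / σ) * ‖(vs (k + 1) - σ • K (us (k + 1))) - (v - σ • K u)‖ ^ 2 ≤
      (1 / τ) * ‖us k - u‖ ^ 2
        + (1 / σ) * ‖(vs k - σ • K (us k)) - (v - σ • K u)‖ ^ 2 := by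
  have h₁ := hA₁.1.smulOp hτ.le _ (hJ₁ (us k - τ • ContinuousLinearMap.adjoint K (vs k))) _
    (Set.mem_image_of_mem _ hu)
  rw [← hrecu k] at h₁
  have h₂ := hA₂.1.smulOp hσ.le _ (hJ₂ (vs k + σ • K (us (k + 1)))) _
    (Set.mem_image_of_mem _ hv)
  have hdual : vs (k + 1) - σ • K (us (k + 1))
      = J₂ (vs k + σ • K (us (k + 1))) - σ • K (us k) := by
    rw [hrecv k]; module
  rw [hdual]
  exact primalDual_energy_le K hτ hσ hK.le h₁ h₂
end
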